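/- arXiv:2508.13243 — 5 statements merged into one kernel-verified Lean document; each statement's English description precedes it below -/
import Mathlib

section
/- There exists C > 0 such that for all (x,ω) ∈ ℝⁿ × S^{n-1} and all 0 < τ < 1, the ball B_τ(x,ω) in the quasi-metric ρ((x,ω),(y,ν)) = (|ω·(x-y)| + |x-y|² + |ω-ν|²)^{1/2} satisfies C⁻¹ τ^{2n} ≤ |B_τ(x,ω)| ≤ C τ^{2n}, where |·| denotes the measure dx dω (Lebesgue measure times normalized surface measure). -/
open MeasureTheory Metric Set
open scoped ENNReal NNReal FourierTransform Pointwise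

noncomputable section

abbrev En (n : ℕ) := EuclideanSpace ℝ (Fin n)
abbrev Sph (n : ℕ) := Metric.sphere (0 : En n) 1
abbrev CoSph (n : ℕ) := En n × Sph n

/-- The quasi-metric ρ((x,ω),(y,ν)) = (|ω·(x−y)| + |x−y|² + |ω−ν|²)^{1/2}. -/
def rho {n : ℕ} (a b : CoSph n) : ℝ :=
  Real.sqrt (abs (inner (𝕜 := ℝ) ((a.2 : En n)) (a.1 - b.1)) + ‖a.1 - b.1‖ ^ 2 +
    ‖(a.2 : En n) - (b.2 : En n)‖ ^ 2)

/-- The normalized surface measure on the unit sphere. -/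
def sphMeasure (n : ℕ) : Measure (Sph n) :=
  ((volume : Measure (En n)).toSphere Set.univ)⁻¹ • (volume : Measure (En n)).toSphere

/-- The measure dx dω on the cosphere bundle S* = ℝⁿ × S^{n-1}. -/
def muS (n : ℕ) : Measure (CoSph n) := (volume : Measure (En n)).prod (sphMeasure n)

/-- Ball in the quasi-metric ρ. -/
def rball {n : ℕ} (a : CoSph n) (τ : ℝ) : Set (CoSph n) := {b | rho a b < τ}

variable {n : ℕ}

/-- axis-aligned "rectangle" adapted to coordinate 0. -/
def rect (n : ℕ) [NeZero n] (A B : ℝ) : Set (En n) :=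
  {y | |y 0| < A ∧ ∀ i : Fin n, i ≠ 0 → |y i| < B}

lemma rect_eq_preimage [NeZero n] (A B : ℝ) :
    rect n A B = (MeasurableEquiv.toLp 2 (Fin n → ℝ)).symm ⁻¹'
      (Set.univ.pi fun i : Fin n => if i = 0 then Set.Ioo (-A) A else Set.Ioo (-B) B) := by
  ext y
  simp only [rect, Set.mem_preimage, Set.mem_pi, Set.mem_univ, forall_true_left,
    Set.mem_setOf_eq, MeasurableEquiv.coe_toLp_symm]
  constructor
  · rintro ⟨h0, hi⟩ i
    by_cases h : i = 0
    · subst h; simpa [Set.mem_Ioo, ← abs_lt] using h0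
    · simpa [h, Set.mem_Ioo, ← abs_lt] using hi i h
  · intro h
    refine ⟨?_, fun i hi => ?_⟩
    · have := h 0; simpa [← abs_lt] using this
    · have := h i; simp only [hi, if_false, Set.mem_Ioo] at this; exact abs_lt.2 this

lemma measurableSet_pi_rect [NeZero n] (A B : ℝ) :
    MeasurableSet (Set.univ.pi fun i : Fin n => if i = 0 then Set.Ioo (-A) A else Set.Ioo (-B) B) :=
  MeasurableSet.univ_pi fun i => by split <;> exact measurableSet_Ioo

lemma measurableSet_rect [NeZero n] (A B : ℝ) : MeasurableSet (rect n A B) := by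
  rw [rect_eq_preimage]
  exact (MeasurableEquiv.toLp 2 (Fin n → ℝ)).symm.measurable (measurableSet_pi_rect A B)

lemma volume_rect [NeZero n] (A B : ℝ) :
    volume (rect n A B) = ENNReal.ofReal (2*A) * ENNReal.ofReal (2*B) ^ (n-1) := by
  rw [rect_eq_preimage, (EuclideanSpace.volume_preserving_symm_measurableEquiv_toLp (Fin n)).measure_preimage
      (measurableSet_pi_rect A B).nullMeasurableSet, volume_pi_pi]
  have : ∀ i : Fin n, volume (if i = 0 then Set.Ioo (-A) A else Set.Ioo (-B) B) =
      if i = 0 then ENNReal.ofReal (2*A) else ENNReal.ofReal (2*B) := by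
    intro i; split <;> simp [Real.volume_Ioo, two_mul]
  rw [Finset.prod_congr rfl fun i _ => this i]
  rw [← Finset.mul_prod_erase Finset.univ _ (Finset.mem_univ (0 : Fin n)), if_pos rfl,
    Finset.prod_congr rfl (fun i hi => if_neg (Finset.mem_erase.1 hi).1), Finset.prod_const,
    Finset.card_erase_of_mem (Finset.mem_univ _), Finset.card_univ, Fintype.card_fin]

def e0 (n : ℕ) [NeZero n] : En n := EuclideanSpace.single 0 1

lemma norm_e0 [NeZero n] : ‖e0 n‖ = 1 := by
  simp [e0, EuclideanSpace.norm_single]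

lemma exists_isometry [NeZero n] {ω : En n} (hω : ‖ω‖ = 1) :
    ∃ R : En n ≃ₗᵢ[ℝ] En n, R ω = e0 n := by
  refine ⟨Submodule.reflection (ℝ ∙ (ω - e0 n))ᗮ, ?_⟩
  exact Submodule.reflection_sub (by rw [hω, norm_e0])

lemma normsq_eq (y : En n) : ‖y‖^2 = ∑ i, (y i)^2 := by
  rw [EuclideanSpace.norm_eq, Real.sq_sqrt (by positivity)]
  simp [Real.norm_eq_abs, sq_abs]

lemma coord_abs_le_norm (y : En n) (i : Fin n) : |y i| ≤ ‖y‖ := by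
  have h : (y i)^2 ≤ ‖y‖^2 := by
    rw [normsq_eq]
    exact Finset.single_le_sum (fun j _ => sq_nonneg (y j)) (Finset.mem_univ i)
  calc |y i| = Real.sqrt ((y i)^2) := (Real.sqrt_sq_eq_abs _).symm
    _ ≤ Real.sqrt (‖y‖^2) := Real.sqrt_le_sqrt h
    _ = ‖y‖ := Real.sqrt_sq (norm_nonneg _)

lemma inner_e0 [NeZero n] (w : En n) : inner (𝕜 := ℝ) (e0 n) w = w 0 := by
  rw [e0, EuclideanSpace.inner_single_left]; simp

/-- slab centered at origin -/
def slab (n : ℕ) (ω : En n) (s : ℝ) : Set (En n) :=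
  {y | |inner (𝕜 := ℝ) ω y| + ‖y‖^2 < s^2}

lemma slab_subset [NeZero n] {ω : En n} (hω : ‖ω‖ = 1) {R : En n ≃ₗᵢ[ℝ] En n} (hR : R ω = e0 n)
    {s : ℝ} (hs : 0 < s) : slab n ω s ⊆ R ⁻¹' rect n (s^2) s := by
  intro y hy
  have hy' : |inner (𝕜 := ℝ) ω y| + ‖y‖^2 < s^2 := hy
  have hinner : inner (𝕜 := ℝ) ω y = (R y) 0 := by
    rw [← R.inner_map_map ω y, hR, inner_e0]
  have h0 : |(R y) 0| < s^2 := by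
    rw [← hinner]; nlinarith [norm_nonneg y, abs_nonneg (inner (𝕜 := ℝ) ω y)]
  refine ⟨h0, fun i _ => ?_⟩
  have hn : ‖y‖ < s := by nlinarith [norm_nonneg y, abs_nonneg (inner (𝕜 := ℝ) ω y)]
  calc |(R y) i| ≤ ‖R y‖ := coord_abs_le_norm _ _
    _ = ‖y‖ := R.norm_map y
    _ < s := hn

lemma subset_slab [NeZero n] {ω : En n} (hω : ‖ω‖ = 1) {R : En n ≃ₗᵢ[ℝ] En n} (hR : R ω = e0 n)
    {s : ℝ} (hs : 0 < s) (hs1 : s ≤ 1) :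
    R ⁻¹' rect n (s^2/4) (s/(2*n)) ⊆ slab n ω s := by
  intro y hy
  obtain ⟨h0, hi⟩ := hy
  have hinner : inner (𝕜 := ℝ) ω y = (R y) 0 := by
    rw [← R.inner_map_map ω y, hR, inner_e0]
  have hn1 : (1:ℝ) ≤ n := by
    have := Nat.one_le_iff_ne_zero.2 (NeZero.ne n); exact_mod_cast this
  -- bound ‖y‖²
  have hsum : ∑ i ∈ Finset.univ.erase (0 : Fin n), (R y i)^2 ≤ s^2/4 := by
    have hb : ∀ i ∈ Finset.univ.erase (0 : Fin n), (R y i)^2 ≤ (s/(2*n))^2 := by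
      intro i hi'
      have := hi i (Finset.mem_erase.1 hi').1
      nlinarith [abs_nonneg (R y i), sq_abs (R y i)]
    calc ∑ i ∈ Finset.univ.erase (0 : Fin n), (R y i)^2
        ≤ (Finset.univ.erase (0 : Fin n)).card • (s/(2*n))^2 := Finset.sum_le_card_nsmul _ _ _ hb
      _ = ((Finset.univ.erase (0 : Fin n)).card : ℝ) * (s/(2*n))^2 := by
          rw [nsmul_eq_mul]
      _ ≤ (n : ℝ) * (s/(2*n))^2 := by
          apply mul_le_mul_of_nonneg_right _ (sq_nonneg _)
          rw [Finset.card_erase_of_mem (Finset.mem_univ _), Finset.card_univ, Fintype.card_fin]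
          exact_mod_cast Nat.cast_le.2 (Nat.sub_le n 1)
      _ ≤ s^2/4 := by
          have hnpos : (0:ℝ) < n := by linarith
          rw [div_pow, mul_pow, mul_div_assoc']
          rw [div_le_div_iff₀ (by positivity) (by norm_num)]
          nlinarith [mul_nonneg (mul_nonneg (sub_nonneg.2 hn1) hnpos.le) (sq_nonneg s)]
  have hnormsq : ‖y‖^2 ≤ (s^2/4)^2 + s^2/4 := by
    have := normsq_eq (R y)
    rw [← R.norm_map y, this, ← Finset.add_sum_erase _ _ (Finset.mem_univ (0 : Fin n))]
    have : (R y 0)^2 ≤ (s^2/4)^2 := by nlinarith [abs_nonneg (R y 0), sq_abs (R y 0)]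
    linarith
  show |inner (𝕜 := ℝ) ω y| + ‖y‖^2 < s^2
  rw [hinner]
  have hs2 : s^2 ≤ 1 := by nlinarith
  nlinarith [sq_nonneg s, hs, mul_le_mul_of_nonneg_left hs2 (sq_nonneg s)]

/-- asymmetric rectangle: first coordinate in (a,b), others small. -/
def rect2 (n : ℕ) [NeZero n] (a b B : ℝ) : Set (En n) :=
  {y | y 0 ∈ Set.Ioo a b ∧ ∀ i : Fin n, i ≠ 0 → |y i| < B}

lemma rect2_eq_preimage [NeZero n] (a b B : ℝ) :
    rect2 n a b B = (MeasurableEquiv.toLp 2 (Fin n → ℝ)).symm ⁻¹'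
      (Set.univ.pi fun i : Fin n => if i = 0 then Set.Ioo a b else Set.Ioo (-B) B) := by
  ext y
  simp only [rect2, Set.mem_preimage, Set.mem_pi, Set.mem_univ, forall_true_left,
    Set.mem_setOf_eq, MeasurableEquiv.coe_toLp_symm]
  constructor
  · rintro ⟨h0, hi⟩ i
    by_cases h : i = 0
    · subst h; simpa using h0
    · simpa [h, Set.mem_Ioo, ← abs_lt] using hi i h
  · intro h
    refine ⟨by simpa using h 0, fun i hi => ?_⟩
    have := h i; simp only [hi, if_false, Set.mem_Ioo] at this; exact abs_lt.2 this

lemma measurableSet_pi_rect2 [NeZero n] (a b B : ℝ) :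
    MeasurableSet (Set.univ.pi fun i : Fin n => if i = 0 then Set.Ioo a b else Set.Ioo (-B) B) :=
  MeasurableSet.univ_pi fun i => by split <;> exact measurableSet_Ioo

lemma measurableSet_rect2 [NeZero n] (a b B : ℝ) : MeasurableSet (rect2 n a b B) := by
  rw [rect2_eq_preimage]
  exact (MeasurableEquiv.toLp 2 (Fin n → ℝ)).symm.measurable (measurableSet_pi_rect2 a b B)

lemma volume_rect2 [NeZero n] (a b B : ℝ) :
    volume (rect2 n a b B) = ENNReal.ofReal (b-a) * ENNReal.ofReal (2*B) ^ (n-1) := by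
  rw [rect2_eq_preimage, (EuclideanSpace.volume_preserving_symm_measurableEquiv_toLp (Fin n)).measure_preimage
      (measurableSet_pi_rect2 a b B).nullMeasurableSet, volume_pi_pi]
  have : ∀ i : Fin n, volume (if i = 0 then Set.Ioo a b else Set.Ioo (-B) B) =
      if i = 0 then ENNReal.ofReal (b-a) else ENNReal.ofReal (2*B) := by
    intro i; split <;> simp [Real.volume_Ioo, two_mul]
  rw [Finset.prod_congr rfl fun i _ => this i]
  rw [← Finset.mul_prod_erase Finset.univ _ (Finset.mem_univ (0 : Fin n)), if_pos rfl,
    Finset.prod_congr rfl (fun i hi => if_neg (Finset.mem_erase.1 hi).1), Finset.prod_const,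
    Finset.card_erase_of_mem (Finset.mem_univ _), Finset.card_univ, Fintype.card_fin]

/-- spherical cap -/
def cap (n : ℕ) (ω : En n) (t : ℝ) : Set (Sph n) := {ν | ‖(ν : En n) - ω‖ < t}

lemma measurableSet_cap (ω : En n) (t : ℝ) : MeasurableSet (cap n ω t) := by
  have : cap n ω t = (Subtype.val) ⁻¹' {z : En n | ‖z - ω‖ < t} := rfl
  rw [this]
  exact (isOpen_lt (by fun_prop) continuous_const).measurableSet.preimage measurable_subtype_coe

lemma cone_subset [NeZero n] {ω : En n} (hω : ‖ω‖ = 1) {R : En n ≃ₗᵢ[ℝ] En n} (hR : R ω = e0 n)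
    {t : ℝ} (ht : 0 < t) :
    Set.Ioo (0:ℝ) 1 • (Subtype.val '' cap n ω t) ⊆ R ⁻¹' rect n 1 t := by
  intro z hz
  rw [Set.mem_smul] at hz
  obtain ⟨r, hr, v, hv, rfl⟩ := hz
  obtain ⟨ν, hν, rfl⟩ := hv
  have hν1 : ‖(ν : En n)‖ = 1 := by
    have := ν.2; rwa [mem_sphere_zero_iff_norm] at this
  have hRsmul : R (r • (ν : En n)) = r • R (ν : En n) := R.map_smul r _
  constructor
  · rw [hRsmul]
    have : |(r • R (ν : En n)) 0| = |r| * |R (ν : En n) 0| := by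
      simp [abs_mul]
    rw [this, abs_of_pos hr.1]
    calc r * |R (ν : En n) 0| ≤ r * ‖R (ν : En n)‖ :=
          mul_le_mul_of_nonneg_left (coord_abs_le_norm _ _) hr.1.le
      _ = r := by rw [R.norm_map, hν1, mul_one]
      _ < 1 := hr.2
  · intro i hi
    rw [hRsmul]
    have hcoord : |R (ν : En n) i| < t := by
      have he0i : e0 n i = 0 := by
        simp [e0, EuclideanSpace.single_apply, hi]
      have : R (ν : En n) i = (R (ν : En n) - e0 n) i := by
        simp [he0i]
      rw [this]
      calc |(R (ν : En n) - e0 n) i| ≤ ‖R (ν : En n) - e0 n‖ := coord_abs_le_norm _ _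
        _ = ‖(ν : En n) - ω‖ := by rw [← hR, ← R.map_sub, R.norm_map]
        _ < t := hν
    have : |(r • R (ν : En n)) i| = r * |R (ν : En n) i| := by
      simp [abs_mul, abs_of_pos hr.1]
    rw [this]
    calc r * |R (ν : En n) i| ≤ 1 * |R (ν : En n) i| :=
          mul_le_mul_of_nonneg_right hr.2.le (abs_nonneg _)
      _ < t := by rw [one_mul]; exact hcoord

set_option maxHeartbeats 1000000 in
lemma subset_cone [NeZero n] {ω : En n} (hω : ‖ω‖ = 1) {R : En n ≃ₗᵢ[ℝ] En n} (hR : R ω = e0 n)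
    {t : ℝ} (ht : 0 < t) (ht1 : t ≤ 1) :
    R ⁻¹' rect2 n (1/2) (3/4) (t/(8*n)) ⊆ Set.Ioo (0:ℝ) 1 • (Subtype.val '' cap n ω t) := by
  intro y hy
  obtain ⟨h0, hi⟩ := hy
  set w : En n := R y with hw
  have hn1 : (1:ℝ) ≤ n := by
    have := Nat.one_le_iff_ne_zero.2 (NeZero.ne n); exact_mod_cast this
  set q : ℝ := ∑ i ∈ Finset.univ.erase (0 : Fin n), (w i)^2 with hqdef
  have hq0 : 0 ≤ q := Finset.sum_nonneg fun i _ => sq_nonneg _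
  have hq : q ≤ t^2/64 := by
    have hb : ∀ i ∈ Finset.univ.erase (0 : Fin n), (w i)^2 ≤ (t/(8*n))^2 := by
      intro i hi'
      have := hi i (Finset.mem_erase.1 hi').1
      nlinarith [abs_nonneg (w i), sq_abs (w i)]
    have hnpos : (0:ℝ) < n := by linarith
    calc q ≤ (Finset.univ.erase (0 : Fin n)).card • (t/(8*n))^2 := Finset.sum_le_card_nsmul _ _ _ hb
      _ = ((Finset.univ.erase (0 : Fin n)).card : ℝ) * (t/(8*n))^2 := by rw [nsmul_eq_mul]
      _ ≤ (n : ℝ) * (t/(8*n))^2 := by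
          apply mul_le_mul_of_nonneg_right _ (sq_nonneg _)
          rw [Finset.card_erase_of_mem (Finset.mem_univ _), Finset.card_univ, Fintype.card_fin]
          exact_mod_cast Nat.cast_le.2 (Nat.sub_le n 1)
      _ ≤ t^2/64 := by
          rw [div_pow, mul_pow, mul_div_assoc']
          rw [div_le_div_iff₀ (by positivity) (by norm_num)]
          nlinarith [mul_nonneg (mul_nonneg (sub_nonneg.2 hn1) hnpos.le) (sq_nonneg t)]
  set r : ℝ := ‖y‖ with hrdef
  have hr2 : r^2 = (w 0)^2 + q := by
    rw [hrdef, ← R.norm_map y, ← hw, normsq_eq,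
      ← Finset.add_sum_erase _ _ (Finset.mem_univ (0 : Fin n))]
  have hw0 : 1/2 < w 0 ∧ w 0 < 3/4 := ⟨h0.1, h0.2⟩
  have ht2 : t^2 ≤ 1 := by nlinarith
  have hrlow : 1/2 < r := by
    have hrnn : 0 ≤ r := norm_nonneg y
    nlinarith
  have hrhigh : r < 1 := by
    have hrnn : 0 ≤ r := norm_nonneg y
    nlinarith
  have hrpos : 0 < r := by linarith
  have hw0r : w 0 ≤ r := by nlinarith
  have hrinv2 : r⁻¹ ≤ 2 := by
    rw [inv_le_comm₀ hrpos (by norm_num)]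
    linarith
  have hrinv0 : 0 ≤ r⁻¹ := inv_nonneg.2 hrpos.le
  -- the unit vector
  set ν : En n := r⁻¹ • y with hν
  have hνnorm : ‖ν‖ = 1 := by
    rw [hν, norm_smul, norm_inv, Real.norm_eq_abs, abs_of_pos hrpos, ← hrdef,
      inv_mul_cancel₀ hrpos.ne']
  have hRν : R ν = r⁻¹ • w := by rw [hν, R.map_smul, hw]
  -- distance to ω
  have hd : r - w 0 ≤ q := by nlinarith
  have hdist_sq : ‖ν - ω‖^2 < t^2 := by
    have hnorm_eq : ‖ν - ω‖ = ‖r⁻¹ • w - e0 n‖ := by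
      rw [← R.norm_map (ν - ω), R.map_sub, hR, hRν]
    have hsq : ‖r⁻¹ • w - e0 n‖^2 =
        (r⁻¹ * w 0 - 1)^2 + ∑ i ∈ Finset.univ.erase (0 : Fin n), (r⁻¹ * w i)^2 := by
      rw [normsq_eq, ← Finset.add_sum_erase _ (fun i => ((r⁻¹ • w - e0 n) i)^2)
        (Finset.mem_univ (0 : Fin n))]
      have hc0 : (r⁻¹ • w - e0 n) 0 = r⁻¹ * w 0 - 1 := by
        simp [e0, EuclideanSpace.single_apply, PiLp.sub_apply, PiLp.smul_apply, smul_eq_mul]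
      have hci : ∀ i ∈ Finset.univ.erase (0 : Fin n),
          ((r⁻¹ • w - e0 n) i)^2 = (r⁻¹ * w i)^2 := by
        intro i hi'
        have : (r⁻¹ • w - e0 n) i = r⁻¹ * w i := by
          simp [e0, EuclideanSpace.single_apply, PiLp.sub_apply, PiLp.smul_apply, smul_eq_mul,
            (Finset.mem_erase.1 hi').1]
        rw [this]
      rw [hc0, Finset.sum_congr rfl hci]
    have hterm0 : (r⁻¹ * w 0 - 1)^2 ≤ 4 * q^2 := by
      have heq : r⁻¹ * w 0 - 1 = (w 0 - r) / r := by field_simp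
      rw [heq, div_pow, div_le_iff₀ (by positivity)]
      have hd2 : (r - w 0)^2 ≤ q^2 := by nlinarith
      have h4r : (0:ℝ) ≤ 4*r^2 - 1 := by nlinarith
      nlinarith [mul_nonneg (sq_nonneg q) h4r]
    have htrest : ∑ i ∈ Finset.univ.erase (0 : Fin n), (r⁻¹ * w i)^2 ≤ 4 * q := by
      have : ∀ i ∈ Finset.univ.erase (0 : Fin n), (r⁻¹ * w i)^2 = (r⁻¹)^2 * (w i)^2 := by
        intro i _; ring
      rw [Finset.sum_congr rfl this, ← Finset.mul_sum, ← hqdef]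
      have h4 : (r⁻¹)^2 ≤ 4 := by nlinarith
      nlinarith
    rw [hnorm_eq, hsq]
    nlinarith
  have hdist : ‖ν - ω‖ < t := lt_of_pow_lt_pow_left₀ 2 ht.le hdist_sq
  rw [Set.mem_smul]
  refine ⟨r, ⟨hrpos, hrhigh⟩, ν, ⟨⟨ν, by rwa [mem_sphere_zero_iff_norm]⟩, hdist, rfl⟩, ?_⟩
  rw [hν, smul_inv_smul₀ hrpos.ne']

/-- the volume of the unit ball, as a real number -/
def bconst (n : ℕ) : ℝ := (volume (Metric.ball (0 : En n) 1)).toReal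

lemma bconst_pos [NeZero n] : 0 < bconst n := by
  rw [bconst, ENNReal.toReal_pos_iff]
  exact ⟨measure_ball_pos _ _ one_pos, measure_ball_lt_top⟩

lemma volume_ball_eq [NeZero n] :
    volume (Metric.ball (0 : En n) 1) = ENNReal.ofReal (bconst n) :=
  (ENNReal.ofReal_toReal measure_ball_lt_top.ne).symm

lemma toSphere_univ_eq [NeZero n] :
    (volume : Measure (En n)).toSphere Set.univ = ENNReal.ofReal (n * bconst n) := by
  rw [Measure.toSphere_apply_univ, finrank_euclideanSpace_fin, volume_ball_eq,
    ENNReal.ofReal_mul (by positivity), ENNReal.ofReal_natCast]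

lemma sphMeasure_eq (n : ℕ) [NeZero n] :
    (ENNReal.ofReal (n * bconst n))⁻¹ • (volume : Measure (En n)).toSphere
      = (((volume : Measure (En n)).toSphere Set.univ)⁻¹ •
          (volume : Measure (En n)).toSphere) := by
  rw [toSphere_univ_eq]

lemma toSphere_cap_le [NeZero n] {ω : En n} (hω : ‖ω‖ = 1) {t : ℝ} (ht : 0 < t) :
    (volume : Measure (En n)).toSphere (cap n ω t)
      ≤ ENNReal.ofReal ((n : ℝ) * (2 * (2*t)^(n-1))) := by
  obtain ⟨R, hR⟩ := exists_isometry hω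
  rw [Measure.toSphere_apply' _ (measurableSet_cap ω t), finrank_euclideanSpace_fin]
  calc (n : ℝ≥0∞) * volume (Set.Ioo (0:ℝ) 1 • (Subtype.val '' cap n ω t))
      ≤ (n : ℝ≥0∞) * volume (R ⁻¹' rect n 1 t) :=
        mul_le_mul_right (measure_mono (cone_subset hω hR ht)) _
    _ = ENNReal.ofReal ((n : ℝ) * (2 * (2*t)^(n-1))) := by
        rw [R.measurePreserving.measure_preimage (measurableSet_rect 1 t).nullMeasurableSet,
          volume_rect, mul_one]
        conv_rhs => rw [ENNReal.ofReal_mul (by positivity : (0:ℝ) ≤ (n:ℝ)),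
          ENNReal.ofReal_mul (by norm_num : (0:ℝ) ≤ 2),
          ENNReal.ofReal_pow (by positivity : (0:ℝ) ≤ 2*t), ENNReal.ofReal_natCast]

lemma toSphere_cap_ge [NeZero n] {ω : En n} (hω : ‖ω‖ = 1) {t : ℝ} (ht : 0 < t) (ht1 : t ≤ 1) :
    ENNReal.ofReal ((n : ℝ) * ((1/4) * (2*(t/(8*n)))^(n-1)))
      ≤ (volume : Measure (En n)).toSphere (cap n ω t) := by
  obtain ⟨R, hR⟩ := exists_isometry hω
  rw [Measure.toSphere_apply' _ (measurableSet_cap ω t), finrank_euclideanSpace_fin]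
  have h1 : ENNReal.ofReal ((n : ℝ) * ((1/4) * (2*(t/(8*n)))^(n-1)))
      = (n : ℝ≥0∞) * volume (R ⁻¹' rect2 n (1/2) (3/4) (t/(8*n))) := by
    rw [R.measurePreserving.measure_preimage
        (measurableSet_rect2 (1/2) (3/4) (t/(8*n))).nullMeasurableSet,
      volume_rect2]
    conv_lhs => rw [ENNReal.ofReal_mul (by positivity : (0:ℝ) ≤ (n:ℝ)),
      ENNReal.ofReal_mul (by norm_num : (0:ℝ) ≤ (1/4:ℝ)),
      ENNReal.ofReal_pow (by positivity : (0:ℝ) ≤ 2*(t/(8*n))), ENNReal.ofReal_natCast]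
    norm_num
  rw [h1]
  exact mul_le_mul_right (measure_mono (subset_cone hω hR ht ht1)) _

lemma pow_split {s : ℝ} (hn : 1 ≤ n) : s^2 * s^(n-1) = s^(n+1) := by
  rw [← pow_add]; congr 1; omega

lemma volume_slab_le' [NeZero n] {ω : En n} (hω : ‖ω‖ = 1) {s : ℝ} (hs : 0 < s) :
    volume (slab n ω s) ≤ ENNReal.ofReal ((2*2^(n-1)) * s^(n+1)) := by
  obtain ⟨R, hR⟩ := exists_isometry hω
  have hn1 : 1 ≤ n := Nat.one_le_iff_ne_zero.2 (NeZero.ne n)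
  calc volume (slab n ω s) ≤ volume (R ⁻¹' rect n (s^2) s) :=
        measure_mono (slab_subset hω hR hs)
    _ = ENNReal.ofReal (2*s^2) * ENNReal.ofReal (2*s) ^ (n-1) := by
        rw [R.measurePreserving.measure_preimage (measurableSet_rect (s^2) s).nullMeasurableSet,
          volume_rect]
    _ = ENNReal.ofReal ((2*s^2) * (2*s)^(n-1)) := by
        conv_rhs => rw [ENNReal.ofReal_mul (by positivity : (0:ℝ) ≤ 2*s^2),
          ENNReal.ofReal_pow (by positivity : (0:ℝ) ≤ 2*s)]
    _ = ENNReal.ofReal ((2*2^(n-1)) * s^(n+1)) := by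
        rw [mul_pow, ← pow_split (s := s) hn1]; ring_nf

lemma volume_slab_ge' [NeZero n] {ω : En n} (hω : ‖ω‖ = 1) {s : ℝ} (hs : 0 < s) (hs1 : s ≤ 1) :
    ENNReal.ofReal (((1/2) * (1/(n:ℝ))^(n-1)) * s^(n+1)) ≤ volume (slab n ω s) := by
  obtain ⟨R, hR⟩ := exists_isometry hω
  have hn1 : 1 ≤ n := Nat.one_le_iff_ne_zero.2 (NeZero.ne n)
  have hnpos : (0:ℝ) < n := by exact_mod_cast Nat.pos_of_ne_zero (NeZero.ne n)
  calc ENNReal.ofReal (((1/2) * (1/(n:ℝ))^(n-1)) * s^(n+1))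
      = ENNReal.ofReal ((2*(s^2/4)) * (2*(s/(2*n)))^(n-1)) := by
        congr 1
        rw [← pow_split (s := s) hn1]
        have : 2*(s/(2*(n:ℝ))) = (1/(n:ℝ)) * s := by field_simp
        rw [this, mul_pow]; ring
    _ = ENNReal.ofReal (2*(s^2/4)) * ENNReal.ofReal (2*(s/(2*n))) ^ (n-1) := by
        conv_lhs => rw [ENNReal.ofReal_mul (by positivity : (0:ℝ) ≤ 2*(s^2/4)),
          ENNReal.ofReal_pow (by positivity : (0:ℝ) ≤ 2*(s/(2*n)))]
    _ = volume (R ⁻¹' rect n (s^2/4) (s/(2*n))) := by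
        rw [R.measurePreserving.measure_preimage
          (measurableSet_rect (s^2/4) (s/(2*n))).nullMeasurableSet, volume_rect]
    _ ≤ volume (slab n ω s) := measure_mono (subset_slab hω hR hs hs1)

lemma volume_tslab_eq [NeZero n] (ω x : En n) (s : ℝ) :
    volume {y : En n | |inner (𝕜 := ℝ) ω (y - x)| + ‖y - x‖^2 < s^2} = volume (slab n ω s) := by
  have h : {y : En n | |inner (𝕜 := ℝ) ω (y - x)| + ‖y - x‖^2 < s^2}
      = (fun y : En n => y + (-x)) ⁻¹' slab n ω s := by
    ext y; simp [slab, sub_eq_add_neg]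
  rw [h, measure_preimage_add_right]

lemma sph_cap_le [NeZero n] {ω : En n} (hω : ‖ω‖ = 1) {t : ℝ} (ht : 0 < t) :
    ((ENNReal.ofReal ((n:ℝ) * bconst n))⁻¹ • (volume : Measure (En n)).toSphere) (cap n ω t)
      ≤ ENNReal.ofReal ((((n:ℝ) * bconst n)⁻¹ * ((n:ℝ) * (2*2^(n-1)))) * t^(n-1)) := by
  have hb := bconst_pos (n := n)
  have hnpos : (0:ℝ) < n := by exact_mod_cast Nat.pos_of_ne_zero (NeZero.ne n)
  rw [Measure.smul_apply, smul_eq_mul]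
  calc (ENNReal.ofReal ((n:ℝ) * bconst n))⁻¹ * (volume : Measure (En n)).toSphere (cap n ω t)
      ≤ (ENNReal.ofReal ((n:ℝ) * bconst n))⁻¹ * ENNReal.ofReal ((n : ℝ) * (2 * (2*t)^(n-1))) :=
        mul_le_mul_right (toSphere_cap_le hω ht) _
    _ = ENNReal.ofReal ((((n:ℝ) * bconst n)⁻¹) * ((n : ℝ) * (2 * (2*t)^(n-1)))) := by
        conv_rhs => rw [ENNReal.ofReal_mul
            (by positivity : (0:ℝ) ≤ ((n:ℝ) * bconst n)⁻¹),
          ENNReal.ofReal_inv_of_pos (by positivity : (0:ℝ) < (n:ℝ) * bconst n)]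
    _ = ENNReal.ofReal ((((n:ℝ) * bconst n)⁻¹ * ((n:ℝ) * (2*2^(n-1)))) * t^(n-1)) := by
        congr 1
        rw [mul_pow]; ring

lemma sph_cap_ge [NeZero n] {ω : En n} (hω : ‖ω‖ = 1) {t : ℝ} (ht : 0 < t) (ht1 : t ≤ 1) :
    ENNReal.ofReal ((((n:ℝ) * bconst n)⁻¹ * ((n:ℝ) * ((1/4) * (1/(4*(n:ℝ)))^(n-1)))) * t^(n-1))
      ≤ ((ENNReal.ofReal ((n:ℝ) * bconst n))⁻¹ • (volume : Measure (En n)).toSphere)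
        (cap n ω t) := by
  have hb := bconst_pos (n := n)
  have hnpos : (0:ℝ) < n := by exact_mod_cast Nat.pos_of_ne_zero (NeZero.ne n)
  rw [Measure.smul_apply, smul_eq_mul]
  calc ENNReal.ofReal ((((n:ℝ) * bconst n)⁻¹ * ((n:ℝ) * ((1/4) * (1/(4*(n:ℝ)))^(n-1)))) * t^(n-1))
      = ENNReal.ofReal ((((n:ℝ) * bconst n)⁻¹) * ((n : ℝ) * ((1/4) * (2*(t/(8*n)))^(n-1)))) := by
        congr 1
        have h1 : 2*(t/(8*(n:ℝ))) = (1/(4*(n:ℝ))) * t := by field_simp; ring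
        rw [h1, mul_pow]; ring
    _ = (ENNReal.ofReal ((n:ℝ) * bconst n))⁻¹
          * ENNReal.ofReal ((n : ℝ) * ((1/4) * (2*(t/(8*n)))^(n-1))) := by
        conv_lhs => rw [ENNReal.ofReal_mul
            (by positivity : (0:ℝ) ≤ ((n:ℝ) * bconst n)⁻¹),
          ENNReal.ofReal_inv_of_pos (by positivity : (0:ℝ) < (n:ℝ) * bconst n)]
    _ ≤ (ENNReal.ofReal ((n:ℝ) * bconst n))⁻¹ * (volume : Measure (En n)).toSphere (cap n ω t) :=
        mul_le_mul_right (toSphere_cap_ge hω ht ht1) _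


/-- For radii 0 < τ < 1, balls in the quasi-metric ρ on ℝⁿ × S^{n-1}
have measure comparable to τ^{2n}. -/
theorem measure_rball_lt_one (n : ℕ) (hn : 2 ≤ n) :
    ∃ C : ℝ, 0 < C ∧ ∀ (a : CoSph n) (τ : ℝ), 0 < τ → τ < 1 →
      ENNReal.ofReal (C⁻¹ * τ ^ (2 * n)) ≤ muS n (rball a τ) ∧
      muS n (rball a τ) ≤ ENNReal.ofReal (C * τ ^ (2 * n)) := by
  haveI : NeZero n := ⟨by omega⟩
  have hb : 0 < bconst n := bconst_pos
  have hnpos : (0:ℝ) < n := by exact_mod_cast (by omega : 0 < n)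
  have hnb : (0:ℝ) < (n:ℝ) * bconst n := mul_pos hnpos hb
  have hnbi : (0:ℝ) < ((n:ℝ) * bconst n)⁻¹ := inv_pos.2 hnb
  set k₂ : ℝ := (2*2^(n-1)) * (((n:ℝ) * bconst n)⁻¹ * ((n:ℝ) * (2*2^(n-1)))) with hk2def
  set k₁ : ℝ := (((1/2) * (1/(n:ℝ))^(n-1)) *
      (((n:ℝ) * bconst n)⁻¹ * ((n:ℝ) * ((1/4) * (1/(4*(n:ℝ)))^(n-1))))) * ((1/2:ℝ))^(2*n)
      with hk1def
  have hk2p : 0 < k₂ := by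
    apply mul_pos (by positivity)
    exact mul_pos hnbi (by positivity)
  have hk1p : 0 < k₁ := by
    apply mul_pos _ (by positivity)
    apply mul_pos (by positivity)
    exact mul_pos hnbi (by positivity)
  refine ⟨max k₂ k₁⁻¹, lt_of_lt_of_le hk2p (le_max_left _ _), ?_⟩
  rintro ⟨x, ω⟩ τ hτ hτ1
  have hω : ‖(ω : En n)‖ = 1 := by
    have := ω.2; rwa [mem_sphere_zero_iff_norm] at this
  haveI : IsFiniteMeasure (sphMeasure n) := by
    constructor
    rw [sphMeasure, Measure.smul_apply, smul_eq_mul, toSphere_univ_eq,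
      ENNReal.inv_mul_cancel (ENNReal.ofReal_pos.2 hnb).ne' ENNReal.ofReal_ne_top]
    exact ENNReal.one_lt_top
  have hsph : sphMeasure n
      = (ENNReal.ofReal ((n:ℝ) * bconst n))⁻¹ • (volume : Measure (En n)).toSphere := by
    rw [sphMeasure, toSphere_univ_eq]
  have hmem : ∀ (y : En n) (ν : Sph n), ((y, ν) ∈ rball (x, ω) τ ↔
      |inner (𝕜 := ℝ) ((ω : En n)) (x - y)| + ‖x - y‖^2
        + ‖(ω : En n) - (ν : En n)‖^2 < τ^2) := by
    intro y ν
    simp only [rball, rho, Set.mem_setOf_eq]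
    exact Real.sqrt_lt' hτ
  constructor
  · -- lower bound
    have hτ2 : 0 < τ/2 := by linarith
    have hτ21 : τ/2 ≤ 1 := by linarith
    have hsub : {y : En n | |inner (𝕜 := ℝ) ((ω : En n)) (y - x)| + ‖y - x‖^2 < (τ/2)^2}
        ×ˢ cap n ω (τ/2) ⊆ rball (x, ω) τ := by
      rintro ⟨y, ν⟩ ⟨hy, hν⟩
      rw [hmem y ν]
      simp only [Set.mem_setOf_eq] at hy
      have h1 : |inner (𝕜 := ℝ) ((ω : En n)) (x - y)|
          = |inner (𝕜 := ℝ) ((ω : En n)) (y - x)| := by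
        rw [← neg_sub y x, inner_neg_right, abs_neg]
      have h2 : ‖x - y‖ = ‖y - x‖ := norm_sub_rev _ _
      have hνlt : ‖(ν : En n) - (ω : En n)‖ < τ/2 := hν
      have h3 : ‖(ω : En n) - (ν : En n)‖^2 < (τ/2)^2 := by
        rw [norm_sub_rev]
        exact pow_lt_pow_left₀ hνlt (norm_nonneg _) (by norm_num)
      rw [h1, h2]
      nlinarith [mul_pos hτ hτ]
    calc ENNReal.ofReal ((max k₂ k₁⁻¹)⁻¹ * τ ^ (2*n))
        ≤ ENNReal.ofReal (k₁ * τ ^ (2*n)) := by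
          apply ENNReal.ofReal_le_ofReal
          apply mul_le_mul_of_nonneg_right _ (by positivity)
          calc (max k₂ k₁⁻¹)⁻¹ ≤ (k₁⁻¹)⁻¹ :=
                inv_anti₀ (inv_pos.2 hk1p) (le_max_right _ _)
            _ = k₁ := inv_inv k₁
      _ = ENNReal.ofReal (((1/2) * (1/(n:ℝ))^(n-1)) * (τ/2)^(n+1))
            * ENNReal.ofReal ((((n:ℝ) * bconst n)⁻¹
              * ((n:ℝ) * ((1/4) * (1/(4*(n:ℝ)))^(n-1)))) * (τ/2)^(n-1)) := by
          rw [← ENNReal.ofReal_mul (by positivity)]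
          congr 1
          have hsplit : (τ/2)^(n+1) * (τ/2)^(n-1) = (1/2:ℝ)^(2*n) * τ^(2*n) := by
            rw [← pow_add, show n+1+(n-1) = 2*n from by omega, div_pow, div_pow, one_pow]
            ring
          calc k₁ * τ^(2*n) = (((1/2) * (1/(n:ℝ))^(n-1))
                * (((n:ℝ) * bconst n)⁻¹ * ((n:ℝ) * ((1/4) * (1/(4*(n:ℝ)))^(n-1)))))
                * ((1/2:ℝ)^(2*n) * τ^(2*n)) := by rw [hk1def]; ring
            _ = _ := by rw [← hsplit]; ring
      _ ≤ volume {y : En n | |inner (𝕜 := ℝ) ((ω : En n)) (y - x)| + ‖y - x‖^2 < (τ/2)^2}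
            * sphMeasure n (cap n ω (τ/2)) := by
          apply mul_le_mul'
          · rw [volume_tslab_eq]
            exact volume_slab_ge' hω hτ2 hτ21
          · rw [hsph]
            exact sph_cap_ge hω hτ2 hτ21
      _ = muS n ({y : En n | |inner (𝕜 := ℝ) ((ω : En n)) (y - x)| + ‖y - x‖^2 < (τ/2)^2}
            ×ˢ cap n ω (τ/2)) := by rw [muS, Measure.prod_prod]
      _ ≤ muS n (rball (x, ω) τ) := measure_mono hsub
  · -- upper bound
    have hsub : rball (x, ω) τ ⊆
        {y : En n | |inner (𝕜 := ℝ) ((ω : En n)) (y - x)| + ‖y - x‖^2 < τ^2} ×ˢ cap n ω τ := by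
      rintro ⟨y, ν⟩ hp
      have hp' := (hmem y ν).1 hp
      have h1 : |inner (𝕜 := ℝ) ((ω : En n)) (x - y)|
          = |inner (𝕜 := ℝ) ((ω : En n)) (y - x)| := by
        rw [← neg_sub y x, inner_neg_right, abs_neg]
      have h2 : ‖x - y‖ = ‖y - x‖ := norm_sub_rev _ _
      constructor
      · show |inner (𝕜 := ℝ) ((ω : En n)) (y - x)| + ‖y - x‖^2 < τ^2
        rw [← h1, ← h2]
        nlinarith [sq_nonneg ‖(ω : En n) - (ν : En n)‖]
      · show ‖(ν : En n) - (ω : En n)‖ < τ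
        have h3 : ‖(ν : En n) - (ω : En n)‖^2 < τ^2 := by
          rw [norm_sub_rev]
          nlinarith [abs_nonneg (inner (𝕜 := ℝ) ((ω : En n)) (x - y)), sq_nonneg ‖x - y‖]
        exact lt_of_pow_lt_pow_left₀ 2 hτ.le h3
    calc muS n (rball (x, ω) τ)
        ≤ muS n ({y : En n | |inner (𝕜 := ℝ) ((ω : En n)) (y - x)| + ‖y - x‖^2 < τ^2}
            ×ˢ cap n ω τ) := measure_mono hsub
      _ = volume {y : En n | |inner (𝕜 := ℝ) ((ω : En n)) (y - x)| + ‖y - x‖^2 < τ^2}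
            * sphMeasure n (cap n ω τ) := by rw [muS, Measure.prod_prod]
      _ ≤ ENNReal.ofReal ((2*2^(n-1)) * τ^(n+1))
            * ENNReal.ofReal ((((n:ℝ) * bconst n)⁻¹ * ((n:ℝ) * (2*2^(n-1)))) * τ^(n-1)) := by
          apply mul_le_mul'
          · rw [volume_tslab_eq]
            exact volume_slab_le' hω hτ
          · rw [hsph]
            exact sph_cap_le hω hτ
      _ = ENNReal.ofReal (k₂ * τ^(2*n)) := by
          rw [← ENNReal.ofReal_mul (by positivity)]
          congr 1
          rw [hk2def, show 2*n = (n+1)+(n-1) from by omega, pow_add]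
          ring
      _ ≤ ENNReal.ofReal ((max k₂ k₁⁻¹) * τ^(2*n)) := by
          apply ENNReal.ofReal_le_ofReal
          exact mul_le_mul_of_nonneg_right (le_max_left _ _) (by positivity)
end
end

section
/- There exists C > 0 such that for all (x,ω) ∈ ℝⁿ × S^{n-1} and all τ ≥ 1, the ball B_τ(x,ω) in the quasi-metric ρ satisfies C⁻¹ τⁿ ≤ |B_τ(x,ω)| ≤ C τⁿ. Consequently, |B_{λτ}(x,ω)| ≤ C² λ^{2n} |B_τ(x,ω)| for all τ > 0 and λ ≥ 1, so (S*, ρ, dx dω) is a doubling quasi-metric measure space. -/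
open MeasureTheory Metric Set
open scoped ENNReal NNReal FourierTransform

noncomputable section

open scoped Pointwise

namespace RhoBall

/-! ### Euclidean box volumes -/

lemma volume_eucBox (n : ℕ) (t : Fin n → ℝ) :
    volume {u : EuclideanSpace ℝ (Fin n) | ∀ i, |u i| < t i} = ∏ i, ENNReal.ofReal (2 * t i) := by
  have h := EuclideanSpace.volume_preserving_symm_measurableEquiv_toLp (Fin n)
  have hset : {u : EuclideanSpace ℝ (Fin n) | ∀ i, |u i| < t i}
      = (MeasurableEquiv.toLp 2 (Fin n → ℝ)).symm ⁻¹' (Set.univ.pi fun i => Ioo (-t i) (t i)) := by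
    ext u
    simp [Set.mem_pi, abs_lt, MeasurableEquiv.coe_toLp_symm, and_comm]
  rw [hset, h.measure_preimage (MeasurableSet.univ_pi fun i => measurableSet_Ioo).nullMeasurableSet,
    volume_pi_pi]
  congr 1
  ext i
  rw [Real.volume_Ioo]
  ring_nf

lemma volume_innerBox {n : ℕ} (b : OrthonormalBasis (Fin n) ℝ (En n)) (t : Fin n → ℝ) :
    volume {y : En n | ∀ i, |(inner (𝕜 := ℝ) (b i) y : ℝ)| < t i}
      = ∏ i, ENNReal.ofReal (2 * t i) := by
  have hset : {y : En n | ∀ i, |(inner (𝕜 := ℝ) (b i) y : ℝ)| < t i}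
      = b.repr ⁻¹' {u : EuclideanSpace ℝ (Fin n) | ∀ i, |u i| < t i} := by
    ext y
    simp only [Set.mem_setOf_eq, Set.mem_preimage]
    refine forall_congr' fun i => ?_
    rw [b.repr_apply_apply, real_inner_comm]
  rw [hset, b.measurePreserving_repr.measure_preimage]
  · exact volume_eucBox n t
  · have : {u : EuclideanSpace ℝ (Fin n) | ∀ i, |u i| < t i} = ⋂ i, {u | |u i| < t i} := by
      ext u; simp
    rw [this]
    exact (MeasurableSet.iInter fun i =>
      measurableSet_lt (by fun_prop) measurable_const).nullMeasurableSet

lemma volume_innerBox_shift {n : ℕ} (b : OrthonormalBasis (Fin n) ℝ (En n)) (x : En n)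
    (t : Fin n → ℝ) :
    volume {y : En n | ∀ i, |(inner (𝕜 := ℝ) (b i) (y - x) : ℝ)| < t i}
      = ∏ i, ENNReal.ofReal (2 * t i) := by
  have hset : {y : En n | ∀ i, |(inner (𝕜 := ℝ) (b i) (y - x) : ℝ)| < t i}
      = (fun y => y - x) ⁻¹' {y : En n | ∀ i, |(inner (𝕜 := ℝ) (b i) y : ℝ)| < t i} := rfl
  rw [hset]
  rw [show (fun y : En n => y - x) = (fun y => y + (-x)) by funext y; rw [sub_eq_add_neg]]
  rw [measure_preimage_add_right volume (-x) _]
  exact volume_innerBox b t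

lemma prod_box_eval (m : ℕ) (a c : ℝ) :
    (∏ i : Fin (m+1), ENNReal.ofReal (2 * (if i = 0 then a else c)))
      = ENNReal.ofReal (2*a) * ENNReal.ofReal (2*c) ^ m := by
  rw [Fin.prod_univ_succ]
  simp [Fin.succ_ne_zero]

lemma norm_le_sqrt_mul {n : ℕ} (b : OrthonormalBasis (Fin n) ℝ (En n)) (e : En n) {c : ℝ}
    (hc : 0 ≤ c) (h : ∀ i, |(inner (𝕜 := ℝ) (b i) e : ℝ)| ≤ c) : ‖e‖ ≤ Real.sqrt n * c := by
  have h1 : ‖e‖ = Real.sqrt (∑ i, ‖b.repr e i‖ ^ 2) := by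
    rw [← b.repr.norm_map e, EuclideanSpace.norm_eq]
  have h2 : (∑ i, ‖b.repr e i‖ ^ 2) ≤ (n : ℝ) * c ^ 2 := by
    have hb : ∀ i ∈ Finset.univ, ‖b.repr e i‖ ^ 2 ≤ c ^ 2 := by
      intro i _
      rw [b.repr_apply_apply, Real.norm_eq_abs]
      exact pow_le_pow_left₀ (abs_nonneg _) (h i) 2
    calc (∑ i, ‖b.repr e i‖ ^ 2) ≤ ∑ _i : Fin n, c ^ 2 := Finset.sum_le_sum hb
      _ = (n : ℝ) * c ^ 2 := by
          rw [Finset.sum_const, Finset.card_univ, Fintype.card_fin, nsmul_eq_mul]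
  rw [h1]
  calc Real.sqrt (∑ i, ‖b.repr e i‖ ^ 2) ≤ Real.sqrt ((n : ℝ) * c ^ 2) := Real.sqrt_le_sqrt h2
    _ = Real.sqrt n * c := by
        rw [Real.sqrt_mul (Nat.cast_nonneg n), Real.sqrt_sq hc]

/-! ### Spherical caps -/

def cap (n : ℕ) (ω : En n) (δ : ℝ) : Set (Sph n) := {ν : Sph n | ‖(ν : En n) - ω‖ < δ}

lemma measurableSet_cap (n : ℕ) (ω : En n) (δ : ℝ) : MeasurableSet (cap n ω δ) := by
  have : cap n ω δ = Subtype.val ⁻¹' (Metric.ball ω δ) := by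
    ext ν; simp [cap, Metric.mem_ball, dist_eq_norm]
  rw [this]
  exact measurable_subtype_coe measurableSet_ball

lemma exists_onb (m : ℕ) {ω : En (m+1)} (hω : ‖ω‖ = 1) :
    ∃ b : OrthonormalBasis (Fin (m+1)) ℝ (En (m+1)), b 0 = ω := by
  have horth : Orthonormal ℝ (({0} : Set (Fin (m+1))).restrict fun _ => ω) := by
    constructor
    · intro i; exact hω
    · intro i j hij
      exact absurd (Subtype.ext (i.2.trans j.2.symm)) hij
  obtain ⟨b, hb⟩ := horth.exists_orthonormalBasis_extension_of_card_eq
    (by simp [finrank_euclideanSpace_fin])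
  exact ⟨b, hb _ rfl⟩

lemma sector_eq (n : ℕ) (ω : En n) (δ : ℝ) :
    (Ioo (0:ℝ) 1 • (Subtype.val '' cap n ω δ))
      = {y : En n | ∃ s : ℝ, 0 < s ∧ s < 1 ∧ ∃ v : En n, ‖v‖ = 1 ∧ ‖v - ω‖ < δ ∧ y = s • v} := by
  ext y
  simp only [Set.mem_smul, Set.mem_image, Set.mem_Ioo, mem_setOf_eq]
  constructor
  · rintro ⟨s, ⟨hs0, hs1⟩, v, ⟨ν, hν, rfl⟩, rfl⟩
    exact ⟨s, hs0, hs1, ν, mem_sphere_zero_iff_norm.mp ν.2, hν, rfl⟩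
  · rintro ⟨s, hs0, hs1, v, hv1, hvδ, rfl⟩
    exact ⟨s, ⟨hs0, hs1⟩, v, ⟨⟨v, mem_sphere_zero_iff_norm.mpr hv1⟩, hvδ, rfl⟩, rfl⟩

end RhoBall
namespace RhoBall

lemma toSphere_cap_le (m : ℕ) {ω : En (m+1)} (hω : ‖ω‖ = 1) {δ : ℝ} (hδ : 0 < δ) :
    (volume : Measure (En (m+1))).toSphere (cap (m+1) ω δ)
      ≤ ENNReal.ofReal (2 * (m+1)) * ENNReal.ofReal (2 * min δ 1) ^ m := by
  obtain ⟨b, hb0⟩ := exists_onb m hω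
  rw [Measure.toSphere_apply' _ (measurableSet_cap _ ω δ), finrank_euclideanSpace_fin]
  have hsub : Ioo (0:ℝ) 1 • (Subtype.val '' cap (m+1) ω δ)
      ⊆ {y : En (m+1) | ∀ i, |(inner (𝕜 := ℝ) (b i) y : ℝ)|
          < (if i = 0 then 1 else min δ 1)} := by
    intro y hy
    rw [sector_eq] at hy
    obtain ⟨s, hs0, hs1, v, hv1, hvδ, rfl⟩ := hy
    have hsv : ∀ w : En (m+1), ‖w‖ = 1 → |(inner (𝕜 := ℝ) w (s • v) : ℝ)| ≤ s := by
      intro w hw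
      rw [real_inner_smul_right, abs_mul, abs_of_pos hs0]
      have h1 := abs_real_inner_le_norm w v
      rw [hw, hv1, one_mul] at h1
      nlinarith
    intro i
    by_cases hi : i = 0
    · subst hi
      rw [if_pos rfl, hb0]
      exact lt_of_le_of_lt (hsv ω hω) hs1
    · rw [if_neg hi]
      refine lt_min ?_ (lt_of_le_of_lt (hsv (b i) (b.orthonormal.1 i)) hs1)
      have hbo : (inner (𝕜 := ℝ) (b i) ω : ℝ) = 0 := by rw [← hb0]; exact b.orthonormal.2 hi
      have heq : (inner (𝕜 := ℝ) (b i) (s • v) : ℝ)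
          = s * (inner (𝕜 := ℝ) (b i) (v - ω) : ℝ) := by
        rw [real_inner_smul_right, inner_sub_right, hbo, sub_zero]
      rw [heq, abs_mul, abs_of_pos hs0]
      have h2 : |(inner (𝕜 := ℝ) (b i) (v - ω) : ℝ)| ≤ ‖v - ω‖ := by
        have := abs_real_inner_le_norm (b i) (v - ω)
        rwa [b.orthonormal.1 i, one_mul] at this
      calc s * |(inner (𝕜 := ℝ) (b i) (v - ω) : ℝ)| ≤ 1 * ‖v - ω‖ := by
            apply mul_le_mul hs1.le h2 (abs_nonneg _) zero_le_one
        _ < δ := by rw [one_mul]; exact hvδ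
  calc ((m+1 : ℕ) : ℝ≥0∞) * volume (Ioo (0:ℝ) 1 • (Subtype.val '' cap (m+1) ω δ))
      ≤ ((m+1 : ℕ) : ℝ≥0∞) * volume {y : En (m+1) | ∀ i, |(inner (𝕜 := ℝ) (b i) y : ℝ)|
          < (if i = 0 then 1 else min δ 1)} := mul_le_mul_right (measure_mono hsub) _
    _ = ((m+1 : ℕ) : ℝ≥0∞) * (ENNReal.ofReal (2*1) * ENNReal.ofReal (2 * min δ 1) ^ m) := by
        rw [volume_innerBox b _, prod_box_eval]
    _ = ENNReal.ofReal (2 * (m+1)) * ENNReal.ofReal (2 * min δ 1) ^ m := by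
        rw [← mul_assoc]
        congr 1
        rw [← ENNReal.ofReal_natCast (m+1), ← ENNReal.ofReal_mul (by positivity)]
        congr 1
        push_cast
        ring

end RhoBall
namespace RhoBall

lemma toSphere_cap_ge (m : ℕ) {ω : En (m+1)} (hω : ‖ω‖ = 1) {δ : ℝ}
    (hδ0 : 0 < δ) (hδ1 : δ ≤ 1) :
    ENNReal.ofReal ((m+1) * (1/4)) * ENNReal.ofReal (δ / (4 * Real.sqrt (m+1))) ^ m
      ≤ (volume : Measure (En (m+1))).toSphere (cap (m+1) ω δ) := by
  obtain ⟨b, hb0⟩ := exists_onb m hω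
  have hsq : (0:ℝ) < Real.sqrt (m+1) := Real.sqrt_pos.mpr (by positivity)
  have hsq1 : (1:ℝ) ≤ Real.sqrt (m+1) := by
    nlinarith [Real.sq_sqrt (show (0:ℝ) ≤ (m:ℝ)+1 by positivity), hsq]
  set cen : En (m+1) := (5/8 : ℝ) • ω with hcen
  have hωω : (inner (𝕜 := ℝ) ω ω : ℝ) = 1 := by
    rw [real_inner_self_eq_norm_mul_norm, hω, one_mul]
  have hsub : {y : En (m+1) | ∀ i, |(inner (𝕜 := ℝ) (b i) (y - cen) : ℝ)|
        < (if i = 0 then 1/8 else δ / (8 * Real.sqrt (m+1)))}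
      ⊆ Ioo (0:ℝ) 1 • (Subtype.val '' cap (m+1) ω δ) := by
    intro y hy
    set p : ℝ := (inner (𝕜 := ℝ) ω y : ℝ) with hp
    have h0 : (inner (𝕜 := ℝ) (b 0) (y - cen) : ℝ) = p - 5/8 := by
      rw [hb0, inner_sub_right, hcen, real_inner_smul_right, hωω]
      ring
    have hp38 : 1/2 < p ∧ p < 3/4 := by
      have := hy 0
      rw [if_pos rfl, h0, abs_lt] at this
      constructor <;> linarith [this.1, this.2]
    set e : En (m+1) := y - p • ω with he
    have hec : ∀ i, |(inner (𝕜 := ℝ) (b i) e : ℝ)| ≤ δ / (8 * Real.sqrt (m+1)) := by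
      intro i
      by_cases hi : i = 0
      · subst hi
        have : (inner (𝕜 := ℝ) (b 0) e : ℝ) = 0 := by
          rw [hb0, he, inner_sub_right, real_inner_smul_right, hωω, hp]
          ring
        rw [this, abs_zero]
        positivity
      · have hbo : (inner (𝕜 := ℝ) (b i) ω : ℝ) = 0 := by
          rw [← hb0]; exact b.orthonormal.2 hi
        have h1 : (inner (𝕜 := ℝ) (b i) e : ℝ) = (inner (𝕜 := ℝ) (b i) (y - cen) : ℝ) := by
          rw [he, inner_sub_right, inner_sub_right, hcen, real_inner_smul_right,
            real_inner_smul_right, hbo]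
          ring
        rw [h1]
        have := hy i
        rw [if_neg hi] at this
        exact this.le
    have henorm : ‖e‖ ≤ δ/8 := by
      have h2 := norm_le_sqrt_mul b e (by positivity) hec
      have h3 : Real.sqrt ((m:ℝ)+1) * (δ / (8 * Real.sqrt ((m:ℝ)+1))) = δ/8 := by
        field_simp
      push_cast at h2
      rw [h3] at h2
      exact h2
    have hysplit : y = p • ω + e := by rw [he]; abel
    have hyub : ‖y‖ ≤ p + ‖e‖ := by
      calc ‖y‖ = ‖p • ω + e‖ := by rw [← hysplit]
        _ ≤ ‖p • ω‖ + ‖e‖ := norm_add_le _ _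
        _ = p + ‖e‖ := by rw [norm_smul, Real.norm_eq_abs, hω, mul_one,
            abs_of_pos (by linarith [hp38.1])]
    have hylb : p ≤ ‖y‖ := by
      have := real_inner_le_norm ω y
      rwa [hω, one_mul] at this
    have hy0 : 0 < ‖y‖ := lt_of_lt_of_le (by linarith [hp38.1]) hylb
    have hy1 : ‖y‖ < 1 := by
      have : δ/8 ≤ 1/8 := by linarith
      linarith [hp38.2]
    rw [sector_eq]
    refine ⟨‖y‖, hy0, hy1, ‖y‖⁻¹ • y, ?_, ?_, ?_⟩
    · rw [norm_smul, Real.norm_eq_abs, abs_of_pos (by positivity), inv_mul_cancel₀ hy0.ne']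
    · have hrw : ‖y‖⁻¹ • y - ω = ‖y‖⁻¹ • (y - ‖y‖ • ω) := by
        rw [smul_sub, smul_smul, inv_mul_cancel₀ hy0.ne', one_smul]
      have hdiff : ‖y - ‖y‖ • ω‖ ≤ 2 * ‖e‖ := by
        have h4 : y - ‖y‖ • ω = e + (p - ‖y‖) • ω := by
          rw [he, sub_smul]; abel
        have h5 : |p - ‖y‖| ≤ ‖e‖ := by
          rw [abs_le]; constructor <;> [linarith [hyub]; linarith [hylb, norm_nonneg e]]
        calc ‖y - ‖y‖ • ω‖ = ‖e + (p - ‖y‖) • ω‖ := by rw [h4]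
          _ ≤ ‖e‖ + ‖(p - ‖y‖) • ω‖ := norm_add_le _ _
          _ = ‖e‖ + |p - ‖y‖| := by rw [norm_smul, Real.norm_eq_abs, hω, mul_one]
          _ ≤ 2 * ‖e‖ := by linarith
      have hinv : ‖y‖⁻¹ ≤ 2 := by
        rw [show (2:ℝ) = (2⁻¹)⁻¹ by norm_num]
        exact inv_anti₀ (by norm_num) (by linarith [hp38.1, hylb])
      rw [hrw, norm_smul, Real.norm_eq_abs, abs_of_pos (by positivity)]
      calc ‖y‖⁻¹ * ‖y - ‖y‖ • ω‖ ≤ 2 * (2 * ‖e‖) := by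
            apply mul_le_mul hinv hdiff (norm_nonneg _) (by norm_num)
        _ ≤ 4 * (δ/8) := by linarith
        _ < δ := by linarith
    · rw [smul_inv_smul₀ hy0.ne']
  calc ENNReal.ofReal ((m+1) * (1/4)) * ENNReal.ofReal (δ / (4 * Real.sqrt (m+1))) ^ m
      = ((m+1 : ℕ) : ℝ≥0∞) * (ENNReal.ofReal (2*(1/8))
          * ENNReal.ofReal (2 * (δ / (8 * Real.sqrt (m+1)))) ^ m) := by
        rw [← ENNReal.ofReal_natCast (m+1)]
        rw [← mul_assoc, ← ENNReal.ofReal_mul (by positivity)]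
        have e1 : (2:ℝ) * (δ / (8 * Real.sqrt (m+1))) = δ / (4 * Real.sqrt (m+1)) := by
          field_simp; ring
        rw [e1]
        congr 2
        push_cast
        ring
    _ = ((m+1 : ℕ) : ℝ≥0∞) * volume {y : En (m+1) | ∀ i, |(inner (𝕜 := ℝ) (b i) (y - cen) : ℝ)|
          < (if i = 0 then 1/8 else δ / (8 * Real.sqrt (m+1)))} := by
        rw [volume_innerBox_shift b cen _, prod_box_eval]
    _ ≤ ((m+1 : ℕ) : ℝ≥0∞) * volume (Ioo (0:ℝ) 1 • (Subtype.val '' cap (m+1) ω δ)) :=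
        mul_le_mul_right (measure_mono hsub) _
    _ = (volume : Measure (En (m+1))).toSphere (cap (m+1) ω δ) := by
        rw [Measure.toSphere_apply' _ (measurableSet_cap _ ω δ), finrank_euclideanSpace_fin]

end RhoBall
namespace RhoBall

lemma K_pos (m : ℕ) : 0 < (volume : Measure (En (m+1))).toSphere Set.univ := by
  rw [Measure.toSphere_apply_univ, finrank_euclideanSpace_fin]
  refine ENNReal.mul_pos (by simp) ?_
  exact (measure_ball_pos volume (0 : En (m+1)) one_pos).ne'

lemma K_ne_top (m : ℕ) : (volume : Measure (En (m+1))).toSphere Set.univ ≠ ⊤ :=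
  measure_ne_top _ _

lemma sphMeasure_apply (m : ℕ) (s : Set (Sph (m+1))) :
    sphMeasure (m+1) s
      = ((volume : Measure (En (m+1))).toSphere Set.univ)⁻¹
          * (volume : Measure (En (m+1))).toSphere s := by
  rw [sphMeasure, Measure.smul_apply, smul_eq_mul]

lemma sphMeasure_univ (m : ℕ) : sphMeasure (m+1) Set.univ = 1 := by
  rw [sphMeasure_apply, ENNReal.inv_mul_cancel (K_pos m).ne' (K_ne_top m)]

lemma isFiniteMeasure_sphMeasure (m : ℕ) : IsFiniteMeasure (sphMeasure (m+1)) :=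
  ⟨by rw [sphMeasure_univ]; exact ENNReal.one_lt_top⟩

lemma hk_inv (m : ℕ) :
    ((volume : Measure (En (m+1))).toSphere Set.univ)⁻¹
      = ENNReal.ofReal (((volume : Measure (En (m+1))).toSphere Set.univ).toReal⁻¹) := by
  rw [ENNReal.ofReal_inv_of_pos (ENNReal.toReal_pos (K_pos m).ne' (K_ne_top m)),
    ENNReal.ofReal_toReal (K_ne_top m)]

end RhoBall
namespace RhoBall

lemma muS_rball_le (m : ℕ) (a : CoSph (m+1)) {τ : ℝ} (hτ : 0 < τ) :
    muS (m+1) (rball a τ)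
      ≤ ENNReal.ofReal
          ((((volume : Measure (En (m+1))).toSphere Set.univ).toReal⁻¹ *
            (2*((m:ℝ)+1) * 2 * 2^m * 2^m)) * (τ^(m+1) * (min τ 1)^(m+1))) := by
  haveI := isFiniteMeasure_sphMeasure m
  set ω : En (m+1) := (a.2 : En (m+1)) with hωdef
  have hω : ‖ω‖ = 1 := mem_sphere_zero_iff_norm.mp a.2.2
  obtain ⟨b, hb0⟩ := exists_onb m hω
  set mn : ℝ := min τ 1 with hmn
  have hmn0 : 0 < mn := lt_min hτ one_pos
  set S : Set (En (m+1)) := {y | ∀ i, |(inner (𝕜 := ℝ) (b i) (y - a.1) : ℝ)|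
      < (if i = 0 then τ * mn else τ)} with hS
  have hsub : rball a τ ⊆ S ×ˢ cap (m+1) ω τ := by
    rintro ⟨y, ν⟩ h
    have h' : |(inner (𝕜 := ℝ) ω (a.1 - y) : ℝ)| + ‖a.1 - y‖^2 + ‖ω - (ν : En (m+1))‖^2
        < τ^2 := by
      have := (Real.sqrt_lt' hτ).mp h
      exact this
    have hA0 : 0 ≤ |(inner (𝕜 := ℝ) ω (a.1 - y) : ℝ)| := abs_nonneg _
    have hB0 : (0:ℝ) ≤ ‖a.1 - y‖^2 := sq_nonneg _
    have hC0 : (0:ℝ) ≤ ‖ω - (ν : En (m+1))‖^2 := sq_nonneg _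
    have hB : ‖a.1 - y‖ < τ := lt_of_pow_lt_pow_left₀ 2 hτ.le (by linarith)
    have hC : ‖ω - (ν : En (m+1))‖ < τ := lt_of_pow_lt_pow_left₀ 2 hτ.le (by linarith)
    constructor
    · intro i
      have hneg : ∀ w : En (m+1), |(inner (𝕜 := ℝ) w (y - a.1) : ℝ)|
          = |(inner (𝕜 := ℝ) w (a.1 - y) : ℝ)| := by
        intro w
        rw [show y - a.1 = -(a.1 - y) by abel, inner_neg_right, abs_neg]
      by_cases hi : i = 0
      · subst hi
        rw [if_pos rfl, hb0, hneg, mul_min_of_nonneg _ _ hτ.le, mul_one]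
        refine lt_min (by nlinarith) ?_
        calc |(inner (𝕜 := ℝ) ω (a.1 - y) : ℝ)| ≤ ‖ω‖ * ‖a.1 - y‖ :=
              abs_real_inner_le_norm _ _
          _ < τ := by rw [hω, one_mul]; exact hB
      · rw [if_neg hi, hneg]
        calc |(inner (𝕜 := ℝ) (b i) (a.1 - y) : ℝ)| ≤ ‖b i‖ * ‖a.1 - y‖ :=
              abs_real_inner_le_norm _ _
          _ < τ := by rw [b.orthonormal.1 i, one_mul]; exact hB
    · show ‖(ν : En (m+1)) - ω‖ < τ
      rwa [norm_sub_rev]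
  calc muS (m+1) (rball a τ) ≤ muS (m+1) (S ×ˢ cap (m+1) ω τ) := measure_mono hsub
    _ = volume S * sphMeasure (m+1) (cap (m+1) ω τ) := by
        unfold muS; exact Measure.prod_prod _ _
    _ ≤ (ENNReal.ofReal (2*(τ*mn)) * ENNReal.ofReal (2*τ)^m) *
          (ENNReal.ofReal (((volume : Measure (En (m+1))).toSphere Set.univ).toReal⁻¹) *
            (ENNReal.ofReal (2*((m:ℝ)+1)) * ENNReal.ofReal (2 * mn)^m)) := by
        refine mul_le_mul ?_ ?_ zero_le zero_le
        · rw [hS, volume_innerBox_shift b a.1 _, prod_box_eval]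
        · rw [sphMeasure_apply, hk_inv]
          refine mul_le_mul_right ?_ _
          exact toSphere_cap_le m hω hτ
    _ ≤ ENNReal.ofReal
          ((((volume : Measure (En (m+1))).toSphere Set.univ).toReal⁻¹ *
            (2*((m:ℝ)+1) * 2 * 2^m * 2^m)) * (τ^(m+1) * mn^(m+1))) := by
        rw [← ENNReal.ofReal_pow (by positivity), ← ENNReal.ofReal_pow (by positivity),
          ← ENNReal.ofReal_mul (by positivity), ← ENNReal.ofReal_mul (by positivity),
          ← ENNReal.ofReal_mul (by positivity), ← ENNReal.ofReal_mul (by positivity)]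
        apply ENNReal.ofReal_le_ofReal
        apply le_of_eq
        ring

end RhoBall
namespace RhoBall

set_option maxHeartbeats 1000000 in
lemma muS_rball_ge (m : ℕ) (a : CoSph (m+1)) {τ : ℝ} (hτ : 0 < τ) :
    ENNReal.ofReal
        ((((volume : Measure (En (m+1))).toSphere Set.univ).toReal⁻¹ *
          (((m:ℝ)+1)/4 * (1/(8*Real.sqrt ((m:ℝ)+1))) * (1/(8*Real.sqrt ((m:ℝ)+1)))^m *
            (1/(8*Real.sqrt ((m:ℝ)+1)))^m)) * (τ^(m+1) * (min τ 1)^(m+1)))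
      ≤ muS (m+1) (rball a τ) := by
  haveI := isFiniteMeasure_sphMeasure m
  set ω : En (m+1) := (a.2 : En (m+1)) with hωdef
  have hω : ‖ω‖ = 1 := mem_sphere_zero_iff_norm.mp a.2.2
  obtain ⟨b, hb0⟩ := exists_onb m hω
  set s : ℝ := Real.sqrt ((m:ℝ)+1) with hsdef
  have hs0 : 0 < s := Real.sqrt_pos.mpr (by positivity)
  have hs1 : 1 ≤ s := by
    nlinarith [Real.sq_sqrt (show (0:ℝ) ≤ (m:ℝ)+1 by positivity), hs0]
  set mn : ℝ := min τ 1 with hmn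
  have hmn0 : 0 < mn := lt_min hτ one_pos
  have hmnτ : mn ≤ τ := min_le_left _ _
  have hmn1 : mn ≤ 1 := min_le_right _ _
  set S : Set (En (m+1)) := {y | ∀ i, |(inner (𝕜 := ℝ) (b i) (y - a.1) : ℝ)|
      < (if i = 0 then τ * mn / (16*s) else τ / (16*s))} with hS
  have hsub : S ×ˢ cap (m+1) ω (mn/2) ⊆ rball a τ := by
    rintro ⟨y, ν⟩ ⟨hy, hν⟩
    show Real.sqrt (|(inner (𝕜 := ℝ) ω (a.1 - y) : ℝ)| + ‖a.1 - y‖^2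
        + ‖ω - (ν : En (m+1))‖^2) < τ
    rw [Real.sqrt_lt' hτ]
    have hA : |(inner (𝕜 := ℝ) ω (a.1 - y) : ℝ)| < τ^2/8 := by
      have h0 := hy 0
      rw [if_pos rfl, hb0] at h0
      have hneg : |(inner (𝕜 := ℝ) ω (a.1 - y) : ℝ)|
          = |(inner (𝕜 := ℝ) ω (y - a.1) : ℝ)| := by
        rw [show a.1 - y = -(y - a.1) by abel, inner_neg_right, abs_neg]
      rw [hneg]
      calc |(inner (𝕜 := ℝ) ω (y - a.1) : ℝ)| < τ * mn / (16*s) := h0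
        _ ≤ τ * τ / 8 := by
            rw [div_le_div_iff₀ (by positivity) (by norm_num)]
            nlinarith
        _ = τ^2/8 := by ring
    have hB : ‖a.1 - y‖ ≤ τ/16 := by
      rw [norm_sub_rev]
      have hbd : ∀ i, |(inner (𝕜 := ℝ) (b i) (y - a.1) : ℝ)| ≤ τ/(16*s) := by
        intro i
        by_cases hi : i = 0
        · subst hi
          have h0 := hy 0
          rw [if_pos rfl] at h0
          refine h0.le.trans ((div_le_div_iff_of_pos_right (by positivity)).mpr (by nlinarith))
        · have h0 := hy i
          rw [if_neg hi] at h0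
          exact h0.le
      have := norm_le_sqrt_mul b (y - a.1) (by positivity) hbd
      have hcast : Real.sqrt ((m+1 : ℕ) : ℝ) = s := by rw [hsdef]; push_cast; ring_nf
      rw [hcast] at this
      calc ‖y - a.1‖ ≤ s * (τ/(16*s)) := this
        _ = τ/16 := by field_simp
    have hC : ‖ω - (ν : En (m+1))‖^2 < τ^2/4 := by
      have hν' : ‖(ν : En (m+1)) - ω‖ < mn/2 := hν
      rw [norm_sub_rev]
      calc ‖(ν : En (m+1)) - ω‖^2 < (mn/2)^2 :=
            pow_lt_pow_left₀ hν' (norm_nonneg _) (by norm_num)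
        _ ≤ τ^2/4 := by nlinarith
    have hB2 : ‖a.1 - y‖^2 ≤ τ^2/256 := by nlinarith [norm_nonneg (a.1 - y)]
    nlinarith
  calc ENNReal.ofReal
        ((((volume : Measure (En (m+1))).toSphere Set.univ).toReal⁻¹ *
          (((m:ℝ)+1)/4 * (1/(8*s)) * (1/(8*s))^m * (1/(8*s))^m)) * (τ^(m+1) * mn^(m+1)))
      ≤ (ENNReal.ofReal (2*(τ*mn/(16*s))) * ENNReal.ofReal (2*(τ/(16*s)))^m) *
          (ENNReal.ofReal (((volume : Measure (En (m+1))).toSphere Set.univ).toReal⁻¹) *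
            (ENNReal.ofReal (((m:ℝ)+1) * (1/4)) * ENNReal.ofReal ((mn/2) / (4*s))^m)) := by
        rw [show 2*(τ*mn/(16*s)) = τ*mn/(8*s) by ring,
          show 2*(τ/(16*s)) = τ/(8*s) by ring,
          show (mn/2)/(4*s) = mn/(8*s) by ring]
        rw [← ENNReal.ofReal_pow (by positivity), ← ENNReal.ofReal_pow (by positivity),
          ← ENNReal.ofReal_mul (by positivity), ← ENNReal.ofReal_mul (by positivity),
          ← ENNReal.ofReal_mul (by positivity), ← ENNReal.ofReal_mul (by positivity)]
        apply ENNReal.ofReal_le_ofReal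
        apply le_of_eq
        field_simp
        ring
    _ ≤ volume S * sphMeasure (m+1) (cap (m+1) ω (mn/2)) := by
        refine mul_le_mul ?_ ?_ zero_le zero_le
        · rw [hS, volume_innerBox_shift b a.1, prod_box_eval]
        · rw [sphMeasure_apply, hk_inv]
          refine mul_le_mul_right ?_ _
          exact toSphere_cap_ge m hω (by positivity) (by linarith)
    _ = muS (m+1) (S ×ˢ cap (m+1) ω (mn/2)) := by
        unfold muS; exact (Measure.prod_prod _ _).symm
    _ ≤ muS (m+1) (rball a τ) := measure_mono hsub

end RhoBall
namespace RhoBall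

lemma two_sided (m : ℕ) : ∃ c1 c2 : ℝ, 0 < c1 ∧ 0 < c2 ∧
    ∀ (a : CoSph (m+1)) (τ : ℝ), 0 < τ →
      ENNReal.ofReal (c1 * (τ^(m+1) * (min τ 1)^(m+1))) ≤ muS (m+1) (rball a τ) ∧
      muS (m+1) (rball a τ) ≤ ENNReal.ofReal (c2 * (τ^(m+1) * (min τ 1)^(m+1))) := by
  have hk : 0 < ((volume : Measure (En (m+1))).toSphere Set.univ).toReal :=
    ENNReal.toReal_pos (K_pos m).ne' (K_ne_top m)
  have hs0 : (0:ℝ) < Real.sqrt ((m:ℝ)+1) := Real.sqrt_pos.mpr (by positivity)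
  refine ⟨(((volume : Measure (En (m+1))).toSphere Set.univ).toReal⁻¹ *
          (((m:ℝ)+1)/4 * (1/(8*Real.sqrt ((m:ℝ)+1))) * (1/(8*Real.sqrt ((m:ℝ)+1)))^m *
            (1/(8*Real.sqrt ((m:ℝ)+1)))^m)),
    (((volume : Measure (En (m+1))).toSphere Set.univ).toReal⁻¹ *
          (2*((m:ℝ)+1) * 2 * 2^m * 2^m)), by positivity, by positivity, fun a τ hτ =>
    ⟨muS_rball_ge m a hτ, muS_rball_le m a hτ⟩⟩

end RhoBall
/-- For radii τ ≥ 1, balls in the quasi-metric ρ on ℝⁿ × S^{n-1} have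
measure comparable to τⁿ; consequently |B_{λτ}| ≤ C² λ^{2n} |B_τ| for all τ > 0 and λ ≥ 1,
so (S*, ρ, dx dω) is doubling. -/
theorem measure_rball_ge_one_and_doubling (n : ℕ) (hn : 2 ≤ n) :
    ∃ C : ℝ, 0 < C ∧
      (∀ (a : CoSph n) (τ : ℝ), 1 ≤ τ →
        ENNReal.ofReal (C⁻¹ * τ ^ n) ≤ muS n (rball a τ) ∧
        muS n (rball a τ) ≤ ENNReal.ofReal (C * τ ^ n)) ∧
      (∀ (a : CoSph n) (τ lam : ℝ), 0 < τ → 1 ≤ lam →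
        muS n (rball a (lam * τ)) ≤ ENNReal.ofReal (C ^ 2 * lam ^ (2 * n)) * muS n (rball a τ)) := by
  obtain ⟨m, rfl⟩ : ∃ m, n = m + 1 := ⟨n - 1, by omega⟩
  obtain ⟨c1, c2, hc1p, hc2p, H⟩ := RhoBall.two_sided m
  set C : ℝ := max (max c2 c1⁻¹) 1 with hC
  have hCc2 : c2 ≤ C := le_trans (le_max_left _ _) (le_max_left _ _)
  have hCc1 : c1⁻¹ ≤ C := le_trans (le_max_right _ _) (le_max_left _ _)
  have hC1 : (1:ℝ) ≤ C := le_max_right _ _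
  have hCpos : (0:ℝ) < C := lt_of_lt_of_le one_pos hC1
  have hCinv : C⁻¹ ≤ c1 := by
    have := inv_anti₀ (by positivity) hCc1
    rwa [inv_inv] at this
  refine ⟨C, hCpos, ?_, ?_⟩
  · intro a τ hτ1
    have hτ : 0 < τ := lt_of_lt_of_le one_pos hτ1
    obtain ⟨h1, h2⟩ := H a τ hτ
    rw [min_eq_right hτ1, one_pow, mul_one] at h1 h2
    constructor
    · refine le_trans (ENNReal.ofReal_le_ofReal ?_) h1
      exact mul_le_mul_of_nonneg_right hCinv (pow_nonneg hτ.le _)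
    · refine le_trans h2 (ENNReal.ofReal_le_ofReal ?_)
      exact mul_le_mul_of_nonneg_right hCc2 (pow_nonneg hτ.le _)
  · intro a τ lam hτ hlam
    have hlam0 : 0 < lam := lt_of_lt_of_le one_pos hlam
    have hlt : 0 < lam * τ := by positivity
    obtain ⟨hg, -⟩ := H a τ hτ
    obtain ⟨-, hu⟩ := H a (lam * τ) hlt
    have hmn0 : (0:ℝ) < min τ 1 := lt_min hτ one_pos
    have hL0 : (0:ℝ) ≤ min (lam*τ) 1 := le_of_lt (lt_min hlt one_pos)
    have hL : min (lam*τ) 1 ≤ lam * min τ 1 := by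
      rcases le_total τ 1 with h | h
      · rw [min_eq_left h]; exact min_le_left _ _
      · rw [min_eq_right h, mul_one]; exact le_trans (min_le_right _ _) hlam
    have hc2C : c2 ≤ C^2 * c1 := by
      have hCC : c2 * c1⁻¹ ≤ C * C := mul_le_mul hCc2 hCc1 (by positivity) hCpos.le
      have h3 := mul_le_mul_of_nonneg_right hCC hc1p.le
      rw [mul_assoc, inv_mul_cancel₀ hc1p.ne', mul_one] at h3
      nlinarith
    have hreal : c2 * ((lam*τ)^(m+1) * (min (lam*τ) 1)^(m+1))
        ≤ (C^2 * lam^(2*(m+1))) * (c1 * (τ^(m+1) * (min τ 1)^(m+1))) := by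
      have h1 : (min (lam*τ) 1)^(m+1) ≤ (lam * min τ 1)^(m+1) :=
        pow_le_pow_left₀ hL0 hL _
      calc c2 * ((lam*τ)^(m+1) * (min (lam*τ) 1)^(m+1))
          ≤ c2 * ((lam*τ)^(m+1) * (lam * min τ 1)^(m+1)) := by
            refine mul_le_mul_of_nonneg_left (mul_le_mul_of_nonneg_left h1 ?_) hc2p.le
            positivity
        _ ≤ (C^2 * c1) * ((lam*τ)^(m+1) * (lam * min τ 1)^(m+1)) := by
            refine mul_le_mul_of_nonneg_right hc2C ?_
            have : (0:ℝ) ≤ (lam * min τ 1)^(m+1) := pow_nonneg (by positivity) _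
            positivity
        _ = (C^2 * lam^(2*(m+1))) * (c1 * (τ^(m+1) * (min τ 1)^(m+1))) := by ring
    calc muS (m+1) (rball a (lam * τ)) ≤ _ := hu
      _ ≤ ENNReal.ofReal ((C^2 * lam^(2*(m+1))) * (c1 * (τ^(m+1) * (min τ 1)^(m+1)))) :=
          ENNReal.ofReal_le_ofReal hreal
      _ = ENNReal.ofReal (C^2 * lam^(2*(m+1))) *
            ENNReal.ofReal (c1 * (τ^(m+1) * (min τ 1)^(m+1))) := by
          rw [ENNReal.ofReal_mul (by positivity)]
      _ ≤ ENNReal.ofReal (C^2 * lam^(2*(m+1))) * muS (m+1) (rball a τ) :=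
          mul_le_mul_right hg _
end
end

section
/- Suppose η ∈ C_c^∞(ℝⁿ) satisfies, for some ω ∈ S^{n-1}, σ ∈ (0,1), and all multi-indices α and integers β ≥ 0, the bounds |(ω·∂_ξ)^β ∂_ξ^α η(ξ)| ≤ C_{α,β} σ^{-(n-1)/4 + |α|/2 + β}, and supp(η) ⊆ {ξ : (1/2)σ^{-1} ≤ |ξ| ≤ 2σ^{-1}, |ξ/|ξ| - ω| ≤ 2√σ}. Then for every N ≥ 0 there exists C_N ≥ 0, depending only on N, n and the constants C_{α,β}, such that |ℱ^{-1}η(x)| ≤ C_N σ^{-(3n+1)/4}(1 + σ^{-1}|x|² + σ^{-2}(ω·x)²)^{-N} for all x ∈ ℝⁿ. -/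
set_option maxHeartbeats 1000000


open MeasureTheory Set
open scoped ENNReal FourierTransform

noncomputable section

/-- Directional derivative of f in direction v. -/
def dirDeriv {n : ℕ} (v : En n) (f : En n → ℂ) : En n → ℂ := fun x => fderiv ℝ f x v

/-- Iterated directional derivatives along a list of directions. -/
def multiDeriv {n : ℕ} (L : List (En n)) (f : En n → ℂ) : En n → ℂ := L.foldr dirDeriv f

section Aux

open Real
open scoped RealInnerProductSpace

variable {n : ℕ}

lemma dirDeriv_contDiff {f : En n → ℂ} (hf : ContDiff ℝ (⊤ : ℕ∞) f) (v : En n) :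
    ContDiff ℝ (⊤ : ℕ∞) (dirDeriv v f) :=
  (hf.fderiv_right (by simp)).clm_apply contDiff_const

lemma tsupport_dirDeriv {f : En n → ℂ} (v : En n) :
    tsupport (dirDeriv v f) ⊆ tsupport f := by
  apply closure_minimal _ isClosed_closure
  intro x hx
  have : fderiv ℝ f x ≠ 0 := by
    intro h
    simp [dirDeriv, h] at hx
  exact support_fderiv_subset ℝ (by simpa [Function.mem_support] using this)

lemma multiDeriv_contDiff {f : En n → ℂ} (hf : ContDiff ℝ (⊤ : ℕ∞) f) (L : List (En n)) :
    ContDiff ℝ (⊤ : ℕ∞) (multiDeriv L f) := by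
  induction L with
  | nil => exact hf
  | cons v L ih => exact dirDeriv_contDiff ih v

lemma tsupport_multiDeriv {f : En n → ℂ} (L : List (En n)) :
    tsupport (multiDeriv L f) ⊆ tsupport f := by
  induction L with
  | nil => exact subset_rfl
  | cons v L ih => exact (tsupport_dirDeriv v).trans ih

lemma multiDeriv_hasCompactSupport {f : En n → ℂ} (hf : HasCompactSupport f)
    (L : List (En n)) : HasCompactSupport (multiDeriv L f) :=
  hf.of_isClosed_subset isClosed_closure (tsupport_multiDeriv L)

lemma fourier_dirDeriv {f : En n → ℂ} (hf : ContDiff ℝ (⊤ : ℕ∞) f) (hs : HasCompactSupport f)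
    (v w : En n) :
    𝓕 (dirDeriv v f) w = (2 * π * Complex.I * (⟪w, v⟫ : ℝ)) * 𝓕 f w := by
  have h1 : Integrable f := hf.continuous.integrable_of_hasCompactSupport hs
  have hdc : Continuous (fderiv ℝ f) := ((hf.fderiv_right (m := (⊤ : ℕ∞)) (by simp))).continuous
  have hds : HasCompactSupport (fderiv ℝ f) := HasCompactSupport.fderiv (𝕜 := ℝ) hs
  have hdi : Integrable (fderiv ℝ f) := hdc.integrable_of_hasCompactSupport hds
  have key := Real.fourier_fderiv h1 (hf.differentiable (by simp)) hdi
  have happ : 𝓕 (fderiv ℝ f) w v = 𝓕 (dirDeriv v f) w := by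
    exact Real.fourier_continuousLinearMap_apply hdi
  rw [← happ, key]
  simp [VectorFourier.fourierSMulRight_apply]
  rw [show (innerSL ℝ w) v = ⟪w, v⟫ from rfl]
  ring

lemma norm_fourier_multiDeriv_replicate {f : En n → ℂ} (hf : ContDiff ℝ (⊤ : ℕ∞) f)
    (hs : HasCompactSupport f) (m : ℕ) (v w : En n) :
    ‖𝓕 (multiDeriv (List.replicate m v) f) w‖ = (2 * π * |⟪w, v⟫|) ^ m * ‖𝓕 f w‖ := by
  induction m with
  | zero => simp [multiDeriv]
  | succ m ih =>
    have h1 : multiDeriv (List.replicate (m+1) v) f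
        = dirDeriv v (multiDeriv (List.replicate m v) f) := rfl
    rw [h1, fourier_dirDeriv (multiDeriv_contDiff hf _) (multiDeriv_hasCompactSupport hs _),
      norm_mul, ih]
    have h2 : (2 * (π:ℂ) * Complex.I * ((⟪w, v⟫ : ℝ) : ℂ))
        = ((2*π : ℝ) : ℂ) * Complex.I * ((⟪w, v⟫ : ℝ) : ℂ) := by push_cast; ring
    have : ‖(2 * (π:ℂ) * Complex.I * ((⟪w, v⟫ : ℝ) : ℂ))‖ = 2 * π * |⟪w, v⟫| := by
      rw [h2, norm_mul, norm_mul, Complex.norm_I, Complex.norm_real, Complex.norm_real,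
        mul_one, Real.norm_eq_abs, Real.norm_eq_abs, abs_of_pos Real.two_pi_pos]
    rw [this]
    ring

lemma fourier_norm_le_vol_mul_sup {g : En n → ℂ} {B : Set (En n)} {M : ℝ}
    (hsupp : Function.support g ⊆ B) (hB : volume B < ∞)
    (hM : ∀ ξ, ‖g ξ‖ ≤ M) (w : En n) :
    ‖𝓕 g w‖ ≤ M * (volume B).toReal := by
  rw [Real.fourier_eq]
  have hvanish : ∀ ξ, ξ ∉ B → 𝐞 (-⟪ξ, w⟫) • g ξ = 0 := by
    intro ξ hξ
    have : g ξ = 0 := by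
      by_contra h
      exact hξ (hsupp h)
    simp [this]
  rw [← setIntegral_eq_integral_of_forall_compl_eq_zero hvanish]
  apply norm_setIntegral_le_of_norm_le_const_ae hB
  filter_upwards with ξ
  calc ‖𝐞 (-⟪ξ, w⟫) • g ξ‖ = ‖g ξ‖ := by simp [Circle.smul_def, Circle.norm_coe]
    _ ≤ M := hM ξ

lemma volume_box (b : OrthonormalBasis (Fin n) ℝ (En n)) (r : Fin n → ℝ) :
    volume {ξ : En n | ∀ i, |⟪b i, ξ⟫| ≤ r i} = ∏ i, ENNReal.ofReal (2 * r i) := by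
  have hQ : {ξ : En n | ∀ i, |⟪b i, ξ⟫| ≤ r i}
      = b.repr ⁻¹' (((MeasurableEquiv.toLp 2 (Fin n → ℝ)).symm) ⁻¹'
        (Set.univ.pi fun i => Icc (-(r i)) (r i))) := by
    ext ξ
    simp only [Set.mem_setOf_eq, Set.mem_preimage, Set.mem_pi, Set.mem_univ, forall_true_left,
      Set.mem_Icc]
    constructor
    · intro h i
      have := h i
      rw [abs_le] at this
      simpa [MeasurableEquiv.coe_toLp_symm, ← b.repr_apply_apply] using this
    · intro h i
      rw [abs_le]
      simpa [MeasurableEquiv.coe_toLp_symm, ← b.repr_apply_apply] using h i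
  rw [hQ]
  rw [b.measurePreserving_repr.measure_preimage (by measurability)]
  rw [(EuclideanSpace.volume_preserving_symm_measurableEquiv_toLp (Fin n)).measure_preimage
    (by measurability)]
  rw [volume_pi_pi]
  congr 1
  ext i
  rw [Real.volume_Icc]
  congr 1
  ring

end Aux

/-- Wave packet kernel decay: if η ∈ C_c^∞(ℝⁿ) is supported in the
parabolic slab {(1/2)σ⁻¹ ≤ |ξ| ≤ 2σ⁻¹, |ξ/|ξ| − ω| ≤ 2√σ} and satisfies the parabolic
derivative bounds |(ω·∂)^β ∂^α η| ≤ C_{α,β} σ^{−(n−1)/4 + |α|/2 + β}, then for every N ≥ 0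
there is C_N, depending only on N, n and the constants C_{α,β}, with
|ℱ⁻¹η(x)| ≤ C_N σ^{−(3n+1)/4}(1 + σ⁻¹|x|² + σ⁻²(ω·x)²)^{−N}. -/
theorem wave_packet_kernel_decay (n : ℕ) (hn : 2 ≤ n)
    (Cab : List (Fin n) → ℕ → ℝ) (N : ℝ) (hN : 0 ≤ N) :
    ∃ C : ℝ, 0 ≤ C ∧
      ∀ (η : En n → ℂ) (ω : En n) (σ : ℝ), ‖ω‖ = 1 → 0 < σ → σ < 1 →
        ContDiff ℝ (⊤ : ℕ∞) η → HasCompactSupport η →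
        (∀ ξ ∈ Function.support η,
          (1 / 2) * σ⁻¹ ≤ ‖ξ‖ ∧ ‖ξ‖ ≤ 2 * σ⁻¹ ∧ ‖‖ξ‖⁻¹ • ξ - ω‖ ≤ 2 * Real.sqrt σ) →
        (∀ (α : List (Fin n)) (β : ℕ) (ξ : En n),
          ‖multiDeriv (List.replicate β ω ++ α.map (fun i => EuclideanSpace.single i (1 : ℝ)))
              η ξ‖ ≤
            Cab α β * σ ^ (-(((n : ℝ) - 1) / 4) + (α.length : ℝ) / 2 + (β : ℝ))) →
        ∀ x : En n,
          ‖𝓕⁻ η x‖ ≤ C * σ ^ (-((3 * (n : ℝ) + 1) / 4)) *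
            (1 + σ⁻¹ * ‖x‖ ^ 2 + σ⁻¹ ^ 2 * (inner (𝕜 := ℝ) ω x) ^ 2) ^ (-N) := by
  classical
  set M : ℕ := ⌈N⌉₊ with hMdef
  set C₀ : ℝ := |Cab [] 0| + |Cab [] (2*M)| +
      ∑ i : Fin n, |Cab (List.replicate (2*M) i) 0| with hC₀def
  have hC₀ : 0 ≤ C₀ := by
    apply add_nonneg (add_nonneg (abs_nonneg _) (abs_nonneg _))
    exact Finset.sum_nonneg fun i _ => abs_nonneg _
  set Vn : ℝ := 4 * 8 ^ (n - 1) with hVndef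
  have hVn : 0 < Vn := by positivity
  refine ⟨3 ^ M * (2 + (n : ℝ) ^ (M + 1)) * C₀ * Vn, by positivity, ?_⟩
  intro η ω σ hω hσ hσ1 hη hηcs hsuppη hder x
  have hninv : 0 < σ⁻¹ := by positivity
  haveI : NeZero n := ⟨by omega⟩
  -- orthonormal basis with b 0 = ω
  have hcard : Module.finrank ℝ (En n) = Fintype.card (Fin n) := by simp
  have horth : Orthonormal ℝ (({0} : Set (Fin n)).restrict (fun _ : Fin n => ω)) := by
    constructor
    · intro i; exact hω
    · intro i j hij
      exact absurd (Subsingleton.elim i j) hij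
  obtain ⟨b, hb⟩ := horth.exists_orthonormalBasis_extension_of_card_eq hcard
  have hb0 : b 0 = ω := hb 0 (Set.mem_singleton 0)
  set r : Fin n → ℝ := fun i => if i = 0 then 2*σ⁻¹ else 4*(σ⁻¹*Real.sqrt σ) with hrdef
  set B : Set (En n) := {ξ : En n | ∀ i, |inner (𝕜 := ℝ) (b i) ξ| ≤ r i} with hBdef
  have hrnn : ∀ i, 0 ≤ 2 * r i := by
    intro i
    simp only [hrdef]
    split
    · positivity
    · positivity
  have hvolB : volume B = ∏ i, ENNReal.ofReal (2 * r i) := volume_box b r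
  have hvolB' : (volume B).toReal = ∏ i, (2 * r i) := by
    rw [hvolB, ← ENNReal.ofReal_prod_of_nonneg (fun i _ => hrnn i),
      ENNReal.toReal_ofReal (Finset.prod_nonneg fun i _ => hrnn i)]
  have hvollt : volume B < ∞ := by
    rw [hvolB, ← ENNReal.ofReal_prod_of_nonneg (fun i _ => hrnn i)]
    exact ENNReal.ofReal_lt_top
  have hprodsplit : ∏ i, (2 * r i) = (4*σ⁻¹) * (8*(σ⁻¹*Real.sqrt σ)) ^ (n-1) := by
    rw [← Finset.mul_prod_erase Finset.univ _ (Finset.mem_univ (0 : Fin n))]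
    have h0 : 2 * r 0 = 4*σ⁻¹ := by simp only [hrdef, if_pos rfl]; ring
    have hrest : ∀ i ∈ Finset.univ.erase (0:Fin n), 2 * r i = 8*(σ⁻¹*Real.sqrt σ) := by
      intro i hi
      rcases Finset.mem_erase.1 hi with ⟨hne, -⟩
      simp only [hrdef, if_neg hne]; ring
    rw [Finset.prod_congr rfl hrest, Finset.prod_const, h0,
      Finset.card_erase_of_mem (Finset.mem_univ _), Finset.card_univ, Fintype.card_fin]
  set Vb : ℝ := (volume B).toReal with hVbdef
  have hVbnn : 0 ≤ Vb := ENNReal.toReal_nonneg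
  set e₀ : ℝ := -(((n : ℝ) - 1) / 4) with he₀def
  set p : ℝ := -((3 * (n : ℝ) + 1) / 4) with hpdef
  have hcast : ((n - 1 : ℕ) : ℝ) = (n : ℝ) - 1 := by
    have h1 : 1 ≤ n := by omega
    push_cast [h1]
    ring
  have hkey : σ ^ e₀ * Vb = Vn * σ ^ p := by
    have hhalf : σ⁻¹ * Real.sqrt σ = σ ^ (-(1/2) : ℝ) := by
      rw [Real.sqrt_eq_rpow, ← Real.rpow_neg_one σ, ← Real.rpow_add hσ]
      norm_num
    have hps : (σ ^ (-(1/2):ℝ)) ^ (n-1) = σ ^ ((-(1/2):ℝ) * ((n-1:ℕ):ℝ)) := by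
      rw [Real.rpow_mul hσ.le, Real.rpow_natCast]
    rw [hvolB', hprodsplit, hhalf]
    rw [mul_pow, hps]
    rw [show (4:ℝ)*σ⁻¹ = 4 * σ ^ (-1:ℝ) from by rw [Real.rpow_neg_one]]
    rw [hcast]
    rw [show σ ^ e₀ * (4 * σ ^ (-1:ℝ) * ((8:ℝ)^(n-1) * σ ^ ((-(1/2):ℝ) * ((n:ℝ)-1))))
        = (4 * 8^(n-1)) * (σ ^ e₀ * σ ^ (-1:ℝ) * σ ^ ((-(1/2):ℝ) * ((n:ℝ)-1))) from by ring]
    rw [← Real.rpow_add hσ, ← Real.rpow_add hσ, hVndef, he₀def, hpdef]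
    congr 1
    ring
  -- support of η is inside the box B
  have hBsupp : Function.support η ⊆ B := by
    intro ξ hξ
    obtain ⟨h1, h2, h3⟩ := hsuppη ξ hξ
    have hξpos : 0 < ‖ξ‖ := lt_of_lt_of_le (by positivity) h1
    simp only [hBdef, Set.mem_setOf_eq]
    intro i
    by_cases hi : i = 0
    · subst hi
      rw [hb0]
      simp only [hrdef, if_pos rfl]
      calc |inner (𝕜 := ℝ) ω ξ| ≤ ‖ω‖ * ‖ξ‖ := abs_real_inner_le_norm ω ξ
        _ = ‖ξ‖ := by rw [hω, one_mul]
        _ ≤ 2*σ⁻¹ := h2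
    · have horthi : inner (𝕜 := ℝ) (b i) ω = 0 := by
        rw [← hb0]; exact b.orthonormal.2 hi
      have hdec : inner (𝕜 := ℝ) (b i) ξ = ‖ξ‖ * inner (𝕜 := ℝ) (b i) (‖ξ‖⁻¹ • ξ - ω) := by
        rw [inner_sub_right, horthi, sub_zero, real_inner_smul_right]
        field_simp
      simp only [hrdef, if_neg hi]
      calc |inner (𝕜 := ℝ) (b i) ξ|
          = ‖ξ‖ * |inner (𝕜 := ℝ) (b i) (‖ξ‖⁻¹ • ξ - ω)| := by
            rw [hdec, abs_mul, abs_of_pos hξpos]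
        _ ≤ ‖ξ‖ * (‖b i‖ * ‖‖ξ‖⁻¹ • ξ - ω‖) := by
            gcongr
            exact abs_real_inner_le_norm _ _
        _ = ‖ξ‖ * ‖‖ξ‖⁻¹ • ξ - ω‖ := by rw [b.orthonormal.1 i, one_mul]
        _ ≤ (2*σ⁻¹) * (2*Real.sqrt σ) := by
            apply mul_le_mul h2 h3 (norm_nonneg _) (by positivity)
        _ = 4*(σ⁻¹*Real.sqrt σ) := by ring
  have hBclosed : IsClosed B := by
    have hBi : B = ⋂ i, {ξ : En n | |inner (𝕜 := ℝ) (b i) ξ| ≤ r i} := by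
      ext ξ; simp [hBdef, Set.mem_iInter]
    rw [hBi]
    refine isClosed_iInter fun i => isClosed_le ?_ continuous_const
    exact (Continuous.inner continuous_const continuous_id).abs
  have htsupp : tsupport η ⊆ B := closure_minimal hBsupp hBclosed
  clear_value Vb
  -- sup-norm bounds for the derivatives we need
  have hCab1 : |Cab [] 0| ≤ C₀ := by
    rw [hC₀def]
    have : (0:ℝ) ≤ ∑ i : Fin n, |Cab (List.replicate (2*M) i) 0| :=
      Finset.sum_nonneg fun i _ => abs_nonneg _
    have h2 := abs_nonneg (Cab [] (2*M))
    linarith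
  have hCab2 : |Cab [] (2*M)| ≤ C₀ := by
    rw [hC₀def]
    have : (0:ℝ) ≤ ∑ i : Fin n, |Cab (List.replicate (2*M) i) 0| :=
      Finset.sum_nonneg fun i _ => abs_nonneg _
    have h2 := abs_nonneg (Cab [] 0)
    linarith
  have hCab3 : ∀ i : Fin n, |Cab (List.replicate (2*M) i) 0| ≤ C₀ := by
    intro i
    rw [hC₀def]
    have h1 : |Cab (List.replicate (2*M) i) 0| ≤
        ∑ j : Fin n, |Cab (List.replicate (2*M) j) 0| :=
      Finset.single_le_sum (f := fun j : Fin n => |Cab (List.replicate (2*M) j) 0|)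
        (fun j _ => abs_nonneg _) (Finset.mem_univ i)
    have h2 := abs_nonneg (Cab [] 0)
    have h3 := abs_nonneg (Cab [] (2*M))
    linarith
  have hsupη : ∀ ξ, ‖η ξ‖ ≤ C₀ * σ ^ e₀ := by
    intro ξ
    have h := hder [] 0 ξ
    simp only [List.replicate, List.map_nil, List.append_nil, List.length_nil] at h
    have he : -(((n : ℝ) - 1) / 4) + ((0:ℕ) : ℝ) / 2 + ((0:ℕ) : ℝ) = e₀ := by
      rw [he₀def]; norm_num
    calc ‖η ξ‖ = ‖multiDeriv [] η ξ‖ := rfl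
      _ ≤ Cab [] 0 * σ ^ (-(((n : ℝ) - 1) / 4) + ((0:ℕ):ℝ) / 2 + ((0:ℕ):ℝ)) := by
          simpa using h
      _ ≤ C₀ * σ ^ e₀ := by
          rw [he]
          apply mul_le_mul_of_nonneg_right _ (Real.rpow_nonneg hσ.le _)
          exact (le_abs_self _).trans hCab1
  have hsupω : ∀ ξ, ‖multiDeriv (List.replicate (2*M) ω) η ξ‖
      ≤ C₀ * σ ^ (e₀ + 2*(M:ℝ)) := by
    intro ξ
    have h := hder [] (2*M) ξ
    simp only [List.map_nil, List.append_nil, List.length_nil] at h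
    have he : -(((n : ℝ) - 1) / 4) + ((0:ℕ) : ℝ) / 2 + ((2*M:ℕ) : ℝ) = e₀ + 2*(M:ℝ) := by
      rw [he₀def]; push_cast; ring
    calc ‖multiDeriv (List.replicate (2*M) ω) η ξ‖
        ≤ Cab [] (2*M) * σ ^ (-(((n : ℝ) - 1) / 4) + ((0:ℕ):ℝ) / 2 + ((2*M:ℕ):ℝ)) := by
          simpa using h
      _ ≤ C₀ * σ ^ (e₀ + 2*(M:ℝ)) := by
          rw [he]
          apply mul_le_mul_of_nonneg_right _ (Real.rpow_nonneg hσ.le _)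
          exact (le_abs_self _).trans hCab2
  have hsupi : ∀ (i : Fin n) ξ,
      ‖multiDeriv (List.replicate (2*M) (EuclideanSpace.single i (1:ℝ))) η ξ‖
      ≤ C₀ * σ ^ (e₀ + (M:ℝ)) := by
    intro i ξ
    have h := hder (List.replicate (2*M) i) 0 ξ
    simp only [List.replicate, List.map_replicate, List.nil_append,
      List.length_replicate] at h
    have he : -(((n : ℝ) - 1) / 4) + ((2*M:ℕ) : ℝ) / 2 + ((0:ℕ) : ℝ) = e₀ + (M:ℝ) := by
      rw [he₀def]; push_cast; ring
    calc ‖multiDeriv (List.replicate (2*M) (EuclideanSpace.single i (1:ℝ))) η ξ‖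
        ≤ Cab (List.replicate (2*M) i) 0 *
            σ ^ (-(((n : ℝ) - 1) / 4) + ((2*M:ℕ):ℝ) / 2 + ((0:ℕ):ℝ)) := by
          simpa using h
      _ ≤ C₀ * σ ^ (e₀ + (M:ℝ)) := by
          rw [he]
          apply mul_le_mul_of_nonneg_right _ (Real.rpow_nonneg hσ.le _)
          exact (le_abs_self _).trans (hCab3 i)
  -- generic Fourier bound
  have hgen : ∀ (m : ℕ) (v : En n) (S : ℝ),
      (∀ ξ, ‖multiDeriv (List.replicate m v) η ξ‖ ≤ S) →
      (2*Real.pi*|inner (𝕜 := ℝ) (-x : En n) v|)^m * ‖𝓕 η (-x)‖ ≤ S * Vb := by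
    intro m v S hS
    rw [hVbdef, ← norm_fourier_multiDeriv_replicate hη hηcs m v (-x)]
    apply fourier_norm_le_vol_mul_sup _ hvollt hS
    intro ξ hξ
    exact htsupp (tsupport_multiDeriv _ (subset_closure hξ))
  have hFnn : 0 ≤ ‖𝓕 η (-x)‖ := norm_nonneg _
  -- base bound
  have hFb : ‖𝓕 η (-x)‖ ≤ (C₀ * σ ^ e₀) * Vb := by
    have h := hgen 0 ω _ hsupη
    simpa using h
  -- the two-pi absorption
  have habs : ∀ (t : ℝ) (m : ℕ), |t| ^ m ≤ (2*Real.pi*|t|)^m := by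
    intro t m
    apply pow_le_pow_left₀ (abs_nonneg t)
    nlinarith [Real.pi_gt_three, abs_nonneg t]
  -- ω-direction bound
  have hFω : |inner (𝕜 := ℝ) ω x| ^ (2*M) * ‖𝓕 η (-x)‖
      ≤ (C₀ * σ ^ (e₀ + 2*(M:ℝ))) * Vb := by
    have h := hgen (2*M) ω _ hsupω
    have heq : |inner (𝕜 := ℝ) (-x : En n) ω| = |inner (𝕜 := ℝ) ω x| := by
      rw [inner_neg_left, abs_neg, real_inner_comm]
    rw [heq] at h
    exact le_trans (mul_le_mul_of_nonneg_right (habs _ _) hFnn) h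
  -- coordinate-direction bounds
  have hFi : ∀ i : Fin n, (x i) ^ (2*M) * ‖𝓕 η (-x)‖
      ≤ (C₀ * σ ^ (e₀ + (M:ℝ))) * Vb := by
    intro i
    have h := hgen (2*M) (EuclideanSpace.single i (1:ℝ)) _ (hsupi i)
    have heq : |inner (𝕜 := ℝ) (-x : En n) (EuclideanSpace.single i (1:ℝ))| = |x i| := by
      rw [inner_neg_left, abs_neg, EuclideanSpace.inner_single_right]
      simp
    rw [heq] at h
    have hxabs : (x i) ^ (2*M) = |x i| ^ (2*M) := by
      rw [pow_mul, pow_mul, sq_abs]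
    rw [hxabs]
    exact le_trans (mul_le_mul_of_nonneg_right (habs _ _) hFnn) h
  -- assemble
  set t1 : ℝ := σ⁻¹ * ‖x‖ ^ 2 with ht1def
  set t2 : ℝ := σ⁻¹ ^ 2 * (inner (𝕜 := ℝ) ω x) ^ 2 with ht2def
  have ht1 : 0 ≤ t1 := by positivity
  have ht2 : 0 ≤ t2 := by positivity
  set A : ℝ := 1 + t1 + t2 with hAdef
  have hA1 : (1:ℝ) ≤ A := by rw [hAdef]; linarith
  have hApos : (0:ℝ) < A := by linarith
  rw [Real.fourierInv_eq_fourier_neg]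
  rw [Real.rpow_neg hApos.le]
  rw [show 3 ^ M * (2 + (n : ℝ) ^ (M + 1)) * C₀ * Vn * σ ^ p * (A ^ N)⁻¹
      = (3 ^ M * (2 + (n : ℝ) ^ (M + 1)) * C₀ * Vn * σ ^ p) / A ^ N from
      (div_eq_mul_inv _ _).symm]
  rw [le_div_iff₀ (Real.rpow_pos_of_pos hApos N)]
  -- power inequalities for σ
  have hpow1 : (σ⁻¹)^M * σ ^ (e₀ + (M:ℝ)) = σ ^ e₀ := by
    rw [inv_pow, ← Real.rpow_natCast σ M, ← Real.rpow_neg hσ.le, ← Real.rpow_add hσ]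
    congr 1
    ring
  have hpow2 : (σ⁻¹^2)^M * σ ^ (e₀ + 2*(M:ℝ)) = σ ^ e₀ := by
    rw [← pow_mul, inv_pow, ← Real.rpow_natCast σ (2*M), ← Real.rpow_neg hσ.le,
      ← Real.rpow_add hσ]
    congr 1
    push_cast
    ring
  -- bound A^N by powers
  have hAN : A ^ N ≤ A ^ (M:ℝ) := Real.rpow_le_rpow_of_exponent_le hA1 (Nat.le_ceil N)
  have hAM : A ^ (M:ℝ) = A ^ M := Real.rpow_natCast A M
  have hmax : A ^ M ≤ 3^M * (1 + t1^M + t2^M) := by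
    have l1 : (1:ℝ) ≤ max (max 1 t1) t2 := le_max_of_le_left (le_max_left _ _)
    have l2 : t1 ≤ max (max 1 t1) t2 := le_max_of_le_left (le_max_right _ _)
    have l3 : t2 ≤ max (max 1 t1) t2 := le_max_right _ _
    have hAle : A ≤ 3 * max (max 1 t1) t2 := by rw [hAdef]; linarith
    have h1 : A ^ M ≤ (3 * max (max 1 t1) t2) ^ M :=
      pow_le_pow_left₀ (by linarith) hAle M
    have h2 : (3 * max (max 1 t1) t2) ^ M = 3^M * (max (max 1 t1) t2)^M := mul_pow _ _ _
    have h3 : (max (max 1 t1) t2)^M ≤ 1 + t1^M + t2^M := by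
      have p1 : (0:ℝ) ≤ t1^M := pow_nonneg ht1 M
      have p2 : (0:ℝ) ≤ t2^M := pow_nonneg ht2 M
      rcases max_cases (max 1 t1) t2 with ⟨hm, -⟩ | ⟨hm, -⟩
      · rw [hm]
        rcases max_cases (1:ℝ) t1 with ⟨hm2, -⟩ | ⟨hm2, -⟩
        · rw [hm2, one_pow]; linarith
        · rw [hm2]; linarith
      · rw [hm]; linarith
    calc A ^ M ≤ 3^M * (max (max 1 t1) t2)^M := by rw [← h2]; exact h1
      _ ≤ 3^M * (1 + t1^M + t2^M) := by
          apply mul_le_mul_of_nonneg_left h3 (by positivity)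
  -- t1^M bound
  have ht1F : t1^M * ‖𝓕 η (-x)‖ ≤ (n:ℝ)^(M+1) * ((C₀ * σ ^ e₀) * Vb) := by
    have hnormsq : ‖x‖^2 = ∑ i, (x i)^2 := by
      rw [EuclideanSpace.norm_eq, Real.sq_sqrt (by positivity)]
      simp [Real.norm_eq_abs, sq_abs]
    have hne : Nonempty (Fin n) := ⟨⟨0, by omega⟩⟩
    obtain ⟨j, -, hj⟩ := Finset.exists_max_image Finset.univ (fun i => (x i)^2)
      Finset.univ_nonempty
    have hsum_le : ‖x‖^2 ≤ (n:ℝ) * (x j)^2 := by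
      rw [hnormsq]
      calc ∑ i, (x i)^2 ≤ ∑ _i : Fin n, (x j)^2 :=
            Finset.sum_le_sum fun i _ => hj i (Finset.mem_univ i)
        _ = (n:ℝ) * (x j)^2 := by
            rw [Finset.sum_const, Finset.card_univ, Fintype.card_fin, nsmul_eq_mul]
    have hxnn : (0:ℝ) ≤ (x j)^2 := sq_nonneg _
    calc t1^M * ‖𝓕 η (-x)‖ = (σ⁻¹)^M * (‖x‖^2)^M * ‖𝓕 η (-x)‖ := by
          rw [ht1def]; ring
      _ ≤ (σ⁻¹)^M * ((n:ℝ) * (x j)^2)^M * ‖𝓕 η (-x)‖ := by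
          gcongr
      _ = (n:ℝ)^M * ((σ⁻¹)^M * ((x j)^(2*M) * ‖𝓕 η (-x)‖)) := by
          rw [mul_pow, ← pow_mul]
          ring
      _ ≤ (n:ℝ)^M * ((σ⁻¹)^M * ((C₀ * σ ^ (e₀ + (M:ℝ))) * Vb)) := by
          have := hFi j
          gcongr
      _ = (n:ℝ)^M * (((σ⁻¹)^M * σ ^ (e₀ + (M:ℝ))) * (C₀ * Vb)) := by ring
      _ = (n:ℝ)^M * ((C₀ * σ ^ e₀) * Vb) := by rw [hpow1]; ring
      _ ≤ (n:ℝ)^(M+1) * ((C₀ * σ ^ e₀) * Vb) := by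
          have hn1 : (1:ℝ) ≤ (n:ℝ) := by exact_mod_cast Nat.one_le_of_lt hn
          have : (n:ℝ)^M ≤ (n:ℝ)^(M+1) := pow_le_pow_right₀ hn1 (Nat.le_succ M)
          apply mul_le_mul_of_nonneg_right this
          positivity
  -- t2^M bound
  have ht2F : t2^M * ‖𝓕 η (-x)‖ ≤ (C₀ * σ ^ e₀) * Vb := by
    have hinn : ((inner (𝕜 := ℝ) ω x : ℝ)^2)^M = |inner (𝕜 := ℝ) ω x| ^ (2*M) := by
      rw [pow_mul, sq_abs]
    calc t2^M * ‖𝓕 η (-x)‖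
        = (σ⁻¹^2)^M * (|inner (𝕜 := ℝ) ω x| ^ (2*M) * ‖𝓕 η (-x)‖) := by
          rw [ht2def, mul_pow, hinn]; ring
      _ ≤ (σ⁻¹^2)^M * ((C₀ * σ ^ (e₀ + 2*(M:ℝ))) * Vb) := by
          have := hFω
          gcongr
      _ = ((σ⁻¹^2)^M * σ ^ (e₀ + 2*(M:ℝ))) * (C₀ * Vb) := by ring
      _ = (C₀ * σ ^ e₀) * Vb := by rw [hpow2]; ring
  -- final chain
  calc ‖𝓕 η (-x)‖ * A ^ N ≤ ‖𝓕 η (-x)‖ * A ^ M := by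
        rw [← hAM]
        exact mul_le_mul_of_nonneg_left hAN hFnn
    _ ≤ ‖𝓕 η (-x)‖ * (3^M * (1 + t1^M + t2^M)) :=
        mul_le_mul_of_nonneg_left hmax hFnn
    _ = 3^M * (‖𝓕 η (-x)‖ + t1^M * ‖𝓕 η (-x)‖ + t2^M * ‖𝓕 η (-x)‖) := by ring
    _ ≤ 3^M * ((C₀ * σ ^ e₀) * Vb + (n:ℝ)^(M+1) * ((C₀ * σ ^ e₀) * Vb)
          + (C₀ * σ ^ e₀) * Vb) := by
        have h3 : (0:ℝ) ≤ 3^M := by positivity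
        apply mul_le_mul_of_nonneg_left _ h3
        gcongr
    _ = 3^M * (2 + (n:ℝ)^(M+1)) * (C₀ * (σ ^ e₀ * Vb)) := by ring
    _ = 3 ^ M * (2 + (n : ℝ) ^ (M + 1)) * C₀ * Vn * σ ^ p := by
        rw [hkey]; ring
end
end

section
/- Let 0 < p < 1 and let ρ̃ ∈ C_c^∞(ℝⁿ). Then for every f ∈ L²(ℝⁿ), ‖ρ̃(D)f‖_{L^p(ℝⁿ)} ≤ C ∫_{ℝⁿ}(1+|z|²)^{n(1/p - 1)} |f(z)| dz, where ρ̃(D)f = ℱ^{-1}(ρ̃ · ℱf) and C depends only on n, p, ρ̃. -/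
open MeasureTheory Set
open scoped ENNReal NNReal FourierTransform

noncomputable section

section Aux

variable {n : ℕ}

lemma exists_schwartz (r : En n → ℂ) (hr : ContDiff ℝ (⊤ : ℕ∞) r) (hrc : HasCompactSupport r) :
    ∃ S : SchwartzMap (En n) ℂ, ⇑S = r := by
  refine ⟨⟨r, hr.of_le (by simp), fun k m => ?_⟩, rfl⟩
  have h1 : Continuous fun x : En n => ‖x‖ ^ k * ‖iteratedFDeriv ℝ m r x‖ :=
    (continuous_norm.pow k).mul (hr.continuous_iteratedFDeriv (by exact_mod_cast le_top)).norm
  have h2 : HasCompactSupport fun x : En n => ‖x‖ ^ k * ‖iteratedFDeriv ℝ m r x‖ := by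
    apply HasCompactSupport.mono (hrc.iteratedFDeriv (𝕜 := ℝ) m)
    intro x hx
    simp only [Function.mem_support, ne_eq] at hx ⊢
    intro h0
    apply hx
    rw [h0]
    simp
  obtain ⟨C, hC⟩ := h2.exists_bound_of_continuous h1
  refine ⟨C, fun x => ?_⟩
  have h3 := hC x
  rw [Real.norm_eq_abs, abs_of_nonneg (by positivity)] at h3
  exact h3

lemma peetre {a : ℝ} (ha : 0 ≤ a) (x z : En n) :
    (1 + ‖x‖ ^ 2) ^ a ≤ 2 ^ a * ((1 + ‖z‖ ^ 2) ^ a * (1 + ‖x - z‖ ^ 2) ^ a) := by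
  have h1 : (0:ℝ) ≤ 1 + ‖x‖ ^ 2 := by positivity
  have key : 1 + ‖x‖ ^ 2 ≤ 2 * ((1 + ‖z‖ ^ 2) * (1 + ‖x - z‖ ^ 2)) := by
    have h2 : ‖x‖ ≤ ‖z‖ + ‖x - z‖ := by simpa using norm_add_le z (x - z)
    have h3 : ‖x‖ ^ 2 ≤ (‖z‖ + ‖x - z‖) ^ 2 := by
      have := norm_nonneg x
      nlinarith
    nlinarith [h3, sq_nonneg (‖z‖ - ‖x - z‖), sq_nonneg (‖z‖ * ‖x - z‖),
      norm_nonneg z, norm_nonneg (x - z)]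
  calc (1 + ‖x‖ ^ 2) ^ a ≤ (2 * ((1 + ‖z‖ ^ 2) * (1 + ‖x - z‖ ^ 2))) ^ a :=
        Real.rpow_le_rpow h1 key ha
    _ = 2 ^ a * ((1 + ‖z‖ ^ 2) ^ a * (1 + ‖x - z‖ ^ 2) ^ a) := by
        rw [Real.mul_rpow (by norm_num) (by positivity),
          Real.mul_rpow (by positivity) (by positivity)]

lemma schwartz_weight_integrable (S : SchwartzMap (En n) ℂ) {a : ℝ} (ha : 0 ≤ a) :
    Integrable (fun y : En n => (1 + ‖y‖ ^ 2) ^ a * ‖S y‖) := by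
  obtain ⟨k, hk⟩ := exists_nat_ge (2 * a)
  have hbound : ∀ y : En n, (1 + ‖y‖ ^ 2) ^ a * ‖S y‖ ≤
      2 ^ a * (‖S y‖ + ‖y‖ ^ k * ‖S y‖) := by
    intro y
    have hm1 : (1:ℝ) ≤ max 1 ‖y‖ := le_max_left _ _
    have h0 : (1 + ‖y‖ ^ 2) ^ a ≤ 2 ^ a * (1 + ‖y‖ ^ k) := by
      have h1 : (1:ℝ) + ‖y‖ ^ 2 ≤ 2 * max 1 ‖y‖ ^ 2 := by
        have h3 : ‖y‖ ≤ max 1 ‖y‖ := le_max_right _ _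
        nlinarith [norm_nonneg y]
      have h4 : (max 1 ‖y‖ : ℝ) ^ k ≤ 1 + ‖y‖ ^ k := by
        rcases le_total ‖y‖ 1 with h | h
        · rw [max_eq_left h, one_pow]
          nlinarith [pow_nonneg (norm_nonneg y) k]
        · rw [max_eq_right h]
          nlinarith [pow_nonneg (norm_nonneg y) k]
      calc (1 + ‖y‖ ^ 2) ^ a ≤ (2 * max 1 ‖y‖ ^ 2) ^ a :=
            Real.rpow_le_rpow (by positivity) h1 ha
        _ = 2 ^ a * (max 1 ‖y‖) ^ (2 * a) := by
            rw [Real.mul_rpow (by norm_num) (by positivity), ← Real.rpow_natCast (max 1 ‖y‖) 2,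
              ← Real.rpow_mul (by positivity)]
            norm_num
        _ ≤ 2 ^ a * (max 1 ‖y‖) ^ (k : ℝ) :=
            mul_le_mul_of_nonneg_left (Real.rpow_le_rpow_of_exponent_le hm1 hk)
              (by positivity)
        _ = 2 ^ a * (max 1 ‖y‖) ^ k := by rw [Real.rpow_natCast]
        _ ≤ 2 ^ a * (1 + ‖y‖ ^ k) := mul_le_mul_of_nonneg_left h4 (by positivity)
    calc (1 + ‖y‖ ^ 2) ^ a * ‖S y‖ ≤ (2 ^ a * (1 + ‖y‖ ^ k)) * ‖S y‖ := by
          gcongr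
        _ = 2 ^ a * (‖S y‖ + ‖y‖ ^ k * ‖S y‖) := by ring
  have hint : Integrable (fun y : En n => 2 ^ a * (‖S y‖ + ‖y‖ ^ k * ‖S y‖)) :=
    ((S.integrable (μ := volume)).norm.add (S.integrable_pow_mul volume k)).const_mul _
  refine hint.mono' ?_ (Filter.Eventually.of_forall fun y => ?_)
  · apply Continuous.aestronglyMeasurable
    refine Continuous.mul ?_ S.continuous.norm
    exact Continuous.rpow_const (continuous_const.add (continuous_norm.pow 2)) fun y => Or.inl (by positivity)
  · have := hbound y
    rwa [Real.norm_eq_abs, abs_of_nonneg (by positivity)]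

end Aux

/-- Low-frequency molecule bound: for 0 < p < 1 and ρ̃ ∈ C_c^∞(ℝⁿ),
‖ρ̃(D)f‖_{L^p} ≤ C ∫ (1+|z|²)^{n(1/p−1)} |f(z)| dz for every f ∈ L²(ℝⁿ), where
ρ̃(D)f = ℱ⁻¹(ρ̃ · ℱf), with C depending only on n, p, ρ̃. -/
theorem low_frequency_Lp_bound (n : ℕ) (hn : 2 ≤ n) (p : ℝ) (hp0 : 0 < p) (hp1 : p < 1)
    (r : En n → ℂ) (hr : ContDiff ℝ (⊤ : ℕ∞) r) (hrc : HasCompactSupport r) :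
    ∃ C : ℝ, 0 ≤ C ∧
      ∀ f : En n → ℂ, MemLp f 2 (volume : Measure (En n)) →
        (∫⁻ x, (‖𝓕⁻ (fun ξ => r ξ * 𝓕 f ξ) x‖₊ : ℝ≥0∞) ^ p) ^ (1 / p) ≤
          ENNReal.ofReal C *
            ∫⁻ z, ENNReal.ofReal ((1 + ‖z‖ ^ 2) ^ ((n : ℝ) * (1 / p - 1))) *
              (‖f z‖₊ : ℝ≥0∞) := by
  have hn0 : (0:ℝ) < n := by exact_mod_cast (by omega : 0 < n)
  set a : ℝ := (n : ℝ) * (1 / p - 1) with ha_def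
  have hp1' : (0:ℝ) < 1 - p := by linarith
  have ha : 0 < a := by
    have h1 : 1 < 1 / p := one_lt_one_div hp0 hp1
    have : (0:ℝ) < 1 / p - 1 := by linarith
    positivity
  -- the Schwartz kernel
  obtain ⟨rS, hrS⟩ := exists_schwartz r hr hrc
  set K : SchwartzMap (En n) ℂ := 𝓕⁻ rS with hKdef
  have hKco : ⇑K = 𝓕⁻ r := by
    rw [hKdef, SchwartzMap.fourierInv_coe, hrS]
  -- finite constants
  have hDint : Integrable (fun x : En n => (1 + ‖x‖ ^ 2) ^ (-(n:ℝ))) (volume : Measure (En n)) := by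
    have h1 : ((Module.finrank ℝ (En n) : ℝ)) < 2 * n := by
      rw [finrank_euclideanSpace, Fintype.card_fin]
      linarith
    have h2 := integrable_rpow_neg_one_add_norm_sq (E := En n) (μ := volume) h1
    have h3 : -(2*(n:ℝ))/2 = -(n:ℝ) := by ring
    rwa [h3] at h2
  set D : ℝ≥0∞ := ∫⁻ x : En n, ENNReal.ofReal ((1 + ‖x‖ ^ 2) ^ (-(n:ℝ))) with hDdef
  have hDlt : D ≠ ⊤ := hDint.lintegral_lt_top.ne
  set B : ℝ≥0∞ := ∫⁻ y : En n, ENNReal.ofReal ((1 + ‖y‖ ^ 2) ^ a * ‖K y‖) with hBdef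
  have hBlt : B ≠ ⊤ := (schwartz_weight_integrable K ha.le).lintegral_lt_top.ne
  set E : ℝ≥0∞ := D ^ ((1 - p) / p) * (ENNReal.ofReal (2 ^ a) * B) with hEdef
  have hElt : E ≠ ⊤ := by
    apply ENNReal.mul_ne_top
    · exact ENNReal.rpow_ne_top_of_nonneg (by positivity) hDlt
    · exact ENNReal.mul_ne_top ENNReal.ofReal_ne_top hBlt
  refine ⟨E.toReal + 1, by positivity, ?_⟩
  have hCpos : (0:ℝ≥0∞) < ENNReal.ofReal (E.toReal + 1) := ENNReal.ofReal_pos.2 (by positivity)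
  have hEleC : E ≤ ENNReal.ofReal (E.toReal + 1) := by
    conv_lhs => rw [← ENNReal.ofReal_toReal hElt]
    exact ENNReal.ofReal_le_ofReal (by linarith)
  intro f hf
  -- replace f by a strongly measurable representative
  set f' := hf.1.mk f with hf'def
  have hff' : f =ᵐ[volume] f' := hf.1.ae_eq_mk
  have hf'm : StronglyMeasurable f' := hf.1.stronglyMeasurable_mk
  have hFeq : 𝓕 f = 𝓕 f' := by
    funext w
    rw [Real.fourier_eq, Real.fourier_eq]
    exact integral_congr_ae (hff'.mono fun v hv => by dsimp only; rw [hv])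
  have hRHSeq : (∫⁻ z, ENNReal.ofReal ((1 + ‖z‖ ^ 2) ^ a) * (‖f z‖₊ : ℝ≥0∞)) =
      ∫⁻ z, ENNReal.ofReal ((1 + ‖z‖ ^ 2) ^ a) * (‖f' z‖₊ : ℝ≥0∞) :=
    lintegral_congr_ae (hff'.mono fun z hz => by simp only [hz])
  rw [hFeq, hRHSeq]
  -- main case split
  set A : ℝ≥0∞ := ∫⁻ z, ENNReal.ofReal ((1 + ‖z‖ ^ 2) ^ a) * (‖f' z‖₊ : ℝ≥0∞) with hAdef
  show (∫⁻ x, (‖𝓕⁻ (fun ξ => r ξ * 𝓕 f' ξ) x‖₊ : ℝ≥0∞) ^ p) ^ (1 / p) ≤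
    ENNReal.ofReal (E.toReal + 1) * A
  by_cases hAtop : A = ⊤
  · rw [hAtop, ENNReal.mul_top hCpos.ne']
    exact le_top
  have hf'int : Integrable f' (volume : Measure (En n)) := by
    refine ⟨hf'm.aestronglyMeasurable, ?_⟩
    rw [HasFiniteIntegral]
    refine lt_of_le_of_lt (lintegral_mono fun z => ?_) (lt_top_iff_ne_top.2 hAtop)
    refine le_mul_of_one_le_left zero_le ?_
    rw [show (1:ℝ≥0∞) = ENNReal.ofReal 1 by simp]
    exact ENNReal.ofReal_le_ofReal (Real.one_le_rpow (by nlinarith [sq_nonneg (‖z‖:ℝ)]) ha.le)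
  -- basic integrability facts
  have hr_cont : Continuous r := hr.continuous
  have hr_int : Integrable r (volume : Measure (En n)) :=
    hr_cont.integrable_of_hasCompactSupport hrc
  have hFf_cont : Continuous (𝓕 f') :=
    VectorFourier.fourierIntegral_continuous Real.continuous_fourierChar
      (by exact continuous_inner) hf'int
  have hFf_bdd : ∀ ξ, ‖𝓕 f' ξ‖ ≤ ∫ z, ‖f' z‖ :=
    fun ξ => VectorFourier.norm_fourierIntegral_le_integral_norm _ _ _ _ _
  have hmul_int : Integrable (fun ξ => r ξ * 𝓕 f' ξ) (volume : Measure (En n)) := by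
    refine (hr_int.norm.mul_const (∫ z, ‖f' z‖)).mono'
      ((hr_cont.mul hFf_cont).aestronglyMeasurable) (Filter.Eventually.of_forall fun ξ => ?_)
    rw [norm_mul]
    exact mul_le_mul_of_nonneg_left (hFf_bdd ξ) (norm_nonneg _)
  have hg_cont : Continuous (𝓕⁻ fun ξ => r ξ * 𝓕 f' ξ) :=
    VectorFourier.fourierIntegral_continuous Real.continuous_fourierChar
      (by exact continuous_inner.neg) hmul_int
  -- the convolution identity
  have hconv : ∀ x, 𝓕⁻ (fun ξ => r ξ * 𝓕 f' ξ) x = ∫ z, 𝓕⁻ r (x - z) * f' z := by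
    intro x
    have hcont1 : Continuous fun q : En n × En n =>
        Complex.exp (((2 * Real.pi * (inner ℝ q.1 x : ℝ) : ℝ) : ℂ) * Complex.I) * r q.1 *
          Complex.exp (((-2 * Real.pi * (inner ℝ q.2 q.1 : ℝ) : ℝ) : ℂ) * Complex.I) := by
      have i1 : Continuous fun q : En n × En n => (inner ℝ q.1 x : ℝ) :=
        continuous_inner.comp (continuous_fst.prodMk continuous_const)
      have i2 : Continuous fun q : En n × En n => (inner ℝ q.2 q.1 : ℝ) :=
        continuous_inner.comp (continuous_snd.prodMk continuous_fst)
      apply Continuous.mul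
      · apply Continuous.mul
        · exact Complex.continuous_exp.comp
            ((Complex.continuous_ofReal.comp (by fun_prop)).mul continuous_const)
        · exact hr_cont.comp continuous_fst
      · exact Complex.continuous_exp.comp
          ((Complex.continuous_ofReal.comp (by fun_prop)).mul continuous_const)
    have hFint : Integrable (Function.uncurry fun ξ z =>
        (Complex.exp (((2 * Real.pi * (inner ℝ ξ x : ℝ) : ℝ) : ℂ) * Complex.I) * r ξ *
          Complex.exp (((-2 * Real.pi * (inner ℝ z ξ : ℝ) : ℝ) : ℂ) * Complex.I)) * f' z)
        (volume.prod volume) := by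
      refine (hr_int.norm.mul_prod hf'int.norm).mono' ?_
        (Filter.Eventually.of_forall fun q => ?_)
      · exact hcont1.aestronglyMeasurable.mul
          ((hf'm.comp_measurable measurable_snd).aestronglyMeasurable)
      · simp only [Function.uncurry, norm_mul, Complex.norm_exp_ofReal_mul_I,
          one_mul, mul_one]
        exact le_refl _
    calc 𝓕⁻ (fun ξ => r ξ * 𝓕 f' ξ) x
        = ∫ ξ, Complex.exp (((2 * Real.pi * (inner ℝ ξ x : ℝ) : ℝ) : ℂ) * Complex.I) •
            (r ξ * 𝓕 f' ξ) := Real.fourierInv_eq' _ x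
      _ = ∫ ξ, ∫ z,
            (Complex.exp (((2 * Real.pi * (inner ℝ ξ x : ℝ) : ℝ) : ℂ) * Complex.I) * r ξ *
              Complex.exp (((-2 * Real.pi * (inner ℝ z ξ : ℝ) : ℝ) : ℂ) * Complex.I)) * f' z := by
          congr 1
          funext ξ
          rw [Real.fourier_eq']
          simp only [smul_eq_mul, ← integral_const_mul]
          congr 1
          funext z
          ring
      _ = ∫ z, ∫ ξ,
            (Complex.exp (((2 * Real.pi * (inner ℝ ξ x : ℝ) : ℝ) : ℂ) * Complex.I) * r ξ *
              Complex.exp (((-2 * Real.pi * (inner ℝ z ξ : ℝ) : ℝ) : ℂ) * Complex.I)) * f' z :=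
          integral_integral_swap hFint
      _ = ∫ z, 𝓕⁻ r (x - z) * f' z := by
          congr 1
          funext z
          rw [show (∫ ξ, (Complex.exp (((2 * Real.pi * (inner ℝ ξ x : ℝ) : ℝ) : ℂ) * Complex.I) * r ξ *
              Complex.exp (((-2 * Real.pi * (inner ℝ z ξ : ℝ) : ℝ) : ℂ) * Complex.I)) * f' z)
            = (∫ ξ, Complex.exp (((2 * Real.pi * (inner ℝ ξ x : ℝ) : ℝ) : ℂ) * Complex.I) * r ξ *
              Complex.exp (((-2 * Real.pi * (inner ℝ z ξ : ℝ) : ℝ) : ℂ) * Complex.I)) * f' z from by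
            simpa only [smul_eq_mul] using integral_smul_const
              (fun ξ => Complex.exp (((2 * Real.pi * (inner ℝ ξ x : ℝ) : ℝ) : ℂ) * Complex.I) * r ξ *
                Complex.exp (((-2 * Real.pi * (inner ℝ z ξ : ℝ) : ℝ) : ℂ) * Complex.I)) (f' z)]
          congr 1
          rw [Real.fourierInv_eq']
          congr 1
          funext ξ
          rw [smul_eq_mul, show (((2 * Real.pi * (inner ℝ ξ (x - z) : ℝ) : ℝ) : ℂ) * Complex.I)
              = ((2 * Real.pi * (inner ℝ ξ x : ℝ) : ℝ) : ℂ) * Complex.I +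
                ((-2 * Real.pi * (inner ℝ z ξ : ℝ) : ℝ) : ℂ) * Complex.I from by
            rw [inner_sub_right, ← real_inner_comm z ξ]
            push_cast
            ring, Complex.exp_add]
          ring
  -- pointwise bound by the convolution of norms
  set G : En n → ℝ≥0∞ := fun x => (‖𝓕⁻ (fun ξ => r ξ * 𝓕 f' ξ) x‖₊ : ℝ≥0∞) with hGdef
  have hGm : Measurable G := hg_cont.measurable.nnnorm.coe_nnreal_ennreal
  have hgb : ∀ x, G x ≤ ∫⁻ z, (‖K (x - z)‖₊ : ℝ≥0∞) * (‖f' z‖₊ : ℝ≥0∞) := by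
    intro x
    rw [hGdef]
    simp only
    rw [hconv x]
    refine (enorm_integral_le_lintegral_enorm _).trans (le_of_eq ?_)
    refine lintegral_congr fun z => ?_
    rw [hKco, enorm_mul, enorm_eq_nnnorm, enorm_eq_nnnorm]
  have hWm : Measurable fun x : En n => ENNReal.ofReal ((1 + ‖x‖ ^ 2) ^ a) := by
    apply Measurable.ennreal_ofReal
    apply Continuous.measurable
    exact Continuous.rpow_const (continuous_const.add (continuous_norm.pow 2)) fun y => Or.inl (by positivity)
  have hu_m : Measurable fun x => G x * ENNReal.ofReal ((1 + ‖x‖ ^ 2) ^ a) := hGm.mul hWm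
  have hpq : Real.HolderConjugate (1 / p) (1 / (1 - p)) := by
    constructor
    · rw [one_div, inv_inv, one_div, inv_inv, inv_one]
      ring
    · positivity
    · exact one_div_pos.2 hp1'
  have hexp : -(a * p) * (1 / (1 - p)) = -(n : ℝ) := by
    rw [ha_def]
    field_simp
  have hsplit : ∀ x : En n, G x ^ p =
      (G x * ENNReal.ofReal ((1 + ‖x‖ ^ 2) ^ a)) ^ p *
        ENNReal.ofReal ((1 + ‖x‖ ^ 2) ^ (-(a * p))) := by
    intro x
    have hbpos : (0:ℝ) < 1 + ‖x‖ ^ 2 := by positivity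
    rw [ENNReal.mul_rpow_of_nonneg _ _ hp0.le,
      ENNReal.ofReal_rpow_of_pos (by positivity), ← Real.rpow_mul hbpos.le,
      mul_assoc, ← ENNReal.ofReal_mul (by positivity), ← Real.rpow_add hbpos,
      add_neg_cancel, Real.rpow_zero, ENNReal.ofReal_one, mul_one]
  have hHolder : (∫⁻ x, G x ^ p) ≤
      (∫⁻ x, G x * ENNReal.ofReal ((1 + ‖x‖ ^ 2) ^ a)) ^ p * D ^ (1 - p) := by
    calc ∫⁻ x, G x ^ p
        = ∫⁻ x, (G x * ENNReal.ofReal ((1 + ‖x‖ ^ 2) ^ a)) ^ p *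
            ENNReal.ofReal ((1 + ‖x‖ ^ 2) ^ (-(a * p))) :=
          lintegral_congr hsplit
      _ ≤ (∫⁻ x, ((G x * ENNReal.ofReal ((1 + ‖x‖ ^ 2) ^ a)) ^ p) ^ (1 / p)) ^ (1 / (1 / p)) *
          (∫⁻ x, (ENNReal.ofReal ((1 + ‖x‖ ^ 2) ^ (-(a * p)))) ^ (1 / (1 - p))) ^
            (1 / (1 / (1 - p))) :=
          ENNReal.lintegral_mul_le_Lp_mul_Lq volume hpq
            ((hu_m.pow_const p).aemeasurable)
            ((Measurable.ennreal_ofReal (Continuous.measurable (Continuous.rpow_const (continuous_const.add (continuous_norm.pow 2)) fun y : En n => Or.inl (by positivity : (1:ℝ) + ‖y‖ ^ 2 ≠ 0)))).aemeasurable)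
      _ = (∫⁻ x, G x * ENNReal.ofReal ((1 + ‖x‖ ^ 2) ^ a)) ^ p * D ^ (1 - p) := by
          rw [one_div_one_div, one_div_one_div]
          congr 1
          · congr 1
            refine lintegral_congr fun x => ?_
            rw [← ENNReal.rpow_mul, mul_one_div_cancel hp0.ne', ENNReal.rpow_one]
          · congr 1
            rw [hDdef]
            refine lintegral_congr fun x => ?_
            rw [ENNReal.ofReal_rpow_of_pos (by positivity),
              ← Real.rpow_mul (by positivity), hexp]
  -- kernel estimate via Peetre's inequality and translation invariance
  have hKofReal : ∀ y : En n, ENNReal.ofReal ((1 + ‖y‖ ^ 2) ^ a) * (‖K y‖₊ : ℝ≥0∞) =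
      ENNReal.ofReal ((1 + ‖y‖ ^ 2) ^ a * ‖K y‖) := by
    intro y
    rw [ENNReal.ofReal_mul (by positivity), ofReal_norm, enorm_eq_nnnorm]
  have hkernel : ∀ z : En n,
      (∫⁻ x, ENNReal.ofReal ((1 + ‖x‖ ^ 2) ^ a) * (‖K (x - z)‖₊ : ℝ≥0∞)) ≤
        ENNReal.ofReal (2 ^ a) * ENNReal.ofReal ((1 + ‖z‖ ^ 2) ^ a) * B := by
    intro z
    have hstep : ∀ x : En n,
        ENNReal.ofReal ((1 + ‖x‖ ^ 2) ^ a) * (‖K (x - z)‖₊ : ℝ≥0∞) ≤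
          (ENNReal.ofReal (2 ^ a) * ENNReal.ofReal ((1 + ‖z‖ ^ 2) ^ a)) *
            (ENNReal.ofReal ((1 + ‖x - z‖ ^ 2) ^ a) * (‖K (x - z)‖₊ : ℝ≥0∞)) := by
      intro x
      rw [← mul_assoc, ← ENNReal.ofReal_mul (by positivity),
        ← ENNReal.ofReal_mul (by positivity)]
      exact mul_le_mul_left (ENNReal.ofReal_le_ofReal
        (by rw [mul_assoc]; exact peetre ha.le x z)) _
    calc (∫⁻ x, ENNReal.ofReal ((1 + ‖x‖ ^ 2) ^ a) * (‖K (x - z)‖₊ : ℝ≥0∞))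
        ≤ ∫⁻ x, (ENNReal.ofReal (2 ^ a) * ENNReal.ofReal ((1 + ‖z‖ ^ 2) ^ a)) *
            (ENNReal.ofReal ((1 + ‖x - z‖ ^ 2) ^ a) * (‖K (x - z)‖₊ : ℝ≥0∞)) :=
          lintegral_mono hstep
      _ = (ENNReal.ofReal (2 ^ a) * ENNReal.ofReal ((1 + ‖z‖ ^ 2) ^ a)) *
          ∫⁻ x, ENNReal.ofReal ((1 + ‖x - z‖ ^ 2) ^ a) * (‖K (x - z)‖₊ : ℝ≥0∞) :=
          lintegral_const_mul' _ _ (ENNReal.mul_ne_top ENNReal.ofReal_ne_top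
            ENNReal.ofReal_ne_top)
      _ = ENNReal.ofReal (2 ^ a) * ENNReal.ofReal ((1 + ‖z‖ ^ 2) ^ a) * B := by
          congr 1
          calc (∫⁻ x, ENNReal.ofReal ((1 + ‖x - z‖ ^ 2) ^ a) * (‖K (x - z)‖₊ : ℝ≥0∞))
              = ∫⁻ x, ENNReal.ofReal ((1 + ‖x - z‖ ^ 2) ^ a * ‖K (x - z)‖) :=
                lintegral_congr fun x => hKofReal (x - z)
            _ = ∫⁻ y, ENNReal.ofReal ((1 + ‖y‖ ^ 2) ^ a * ‖K y‖) :=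
                lintegral_sub_right_eq_self
                  (fun y => ENNReal.ofReal ((1 + ‖y‖ ^ 2) ^ a * ‖K y‖)) z
            _ = B := hBdef.symm
  -- the weighted L¹ bound on the convolution
  have hswapm : AEMeasurable (fun q : En n × En n =>
      ENNReal.ofReal ((1 + ‖q.1‖ ^ 2) ^ a) *
        ((‖K (q.1 - q.2)‖₊ : ℝ≥0∞) * (‖f' q.2‖₊ : ℝ≥0∞)))
      ((volume : Measure (En n)).prod (volume : Measure (En n))) := by
    apply Measurable.aemeasurable
    refine (hWm.comp measurable_fst).mul (Measurable.mul (f := fun q : En n × En n => (‖K (q.1 - q.2)‖₊ : ℝ≥0∞)) (g := fun q : En n × En n => (‖f' q.2‖₊ : ℝ≥0∞)) ?_ ?_)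
    · exact (K.continuous.comp (continuous_fst.sub continuous_snd)
        ).measurable.nnnorm.coe_nnreal_ennreal
    · exact (hf'm.measurable.nnnorm.coe_nnreal_ennreal).comp measurable_snd
  have hmain : (∫⁻ x, G x * ENNReal.ofReal ((1 + ‖x‖ ^ 2) ^ a)) ≤
      ENNReal.ofReal (2 ^ a) * B * A := by
    calc (∫⁻ x, G x * ENNReal.ofReal ((1 + ‖x‖ ^ 2) ^ a))
        ≤ ∫⁻ x, (∫⁻ z, (‖K (x - z)‖₊ : ℝ≥0∞) * (‖f' z‖₊ : ℝ≥0∞)) *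
            ENNReal.ofReal ((1 + ‖x‖ ^ 2) ^ a) :=
          lintegral_mono fun x => mul_le_mul_left (hgb x) _
      _ = ∫⁻ x, ∫⁻ z, ENNReal.ofReal ((1 + ‖x‖ ^ 2) ^ a) *
            ((‖K (x - z)‖₊ : ℝ≥0∞) * (‖f' z‖₊ : ℝ≥0∞)) := by
          refine lintegral_congr fun x => ?_
          rw [mul_comm, lintegral_const_mul' _ _ ENNReal.ofReal_ne_top]
      _ = ∫⁻ z, ∫⁻ x, ENNReal.ofReal ((1 + ‖x‖ ^ 2) ^ a) *
            ((‖K (x - z)‖₊ : ℝ≥0∞) * (‖f' z‖₊ : ℝ≥0∞)) :=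
          lintegral_lintegral_swap hswapm
      _ = ∫⁻ z, (∫⁻ x, ENNReal.ofReal ((1 + ‖x‖ ^ 2) ^ a) * (‖K (x - z)‖₊ : ℝ≥0∞)) *
            (‖f' z‖₊ : ℝ≥0∞) := by
          refine lintegral_congr fun z => ?_
          rw [← lintegral_mul_const' _ _ ENNReal.coe_ne_top]
          exact lintegral_congr fun x => by ring
      _ ≤ ∫⁻ z, (ENNReal.ofReal (2 ^ a) * ENNReal.ofReal ((1 + ‖z‖ ^ 2) ^ a) * B) *
            (‖f' z‖₊ : ℝ≥0∞) :=
          lintegral_mono fun z => mul_le_mul_left (hkernel z) _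
      _ = ENNReal.ofReal (2 ^ a) * B * A := by
          rw [hAdef, ← lintegral_const_mul' _ _
            (ENNReal.mul_ne_top ENNReal.ofReal_ne_top hBlt)]
          exact lintegral_congr fun z => by ring
  -- conclusion
  calc (∫⁻ x, G x ^ p) ^ (1 / p)
      ≤ ((∫⁻ x, G x * ENNReal.ofReal ((1 + ‖x‖ ^ 2) ^ a)) ^ p * D ^ (1 - p)) ^ (1 / p) :=
        ENNReal.rpow_le_rpow hHolder (by positivity)
    _ = (∫⁻ x, G x * ENNReal.ofReal ((1 + ‖x‖ ^ 2) ^ a)) * D ^ ((1 - p) / p) := by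
        rw [ENNReal.mul_rpow_of_nonneg _ _ (by positivity), ← ENNReal.rpow_mul,
          ← ENNReal.rpow_mul, mul_one_div_cancel hp0.ne', ENNReal.rpow_one,
          mul_one_div]
    _ ≤ (ENNReal.ofReal (2 ^ a) * B * A) * D ^ ((1 - p) / p) :=
        mul_le_mul_left hmain _
    _ = E * A := by rw [hEdef]; ring
    _ ≤ ENNReal.ofReal (E.toReal + 1) * A := mul_le_mul_left hEleC _
end
end

section
/- Let 0 < p ≤ 1, s ∈ ℝ, and let A: S* × (0,∞) → ℂ be a T^p_s(S*) atom associated with a ball B of radius r > 0, i.e. supp(A) ⊆ T(B) and ∫ |A(x,ω,σ)|² dx dω dσ/σ^{1+2s} ≤ |B|^{-(2/p - 1)}. Then for every F: S*×(0,∞) → ℂ with sup-norm weight bound sup (1+|y|+max(τ,τ^{-1}))^N |F(y,ν,τ)| < ∞ for N large enough (depending only on n, p, s), one has |∫ F(x,ω,σ) A(x,ω,σ) dx dω dσ/σ| ≤ C sup_{(y,ν,τ)} (1+|y|+max(τ,τ^{-1}))^N |F(y,ν,τ)|, with C independent of the atom A. -/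
open MeasureTheory Metric Set
open scoped ENNReal NNReal FourierTransform

noncomputable section

/-- The tent T(B) over the ball B = B_r(c). -/
def tentOver {n : ℕ} (c : CoSph n) (r : ℝ) : Set (CoSph n × ℝ) :=
  {q | 0 < q.2 ∧ ∀ b : CoSph n, rho q.1 b < Real.sqrt q.2 → b ∈ rball c r}

/-- The measure dx dω dσ/σ on S* × (0,∞). -/
def muSp (n : ℕ) : Measure (CoSph n × ℝ) :=
  ((muS n).prod ((volume : Measure ℝ).restrict (Set.Ioi 0))).withDensity
    (fun q => ENNReal.ofReal q.2⁻¹)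

open scoped Pointwise

section Aux
variable {n : ℕ}

lemma rho_self (a : CoSph n) : rho a a = 0 := by
  simp [rho]

lemma norm_fst_sub_le_rho (a b : CoSph n) : ‖a.1 - b.1‖ ≤ rho a b := by
  have h1 : (0:ℝ) ≤ |inner (𝕜 := ℝ) ((a.2 : En n)) (a.1 - b.1)| := abs_nonneg _
  have h2 : (0:ℝ) ≤ ‖(a.2 : En n) - (b.2 : En n)‖ ^ 2 := sq_nonneg _
  calc ‖a.1 - b.1‖ = Real.sqrt (‖a.1 - b.1‖ ^ 2) := (Real.sqrt_sq (norm_nonneg _)).symm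
    _ ≤ rho a b := Real.sqrt_le_sqrt (by nlinarith)

lemma continuous_rho (c : CoSph n) : Continuous (fun b => rho c b) := by
  unfold rho
  apply Real.continuous_sqrt.comp
  apply Continuous.add
  apply Continuous.add
  · exact (Continuous.inner continuous_const (continuous_const.sub continuous_fst)).abs
  · exact ((continuous_const.sub continuous_fst).norm).pow 2
  · exact ((continuous_const.sub (continuous_subtype_val.comp continuous_snd)).norm).pow 2

lemma measurableSet_rball (c : CoSph n) (τ : ℝ) : MeasurableSet (rball c τ) :=
  measurableSet_lt (continuous_rho c).measurable measurable_const

end Aux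

section Tent
variable {n : ℕ}

lemma tent_fst_mem {c : CoSph n} {r : ℝ} {q : CoSph n × ℝ} (hq : q ∈ tentOver c r) :
    q.1 ∈ rball c r :=
  hq.2 q.1 (by rw [rho_self]; exact Real.sqrt_pos.2 hq.1)

lemma exists_perp (hn : 2 ≤ n) (ω : Sph n) :
    ∃ e : En n, ‖e‖ = 1 ∧ inner (𝕜 := ℝ) ((ω : En n)) e = 0 := by
  have hω : ‖(ω : En n)‖ = 1 := norm_eq_of_mem_sphere ω
  have hω0 : (ω : En n) ≠ 0 := by
    intro h; rw [h, norm_zero] at hω; norm_num at hω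
  set K : Submodule ℝ (En n) := ℝ ∙ (ω : En n) with hK
  have hrank : Module.finrank ℝ K + Module.finrank ℝ Kᗮ = n := by
    rw [K.finrank_add_finrank_orthogonal, finrank_euclideanSpace_fin]
  have hK1 : Module.finrank ℝ K = 1 := finrank_span_singleton hω0
  have hne : Kᗮ ≠ ⊥ := by
    intro h
    rw [h, finrank_bot, hK1] at hrank
    omega
  obtain ⟨v, hvK, hv0⟩ := Submodule.exists_mem_ne_zero_of_ne_bot hne
  refine ⟨‖v‖⁻¹ • v, ?_, ?_⟩
  · rw [norm_smul, norm_inv, norm_norm, inv_mul_cancel₀ (norm_ne_zero_iff.2 hv0)]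
  · rw [inner_smul_right]
    have := (Submodule.mem_orthogonal K v).1 hvK (ω : En n)
      (Submodule.mem_span_singleton_self _)
    rw [this, mul_zero]

lemma tent_snd_le (hn : 2 ≤ n) {c : CoSph n} {r : ℝ} (hr : 0 < r) {q : CoSph n × ℝ}
    (hq : q ∈ tentOver c r) : q.2 ≤ 4 * r ^ 2 := by
  obtain ⟨hσ, hT⟩ := hq
  obtain ⟨e, he1, he2⟩ := exists_perp hn q.1.2
  have hq1 : q.1 ∈ rball c r := tent_fst_mem ⟨hσ, hT⟩
  have key : ∀ t : ℝ, t < Real.sqrt q.2 → t < 2 * r := by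
    intro t ht
    rcases le_or_gt t 0 with h | h
    · linarith
    · have hb : (⟨q.1.1 - t • e, q.1.2⟩ : CoSph n) ∈ rball c r := by
        apply hT
        have hrho : rho q.1 ⟨q.1.1 - t • e, q.1.2⟩ = t := by
          unfold rho
          simp only
          rw [show q.1.1 - (q.1.1 - t • e) = t • e by abel]
          rw [inner_smul_right, he2, mul_zero, abs_zero, sub_self, norm_zero, norm_smul, he1]
          simp [Real.norm_eq_abs, abs_of_pos h, Real.sqrt_sq h.le]
        rw [hrho]; exact ht
      have h1 : ‖c.1 - (q.1.1 - t • e)‖ < r :=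
        lt_of_le_of_lt (norm_fst_sub_le_rho c ⟨q.1.1 - t • e, q.1.2⟩) hb
      have h2 : ‖c.1 - q.1.1‖ < r := lt_of_le_of_lt (norm_fst_sub_le_rho c q.1) hq1
      have h3 := norm_sub_le (c.1 - (q.1.1 - t • e)) (c.1 - q.1.1)
      rw [show c.1 - (q.1.1 - t • e) - (c.1 - q.1.1) = t • e by abel] at h3
      rw [norm_smul, he1, mul_one, Real.norm_eq_abs, abs_of_pos h] at h3
      linarith
  have hsq : Real.sqrt q.2 ≤ 2 * r := le_of_forall_lt key
  calc q.2 = Real.sqrt q.2 ^ 2 := (Real.sq_sqrt hσ.le).symm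
    _ ≤ (2 * r) ^ 2 := by nlinarith [Real.sqrt_nonneg q.2]
    _ = 4 * r ^ 2 := by ring

end Tent

section Volume
variable {n : ℕ}

lemma nontrivial_En (hn : 2 ≤ n) : Nontrivial (En n) :=
  Module.nontrivial_of_finrank_pos (R := ℝ) (by rw [finrank_euclideanSpace_fin]; omega)

lemma measurableSet_cap_s15 (ω₀ : Sph n) (δ : ℝ) :
    MeasurableSet {ν : Sph n | ‖(ν : En n) - (ω₀ : En n)‖ < δ} := by
  have : {ν : Sph n | ‖(ν : En n) - (ω₀ : En n)‖ < δ}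
      = (fun ν : Sph n => (ν : En n)) ⁻¹' (ball (ω₀ : En n) δ) := by
    ext ν; simp only [mem_setOf_eq, mem_preimage, mem_ball, dist_eq_norm]
  rw [this]
  exact continuous_subtype_val.measurable measurableSet_ball

lemma sphMeasure_cap_lower (hn : 2 ≤ n) (ω₀ : Sph n) {δ : ℝ} (hδ0 : 0 < δ) (hδ1 : δ ≤ 1) :
    ENNReal.ofReal ((δ / 8) ^ n) ≤ sphMeasure n {ν : Sph n | ‖(ν : En n) - (ω₀ : En n)‖ < δ} := by
  haveI : Nontrivial (En n) := nontrivial_En hn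
  set V₁ := volume (ball (0 : En n) 1) with hV₁
  have hV₁0 : V₁ ≠ 0 := (measure_ball_pos volume 0 one_pos).ne'
  have hV₁top : V₁ ≠ ⊤ := measure_ball_lt_top.ne
  set cap := {ν : Sph n | ‖(ν : En n) - (ω₀ : En n)‖ < δ} with hcapdef
  -- the scaled cone over the cap contains a small ball
  have hsub : ball ((2⁻¹ : ℝ) • (ω₀ : En n)) (δ / 8) ⊆
      Ioo (0 : ℝ) 1 • (Subtype.val '' cap) := by
    intro z hz
    rw [mem_ball, dist_eq_norm] at hz
    have hω : ‖(ω₀ : En n)‖ = 1 := norm_eq_of_mem_sphere ω₀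
    have hhalf : ‖(2⁻¹ : ℝ) • (ω₀ : En n)‖ = 2⁻¹ := by
      rw [norm_smul, hω, mul_one, Real.norm_eq_abs]; norm_num
    have habs : |‖z‖ - 2⁻¹| ≤ ‖z - (2⁻¹ : ℝ) • (ω₀ : En n)‖ := by
      have := abs_norm_sub_norm_le z ((2⁻¹ : ℝ) • (ω₀ : En n))
      rwa [hhalf] at this
    have hzn1 : 2⁻¹ - δ / 8 < ‖z‖ := by
      have := abs_lt.1 (lt_of_le_of_lt habs hz)
      linarith [this.1]
    have hzn2 : ‖z‖ < 2⁻¹ + δ / 8 := by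
      have := abs_lt.1 (lt_of_le_of_lt habs hz)
      linarith [this.2]
    have hz0 : 0 < ‖z‖ := by linarith
    have hzz : z ≠ 0 := by
      intro h; rw [h, norm_zero] at hz0; exact lt_irrefl _ hz0
    set ν := ‖z‖⁻¹ • z with hν
    have hνn : ‖ν‖ = 1 := norm_smul_inv_norm hzz
    have hν2z : ‖ν - (2 : ℝ) • z‖ = |1 - 2 * ‖z‖| := by
      have h1 : ν - (2 : ℝ) • z = (‖z‖⁻¹ - 2) • z := by
        rw [sub_smul]
      have h2 : (‖z‖⁻¹ - 2) * ‖z‖ = 1 - 2 * ‖z‖ := by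
        field_simp
      calc ‖ν - (2 : ℝ) • z‖ = ‖(‖z‖⁻¹ - 2) • z‖ := by rw [h1]
        _ = |‖z‖⁻¹ - 2| * ‖z‖ := by rw [norm_smul, Real.norm_eq_abs]
        _ = |(‖z‖⁻¹ - 2) * ‖z‖| := by rw [abs_mul, abs_of_nonneg (norm_nonneg z)]
        _ = |1 - 2 * ‖z‖| := by rw [h2]
    have hcapν : ‖ν - (ω₀ : En n)‖ < δ := by
      have e1 : ‖ν - (2 : ℝ) • z‖ ≤ δ / 4 := by
        rw [hν2z]
        have : |1 - 2 * ‖z‖| = 2 * |‖z‖ - 2⁻¹| := by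
          rw [abs_sub_comm]
          rw [show (2:ℝ) * ‖z‖ - 1 = 2 * (‖z‖ - 2⁻¹) by ring, abs_mul]
          norm_num
        rw [this]
        nlinarith [habs, hz.le]
      have e2 : ‖(2 : ℝ) • z - (ω₀ : En n)‖ ≤ δ / 4 := by
        have : (2 : ℝ) • z - (ω₀ : En n) = (2 : ℝ) • (z - (2⁻¹ : ℝ) • (ω₀ : En n)) := by
          rw [smul_sub, smul_smul]; norm_num
        rw [this, norm_smul, Real.norm_eq_abs]
        rw [abs_of_nonneg (by norm_num : (0:ℝ) ≤ 2)]
        nlinarith [hz.le]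
      calc ‖ν - (ω₀ : En n)‖ = ‖(ν - (2:ℝ) • z) + ((2:ℝ) • z - (ω₀ : En n))‖ := by abel_nf
        _ ≤ ‖ν - (2:ℝ) • z‖ + ‖(2:ℝ) • z - (ω₀ : En n)‖ := norm_add_le _ _
        _ ≤ δ / 4 + δ / 4 := add_le_add e1 e2
        _ < δ := by linarith
    have hνS : ν ∈ Metric.sphere (0 : En n) 1 := by
      rw [mem_sphere_zero_iff_norm]; exact hνn
    refine Set.mem_smul.2 ⟨‖z‖, ?_, ν, ⟨⟨ν, hνS⟩, hcapν, rfl⟩, ?_⟩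
    · exact ⟨hz0, by linarith⟩
    · rw [hν, smul_inv_smul₀ hz0.ne']
  have hfr : Module.finrank ℝ (En n) = n := finrank_euclideanSpace_fin
  have htS : ENNReal.ofReal ((δ / 8) ^ n) * ((n : ℝ≥0∞) * V₁) ≤ volume.toSphere cap := by
    rw [Measure.toSphere_apply' volume (measurableSet_cap_s15 ω₀ δ), hfr]
    have := measure_mono hsub (μ := (volume : Measure (En n)))
    have hball : volume (ball ((2⁻¹ : ℝ) • (ω₀ : En n)) (δ / 8)) =
        ENNReal.ofReal ((δ / 8) ^ n) * V₁ := by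
      rw [Measure.addHaar_ball _ _ (by positivity : (0:ℝ) ≤ δ / 8), hfr]
    calc ENNReal.ofReal ((δ / 8) ^ n) * ((n : ℝ≥0∞) * V₁)
        = (n : ℝ≥0∞) * (ENNReal.ofReal ((δ / 8) ^ n) * V₁) := by ring
      _ ≤ (n : ℝ≥0∞) * volume (Ioo (0:ℝ) 1 • (Subtype.val '' cap)) := by
          gcongr
          rw [← hball]; exact this
  have huniv : volume.toSphere (Set.univ : Set (Sph n)) = (n : ℝ≥0∞) * V₁ := by
    rw [Measure.toSphere_apply_univ, hfr, hV₁]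
  have hnV0 : (n : ℝ≥0∞) * V₁ ≠ 0 := by
    apply mul_ne_zero _ hV₁0
    simp; omega
  have hnVtop : (n : ℝ≥0∞) * V₁ ≠ ⊤ := by
    exact ENNReal.mul_ne_top (ENNReal.natCast_ne_top n) hV₁top
  rw [sphMeasure, Measure.smul_apply, smul_eq_mul, huniv]
  calc ENNReal.ofReal ((δ / 8) ^ n)
      = ((n : ℝ≥0∞) * V₁)⁻¹ * (ENNReal.ofReal ((δ / 8) ^ n) * ((n : ℝ≥0∞) * V₁)) := by
        rw [mul_comm (ENNReal.ofReal _), ← mul_assoc, ENNReal.inv_mul_cancel hnV0 hnVtop, one_mul]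
    _ ≤ ((n : ℝ≥0∞) * V₁)⁻¹ * volume.toSphere cap := by gcongr

lemma sphMeasure_univ (hn : 2 ≤ n) : sphMeasure n (Set.univ : Set (Sph n)) = 1 := by
  haveI : Nontrivial (En n) := nontrivial_En hn
  have hfr : Module.finrank ℝ (En n) = n := finrank_euclideanSpace_fin
  have huniv : volume.toSphere (Set.univ : Set (Sph n)) =
      (n : ℝ≥0∞) * volume (ball (0 : En n) 1) := by
    rw [Measure.toSphere_apply_univ, hfr]
  rw [sphMeasure, Measure.smul_apply, smul_eq_mul, huniv]
  apply ENNReal.inv_mul_cancel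
  · apply mul_ne_zero _ (measure_ball_pos volume 0 one_pos).ne'
    simp; omega
  · exact ENNReal.mul_ne_top (ENNReal.natCast_ne_top n) measure_ball_lt_top.ne

end Volume

section MuS
variable {n : ℕ}

lemma muS_rball_lower (hn : 2 ≤ n) (c : CoSph n) {r : ℝ} (hr : 0 < r) :
    volume (ball (0 : En n) 1) * ENNReal.ofReal (((min r 1) ^ 4 / 128) ^ n)
      ≤ muS n (rball c r) := by
  haveI : Nontrivial (En n) := nontrivial_En hn
  set m := min r 1 with hm
  have hm0 : 0 < m := lt_min hr one_pos
  have hm1 : m ≤ 1 := min_le_right _ _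
  have hmr : m ≤ r := min_le_left _ _
  set δ := m ^ 2 / 4 with hδ
  have hδ0 : 0 < δ := by positivity
  have hδ1 : δ ≤ 1 := by nlinarith
  haveI : IsFiniteMeasure (sphMeasure n) :=
    ⟨by rw [sphMeasure_univ hn]; exact ENNReal.one_lt_top⟩
  set cap := {ν : Sph n | ‖(ν : En n) - (c.2 : En n)‖ < δ} with hcap
  have hsub : ball c.1 δ ×ˢ cap ⊆ rball c r := by
    rintro ⟨y, ν⟩ ⟨hy, hν⟩
    have hy' : ‖c.1 - y‖ < δ := by
      rw [mem_ball, dist_eq_norm] at hy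
      rwa [norm_sub_rev]
    have hν' : ‖(c.2 : En n) - (ν : En n)‖ < δ := by
      have : ‖(ν : En n) - (c.2 : En n)‖ < δ := hν
      rwa [norm_sub_rev] at this
    have hinner : |inner (𝕜 := ℝ) ((c.2 : En n)) (c.1 - y)| ≤ ‖c.1 - y‖ := by
      have h := abs_real_inner_le_norm ((c.2 : En n)) (c.1 - y)
      rwa [norm_eq_of_mem_sphere c.2, one_mul] at h
    show rho c (y, ν) < r
    rw [rho]
    have hsum : |inner (𝕜 := ℝ) ((c.2 : En n)) (c.1 - y)| + ‖c.1 - y‖ ^ 2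
        + ‖(c.2 : En n) - (ν : En n)‖ ^ 2 < r ^ 2 := by
      have hδq : δ ≤ m ^ 2 / 4 := le_of_eq rfl
      have h2 : ‖c.1 - y‖ ^ 2 < δ ^ 2 := by
        have := norm_nonneg (c.1 - y); nlinarith
      have h3 : ‖(c.2 : En n) - (ν : En n)‖ ^ 2 < δ ^ 2 := by
        have := norm_nonneg ((c.2 : En n) - (ν : En n)); nlinarith
      have hδq4 : δ ≤ 1 / 4 := by nlinarith
      have hδsq : δ ^ 2 ≤ δ / 4 := by nlinarith
      have : δ + 2 * (δ / 4) ≤ m ^ 2 := by nlinarith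
      have hmr2 : m ^ 2 ≤ r ^ 2 := by nlinarith
      nlinarith [hinner, hy'.le]
    rw [show r = Real.sqrt (r ^ 2) by rw [Real.sqrt_sq hr.le]]
    apply Real.sqrt_lt_sqrt _ hsum
    positivity
  calc volume (ball (0 : En n) 1) * ENNReal.ofReal ((m ^ 4 / 128) ^ n)
      = ENNReal.ofReal (δ ^ n) * volume (ball (0 : En n) 1)
        * ENNReal.ofReal ((δ / 8) ^ n) := by
        rw [mul_comm (ENNReal.ofReal (δ ^ n)), mul_assoc, ← ENNReal.ofReal_mul (by positivity),
          ← mul_pow]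
        congr 3
        rw [hδ]; ring
    _ = volume (ball c.1 δ) * ENNReal.ofReal ((δ / 8) ^ n) := by
        rw [Measure.addHaar_ball _ _ hδ0.le, finrank_euclideanSpace_fin]
    _ ≤ volume (ball c.1 δ) * sphMeasure n cap := by
        gcongr
        exact sphMeasure_cap_lower hn c.2 hδ0 hδ1
    _ = muS n (ball c.1 δ ×ˢ cap) := by
        rw [muS, Measure.prod_prod]
    _ ≤ muS n (rball c r) := measure_mono hsub

lemma muS_rball_lt_top (hn : 2 ≤ n) (c : CoSph n) (r : ℝ) : muS n (rball c r) < ⊤ := by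
  haveI : IsFiniteMeasure (sphMeasure n) :=
    ⟨by rw [sphMeasure_univ hn]; exact ENNReal.one_lt_top⟩
  have hsub : rball c r ⊆ ball c.1 r ×ˢ (Set.univ : Set (Sph n)) := by
    intro b hb
    constructor
    · rw [mem_ball, dist_eq_norm, norm_sub_rev]
      exact lt_of_le_of_lt (norm_fst_sub_le_rho c b) hb
    · trivial
  apply lt_of_le_of_lt (measure_mono hsub)
  rw [muS, Measure.prod_prod, sphMeasure_univ hn, mul_one]
  exact measure_ball_lt_top

end MuS

section Sigma

lemma max_one_le {σ : ℝ} (hσ : 0 < σ) : 1 ≤ max σ σ⁻¹ := by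
  rcases le_or_gt 1 σ with h | h
  · exact le_max_of_le_left h
  · exact le_max_of_le_right (one_le_inv₀ hσ |>.2 h.le)

lemma max_pos' {σ : ℝ} (hσ : 0 < σ) : 0 < max σ σ⁻¹ := lt_of_lt_of_le one_pos (max_one_le hσ)

lemma max_eq_inv_of_le_one {σ : ℝ} (hσ : 0 < σ) (h1 : σ ≤ 1) : max σ σ⁻¹ = σ⁻¹ :=
  max_eq_right (le_trans h1 (one_le_inv₀ hσ |>.2 h1))

lemma weight_lintegral_lt_top {a s : ℝ} (h1 : -1 < a + (2 * s - 1)) (h2 : -a + (2 * s - 1) < -1) :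
    ∫⁻ σ in Ioi (0 : ℝ), ENNReal.ofReal ((max σ σ⁻¹) ^ (-a) * σ ^ (2 * s - 1)) < ⊤ := by
  rw [← Ioc_union_Ioi_eq_Ioi (zero_le_one' ℝ),
    lintegral_union measurableSet_Ioi (Ioc_disjoint_Ioi le_rfl)]
  have fin_of_int : ∀ (t : Set ℝ) (f : ℝ → ℝ), IntegrableOn f t volume →
      ∫⁻ σ in t, ENNReal.ofReal (f σ) ∂volume < ⊤ := by
    intro t f hf
    apply lt_of_le_of_lt _ hf.2
    apply lintegral_mono
    intro x
    exact ENNReal.ofReal_le_of_le_toReal (by simp [ENNReal.coe_toReal]; exact Real.le_norm_self _)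
  apply ENNReal.add_lt_top.2
  constructor
  · have hcong : ∫⁻ σ in Ioc (0:ℝ) 1, ENNReal.ofReal ((max σ σ⁻¹) ^ (-a) * σ ^ (2 * s - 1))
        = ∫⁻ σ in Ioc (0:ℝ) 1, ENNReal.ofReal (σ ^ (a + (2 * s - 1))) := by
      apply setLIntegral_congr_fun measurableSet_Ioc
      intro σ hσ
      dsimp only
      obtain ⟨hσ0, hσ1⟩ := hσ
      rw [max_eq_inv_of_le_one hσ0 hσ1, ← Real.rpow_neg_one σ,
        ← Real.rpow_mul hσ0.le, show (-1 : ℝ) * -a = a by ring, ← Real.rpow_add hσ0]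
    rw [hcong, ← setLIntegral_congr (Ioo_ae_eq_Ioc (μ := volume) (a := (0:ℝ)) (b := 1))]
    exact fin_of_int _ _ ((intervalIntegral.integrableOn_Ioo_rpow_iff one_pos).2 h1)
  · have hcong : ∫⁻ σ in Ioi (1:ℝ), ENNReal.ofReal ((max σ σ⁻¹) ^ (-a) * σ ^ (2 * s - 1))
        = ∫⁻ σ in Ioi (1:ℝ), ENNReal.ofReal (σ ^ (-a + (2 * s - 1))) := by
      apply setLIntegral_congr_fun measurableSet_Ioi
      intro σ hσ
      dsimp only
      have hσ0 : (0:ℝ) < σ := lt_trans one_pos hσ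
      have hmax : max σ σ⁻¹ = σ := max_eq_left ((inv_le_one_of_one_le₀ hσ.le).trans hσ.le)
      rw [hmax, ← Real.rpow_add hσ0]
    rw [hcong]
    exact fin_of_int _ _ (integrableOn_Ioi_rpow_of_lt h2 one_pos)

lemma max_rpow_bound {r N β s : ℝ} (hr : 0 < r) (hβ : 0 ≤ β) (hN : β / 2 ≤ 2 * N) {σ : ℝ}
    (hσ0 : 0 < σ) (hσle : σ ≤ 4 * r ^ 2) :
    (max σ σ⁻¹) ^ (-(2 * N)) * σ ^ (2 * s - 1) ≤
      2 ^ β * (min r 1) ^ β * ((max σ σ⁻¹) ^ (-(2 * N - β / 2)) * σ ^ (2 * s - 1)) := by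
  have hmax1 : 1 ≤ max σ σ⁻¹ := max_one_le hσ0
  have hmax0 : 0 < max σ σ⁻¹ := max_pos' hσ0
  have key : (max σ σ⁻¹) ^ (-(β / 2)) ≤ 2 ^ β * (min r 1) ^ β := by
    rcases le_or_gt (1/2 : ℝ) r with h | h
    · have hm : (1/2 : ℝ) ≤ min r 1 := le_min h (by norm_num)
      have h1 : (max σ σ⁻¹) ^ (-(β / 2)) ≤ 1 :=
        Real.rpow_le_one_of_one_le_of_nonpos hmax1 (by linarith)
      have h2 : (1:ℝ) ≤ 2 ^ β * (min r 1) ^ β := by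
        rw [← Real.mul_rpow (by norm_num) (le_trans (by norm_num) hm)]
        calc (1:ℝ) = 1 ^ β := (Real.one_rpow β).symm
          _ ≤ (2 * min r 1) ^ β := Real.rpow_le_rpow zero_le_one (by linarith) hβ
      linarith
    · have hσ1 : σ < 1 := by nlinarith
      have hmineq : min r 1 = r := min_eq_left (by linarith)
      rw [max_eq_inv_of_le_one hσ0 hσ1.le]
      have e1 : (σ⁻¹) ^ (-(β / 2)) = σ ^ (β / 2) := by
        rw [← Real.rpow_neg_one σ, ← Real.rpow_mul hσ0.le,
          show (-1 : ℝ) * -(β / 2) = β / 2 by ring]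
      rw [e1, hmineq]
      calc σ ^ (β / 2) ≤ (4 * r ^ 2) ^ (β / 2) :=
            Real.rpow_le_rpow hσ0.le hσle (by linarith)
        _ = 2 ^ β * r ^ β := by
            rw [show (4 : ℝ) * r ^ 2 = (2 * r) ^ (2 : ℕ) by ring,
              ← Real.rpow_natCast (2 * r) 2, ← Real.rpow_mul (by linarith),
              show ((2 : ℕ) : ℝ) * (β / 2) = β by push_cast; ring,
              Real.mul_rpow (by norm_num) hr.le]
  calc (max σ σ⁻¹) ^ (-(2 * N)) * σ ^ (2 * s - 1)
      = (max σ σ⁻¹) ^ (-(β / 2)) * ((max σ σ⁻¹) ^ (-(2 * N - β / 2)) * σ ^ (2 * s - 1)) := by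
        rw [← mul_assoc, ← Real.rpow_add hmax0]
        ring_nf
    _ ≤ 2 ^ β * (min r 1) ^ β * ((max σ σ⁻¹) ^ (-(2 * N - β / 2)) * σ ^ (2 * s - 1)) := by
        apply mul_le_mul_of_nonneg_right key
        positivity

end Sigma

/-- Every T^p_s(S*) atom pairs continuously against the test class 𝒥:
for N large enough (depending only on n, p, s) there is C, independent of the atom, with
|∫ F A dx dω dσ/σ| ≤ C sup (1+|y|+max(τ,τ⁻¹))^N |F(y,ν,τ)|. -/
theorem atom_pairs_with_test_class (n : ℕ) (hn : 2 ≤ n) (p s : ℝ) (hp0 : 0 < p)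
    (hp1 : p ≤ 1) :
    ∃ N₀ : ℝ, ∀ N : ℝ, N₀ ≤ N → ∃ C : ℝ≥0,
      ∀ (A : CoSph n × ℝ → ℂ) (c : CoSph n) (r : ℝ), Measurable A → 0 < r →
        (∀ q, A q ≠ 0 → q ∈ tentOver c r) →
        (∫⁻ q, (‖A q‖₊ : ℝ≥0∞) ^ (2 : ℝ) * ENNReal.ofReal (q.2 ^ (-2 * s))
            ∂(muSp n) ≤ (muS n (rball c r)) ^ (-(2 / p - 1))) →
        ∀ (F : CoSph n × ℝ → ℂ) (S : ℝ), Measurable F → 0 ≤ S →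
          (∀ q : CoSph n × ℝ, 0 < q.2 →
            (1 + ‖q.1.1‖ + max q.2 q.2⁻¹) ^ N * ‖F q‖ ≤ S) →
          ∫⁻ q, (‖F q‖₊ : ℝ≥0∞) * (‖A q‖₊ : ℝ≥0∞) ∂(muSp n) ≤ C * ENNReal.ofReal S := by
  classical
  haveI : Nontrivial (En n) := nontrivial_En hn
  set γ : ℝ := 1 / p - 1 with hγdef
  have hγ0 : 0 ≤ γ := by
    rw [hγdef]
    have : 1 ≤ 1 / p := one_le_one_div hp0 hp1
    linarith
  set β : ℝ := 8 * n * γ with hβdef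
  have hβ0 : 0 ≤ β := by positivity
  refine ⟨β / 4 + |s| + 1, ?_⟩
  intro N hN
  have habs := abs_nonneg s
  have hsabs1 := le_abs_self s
  have hsabs2 := neg_abs_le s
  have hN0 : 0 ≤ N := by linarith
  set a : ℝ := 2 * N - β / 2 with hadef
  have ha1 : -1 < a + (2 * s - 1) := by rw [hadef]; linarith
  have ha2 : -a + (2 * s - 1) < -1 := by rw [hadef]; linarith
  set K := ∫⁻ σ in Ioi (0 : ℝ), ENNReal.ofReal ((max σ σ⁻¹) ^ (-a) * σ ^ (2 * s - 1)) with hKdef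
  have hKtop : K ≠ ⊤ := (weight_lintegral_lt_top ha1 ha2).ne
  set V₁ := volume (ball (0 : En n) 1) with hV₁def
  have hV₁0 : V₁ ≠ 0 := (measure_ball_pos volume 0 one_pos).ne'
  have hV₁top : V₁ ≠ ⊤ := measure_ball_lt_top.ne
  set κE : ℝ≥0∞ := V₁ * ENNReal.ofReal ((128⁻¹ : ℝ) ^ n) with hκdef
  have hκ0 : κE ≠ 0 := by
    apply mul_ne_zero hV₁0
    simp only [ne_eq, ENNReal.ofReal_eq_zero, not_le]
    positivity
  have hκtop : κE ≠ ⊤ := ENNReal.mul_ne_top hV₁top ENNReal.ofReal_ne_top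
  have hκrpow0 : κE ^ (2 * γ) ≠ 0 := (ENNReal.rpow_pos (zero_lt_iff.2 hκ0) hκtop).ne'
  have hκrpowtop : κE ^ (2 * γ) ≠ ⊤ := ENNReal.rpow_ne_top_of_nonneg (by linarith) hκtop
  set Z : ℝ≥0∞ := ENNReal.ofReal (2 ^ β) * K * (κE ^ (2 * γ))⁻¹ with hZdef
  have hZtop : Z ≠ ⊤ := by
    rw [hZdef]
    exact ENNReal.mul_ne_top (ENNReal.mul_ne_top ENNReal.ofReal_ne_top hKtop)
      (ENNReal.inv_ne_top.2 hκrpow0)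
  have hZhalftop : Z ^ (1 / 2 : ℝ) ≠ ⊤ := ENNReal.rpow_ne_top_of_nonneg (by norm_num) hZtop
  refine ⟨(Z ^ (1 / 2 : ℝ)).toNNReal, ?_⟩
  intro A c r hAmeas hr hsupp hatom F S hFmeas hS0 hFS
  -- ae positivity of the second coordinate
  have hae : ∀ᵐ q ∂(muSp n), 0 < q.2 := by
    have hnull : ((muS n).prod ((volume : Measure ℝ).restrict (Set.Ioi 0)))
        {q : CoSph n × ℝ | ¬ 0 < q.2} = 0 := by
      have hset : {q : CoSph n × ℝ | ¬ 0 < q.2} = Set.univ ×ˢ Iic (0 : ℝ) := by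
        ext q; simp [not_lt]
      rw [hset, Measure.prod_prod, Measure.restrict_apply measurableSet_Iic]
      rw [Set.Iic_inter_Ioi, Set.Ioc_self, measure_empty, mul_zero]
    have := withDensity_absolutelyContinuous
      ((muS n).prod ((volume : Measure ℝ).restrict (Set.Ioi 0)))
      (fun q : CoSph n × ℝ => ENNReal.ofReal q.2⁻¹)
    rw [ae_iff]
    exact this hnull
  -- pointwise bound on F
  have hFb : ∀ q : CoSph n × ℝ, 0 < q.2 → ‖F q‖ ≤ S * (max q.2 q.2⁻¹) ^ (-N) := by
    intro q hσ
    have hmax1 : 1 ≤ max q.2 q.2⁻¹ := max_one_le hσ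
    have hmax0 : (0:ℝ) < max q.2 q.2⁻¹ := max_pos' hσ
    have hbase : max q.2 q.2⁻¹ ≤ 1 + ‖q.1.1‖ + max q.2 q.2⁻¹ := by
      linarith [norm_nonneg q.1.1]
    have hpow : (max q.2 q.2⁻¹) ^ N ≤ (1 + ‖q.1.1‖ + max q.2 q.2⁻¹) ^ N :=
      Real.rpow_le_rpow hmax0.le hbase hN0
    have hposN : (0:ℝ) < (max q.2 q.2⁻¹) ^ N := Real.rpow_pos_of_pos hmax0 N
    have h1 : (max q.2 q.2⁻¹) ^ N * ‖F q‖ ≤ S := by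
      calc (max q.2 q.2⁻¹) ^ N * ‖F q‖ ≤ (1 + ‖q.1.1‖ + max q.2 q.2⁻¹) ^ N * ‖F q‖ :=
            mul_le_mul_of_nonneg_right hpow (norm_nonneg _)
        _ ≤ S := hFS q hσ
    rw [Real.rpow_neg hmax0.le, ← div_eq_mul_inv]
    rw [le_div_iff₀ hposN]
    linarith [h1, mul_comm ((max q.2 q.2⁻¹) ^ N) ‖F q‖]
  rcases eq_or_lt_of_le hS0 with hS | hS
  · -- S = 0 : F vanishes a.e.
    have hzero : ∫⁻ q, (‖F q‖₊ : ℝ≥0∞) * (‖A q‖₊ : ℝ≥0∞) ∂(muSp n) = 0 := by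
      rw [← lintegral_zero (μ := muSp n)]
      apply lintegral_congr_ae
      filter_upwards [hae] with q hσ
      have := hFb q hσ
      rw [← hS, zero_mul] at this
      have hF0 : F q = 0 := by
        have := le_antisymm this (norm_nonneg _)
        rwa [norm_eq_zero] at this
      simp [hF0]
    rw [hzero]
    exact bot_le
  -- main case : 0 < S
  set M := muS n (rball c r) with hMdef
  set m := min r 1 with hmdef
  have hm0 : 0 < m := lt_min hr one_pos
  have hMlow : V₁ * ENNReal.ofReal ((m ^ 4 / 128) ^ n) ≤ M := muS_rball_lower hn c hr
  have hLne0 : V₁ * ENNReal.ofReal ((m ^ 4 / 128) ^ n) ≠ 0 := by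
    apply mul_ne_zero hV₁0
    simp only [ne_eq, ENNReal.ofReal_eq_zero, not_le]
    positivity
  have hM0 : M ≠ 0 := by
    intro h
    rw [h, le_zero_iff] at hMlow
    exact hLne0 hMlow
  have hMtop : M ≠ ⊤ := (muS_rball_lt_top hn c r).ne
  set box := (rball c r) ×ˢ (Ioc (0:ℝ) (4 * r ^ 2)) with hboxdef
  have hboxm : MeasurableSet box := (measurableSet_rball c r).prod measurableSet_Ioc
  set f : CoSph n × ℝ → ℝ≥0∞ :=
    fun q => box.indicator (fun q => (‖F q‖₊ : ℝ≥0∞) * ENNReal.ofReal (q.2 ^ s)) q with hfdef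
  set g : CoSph n × ℝ → ℝ≥0∞ :=
    fun q => (‖A q‖₊ : ℝ≥0∞) * ENNReal.ofReal (q.2 ^ (-s)) with hgdef
  have hfmeas : Measurable f := by
    apply Measurable.indicator _ hboxm
    exact (hFmeas.nnnorm.coe_nnreal_ennreal).mul
      (ENNReal.measurable_ofReal.comp (Measurable.pow measurable_snd measurable_const))
  have hgmeas : Measurable g :=
    (hAmeas.nnnorm.coe_nnreal_ennreal).mul
      (ENNReal.measurable_ofReal.comp (Measurable.pow measurable_snd measurable_const))
  have hstep1 : ∫⁻ q, (‖F q‖₊ : ℝ≥0∞) * (‖A q‖₊ : ℝ≥0∞) ∂(muSp n)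
      ≤ ∫⁻ q, (f * g) q ∂(muSp n) := by
    apply lintegral_mono_ae
    filter_upwards [hae] with q hσ
    simp only [Pi.mul_apply]
    by_cases hA : A q = 0
    · simp [hgdef, hA]
    · have htent := hsupp q hA
      have h1 : q.1 ∈ rball c r := tent_fst_mem htent
      have h2 : q.2 ∈ Ioc (0:ℝ) (4 * r ^ 2) := ⟨hσ, tent_snd_le hn hr htent⟩
      have hmem : q ∈ box := Set.mem_prod.2 ⟨h1, h2⟩
      apply le_of_eq
      simp only [hfdef, hgdef]
      rw [Set.indicator_of_mem hmem]
      calc (‖F q‖₊ : ℝ≥0∞) * (‖A q‖₊ : ℝ≥0∞)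
          = (‖F q‖₊ : ℝ≥0∞) * (‖A q‖₊ : ℝ≥0∞)
            * (ENNReal.ofReal (q.2 ^ s) * ENNReal.ofReal (q.2 ^ (-s))) := by
            rw [← ENNReal.ofReal_mul (Real.rpow_nonneg hσ.le s), ← Real.rpow_add hσ,
              add_neg_cancel, Real.rpow_zero, ENNReal.ofReal_one, mul_one]
        _ = (‖F q‖₊ : ℝ≥0∞) * ENNReal.ofReal (q.2 ^ s)
            * ((‖A q‖₊ : ℝ≥0∞) * ENNReal.ofReal (q.2 ^ (-s))) := by ring
  have hconj : Real.HolderConjugate 2 2 := ⟨by norm_num, by norm_num, by norm_num⟩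
  have hCS := ENNReal.lintegral_mul_le_Lp_mul_Lq (muSp n) hconj
    hfmeas.aemeasurable hgmeas.aemeasurable
  have hg2 : ∫⁻ q, g q ^ (2:ℝ) ∂(muSp n) ≤ M ^ (-(2 / p - 1)) := by
    have hcong : ∫⁻ q, g q ^ (2:ℝ) ∂(muSp n)
        = ∫⁻ q, (‖A q‖₊ : ℝ≥0∞) ^ (2 : ℝ) * ENNReal.ofReal (q.2 ^ (-2 * s)) ∂(muSp n) := by
      apply lintegral_congr_ae
      filter_upwards [hae] with q hσ
      simp only [hgdef]
      rw [ENNReal.mul_rpow_of_ne_top ENNReal.coe_ne_top ENNReal.ofReal_ne_top,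
        ENNReal.ofReal_rpow_of_pos (Real.rpow_pos_of_pos hσ _),
        ← Real.rpow_mul hσ.le, show (-s * 2 : ℝ) = -2 * s by ring]
    rw [hcong]
    exact hatom
  have hsq : ∀ x : ℝ≥0∞, x ^ (2:ℝ) = x * x := by
    intro x
    rw [show (2:ℝ) = ((2:ℕ):ℝ) by norm_num, ENNReal.rpow_natCast, sq]
  set Ψ : ℝ → ℝ≥0∞ := fun σ => (Ioc (0:ℝ) (4 * r ^ 2)).indicator
      (fun σ => ENNReal.ofReal (S ^ 2 * (max σ σ⁻¹) ^ (-(2 * N)) * σ ^ (2 * s - 1))) σ with hΨdef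
  have hmaxmeas : Measurable fun σ : ℝ => max σ σ⁻¹ := measurable_id.max measurable_inv
  have hΨmeas : Measurable Ψ := by
    apply Measurable.indicator _ measurableSet_Ioc
    exact ENNReal.measurable_ofReal.comp
      (((measurable_const.mul (Measurable.pow hmaxmeas measurable_const)).mul
        (Measurable.pow measurable_id measurable_const)))
  have hΨint : ∫⁻ σ, Ψ σ ∂((volume : Measure ℝ).restrict (Set.Ioi 0))
      ≤ ENNReal.ofReal (S ^ 2 * 2 ^ β * m ^ β) * K := by
    simp only [hΨdef]
    rw [lintegral_indicator measurableSet_Ioc,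
      Measure.restrict_restrict measurableSet_Ioc,
      Set.inter_eq_left.2 Set.Ioc_subset_Ioi_self]
    calc ∫⁻ σ in Ioc (0:ℝ) (4 * r ^ 2),
          ENNReal.ofReal (S ^ 2 * (max σ σ⁻¹) ^ (-(2 * N)) * σ ^ (2 * s - 1))
        ≤ ∫⁻ σ in Ioc (0:ℝ) (4 * r ^ 2), ENNReal.ofReal (S ^ 2 * 2 ^ β * m ^ β)
            * ENNReal.ofReal ((max σ σ⁻¹) ^ (-a) * σ ^ (2 * s - 1)) := by
          apply setLIntegral_mono
          · exact measurable_const.mul (ENNReal.measurable_ofReal.comp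
              ((Measurable.pow hmaxmeas measurable_const).mul
                (Measurable.pow measurable_id measurable_const)))
          · intro σ hσ
            rw [← ENNReal.ofReal_mul (by positivity)]
            apply ENNReal.ofReal_le_ofReal
            have hb := max_rpow_bound (N := N) (s := s) hr hβ0 (by linarith) hσ.1 hσ.2
            calc S ^ 2 * (max σ σ⁻¹) ^ (-(2 * N)) * σ ^ (2 * s - 1)
                = S ^ 2 * ((max σ σ⁻¹) ^ (-(2 * N)) * σ ^ (2 * s - 1)) := by ring
              _ ≤ S ^ 2 * (2 ^ β * m ^ β
                    * ((max σ σ⁻¹) ^ (-(2 * N - β / 2)) * σ ^ (2 * s - 1))) :=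
                  mul_le_mul_of_nonneg_left hb (sq_nonneg S)
              _ = S ^ 2 * 2 ^ β * m ^ β
                    * ((max σ σ⁻¹) ^ (-a) * σ ^ (2 * s - 1)) := by rw [hadef]; ring
      _ = ENNReal.ofReal (S ^ 2 * 2 ^ β * m ^ β) * ∫⁻ σ in Ioc (0:ℝ) (4 * r ^ 2),
            ENNReal.ofReal ((max σ σ⁻¹) ^ (-a) * σ ^ (2 * s - 1)) :=
          lintegral_const_mul' _ _ ENNReal.ofReal_ne_top
      _ ≤ ENNReal.ofReal (S ^ 2 * 2 ^ β * m ^ β) * K := by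
          gcongr
          rw [hKdef]
          exact lintegral_mono_set (fun x hx => hx.1)
  have hf2 : ∫⁻ q, f q ^ (2:ℝ) ∂(muSp n)
      ≤ M * (ENNReal.ofReal (S ^ 2 * 2 ^ β * m ^ β) * K) := by
    have hfg : Measurable fun q : CoSph n × ℝ => f q ^ (2:ℝ) := by
      simp only [hsq]
      exact hfmeas.mul hfmeas
    have hwd : ∫⁻ q, f q ^ (2:ℝ) ∂(muSp n)
        = ∫⁻ q, ((fun q : CoSph n × ℝ => ENNReal.ofReal q.2⁻¹)
            * fun q => f q ^ (2:ℝ)) q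
            ∂((muS n).prod ((volume : Measure ℝ).restrict (Set.Ioi 0))) := by
      rw [muSp]
      exact lintegral_withDensity_eq_lintegral_mul _
        (ENNReal.measurable_ofReal.comp measurable_snd.inv) hfg
    rw [hwd]
    have hpt : ∀ q : CoSph n × ℝ,
        ((fun q : CoSph n × ℝ => ENNReal.ofReal q.2⁻¹) * fun q => f q ^ (2:ℝ)) q
          ≤ (rball c r).indicator 1 q.1 * Ψ q.2 := by
      intro q
      simp only [Pi.mul_apply, hfdef, hΨdef]
      by_cases hq : q ∈ box
      · have h1 : q.1 ∈ rball c r := hq.1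
        have h2 : q.2 ∈ Ioc (0:ℝ) (4 * r ^ 2) := hq.2
        have hσ : 0 < q.2 := h2.1
        rw [Set.indicator_of_mem hq, Set.indicator_of_mem h1, Set.indicator_of_mem h2,
          Pi.one_apply, one_mul, hsq, ← ENNReal.ofReal_coe_nnreal, coe_nnnorm]
        rw [← ENNReal.ofReal_mul (norm_nonneg _),
          ← ENNReal.ofReal_mul (by positivity),
          ← ENNReal.ofReal_mul (by positivity)]
        apply ENNReal.ofReal_le_ofReal
        set b := max q.2 q.2⁻¹ with hbdef
        have hb0 : (0:ℝ) < b := max_pos' hσ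
        have hFq := hFb q hσ
        have hprod : ‖F q‖ * ‖F q‖ ≤ (S * b ^ (-N)) * (S * b ^ (-N)) :=
          mul_le_mul hFq hFq (norm_nonneg _) (by positivity)
        have hexp : q.2 ^ s * q.2 ^ s * q.2⁻¹ = q.2 ^ (2 * s - 1) := by
          rw [← Real.rpow_add hσ, ← Real.rpow_neg_one q.2, ← Real.rpow_add hσ]
          congr 1; ring
        have hbexp : b ^ (-N) * b ^ (-N) = b ^ (-(2 * N)) := by
          rw [← Real.rpow_add hb0]; congr 1; ring
        calc q.2⁻¹ * (‖F q‖ * q.2 ^ s * (‖F q‖ * q.2 ^ s))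
            = (‖F q‖ * ‖F q‖) * (q.2 ^ s * q.2 ^ s * q.2⁻¹) := by ring
          _ ≤ ((S * b ^ (-N)) * (S * b ^ (-N))) * q.2 ^ (2 * s - 1) := by
              rw [hexp]
              exact mul_le_mul_of_nonneg_right hprod (Real.rpow_nonneg hσ.le _)
          _ = S ^ 2 * b ^ (-(2 * N)) * q.2 ^ (2 * s - 1) := by
              rw [← hbexp]; ring
      · rw [Set.indicator_of_notMem hq, hsq, mul_zero, mul_zero]
        exact bot_le
    calc ∫⁻ q, ((fun q : CoSph n × ℝ => ENNReal.ofReal q.2⁻¹)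
            * fun q => f q ^ (2:ℝ)) q
            ∂((muS n).prod ((volume : Measure ℝ).restrict (Set.Ioi 0)))
        ≤ ∫⁻ q, (rball c r).indicator 1 q.1 * Ψ q.2
            ∂((muS n).prod ((volume : Measure ℝ).restrict (Set.Ioi 0))) :=
          lintegral_mono hpt
      _ = (∫⁻ x, (rball c r).indicator 1 x ∂(muS n))
            * ∫⁻ σ, Ψ σ ∂((volume : Measure ℝ).restrict (Set.Ioi 0)) :=
          lintegral_prod_mul
            ((measurable_one.indicator (measurableSet_rball c r)).aemeasurable)
            hΨmeas.aemeasurable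
      _ = M * ∫⁻ σ, Ψ σ ∂((volume : Measure ℝ).restrict (Set.Ioi 0)) := by
          rw [lintegral_indicator_one (measurableSet_rball c r)]
      _ ≤ M * (ENNReal.ofReal (S ^ 2 * 2 ^ β * m ^ β) * K) := by gcongr
  -- final ENNReal algebra
  have hhalf : (0:ℝ) ≤ 1 / 2 := by norm_num
  have hMM : M * M ^ (-(2 / p - 1)) = M ^ (-(2 * γ)) := by
    nth_rewrite 1 [← ENNReal.rpow_one M]
    rw [← ENNReal.rpow_add _ _ hM0 hMtop]
    congr 1
    rw [hγdef]; ring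
  have hmβpos : (0:ℝ) < m ^ β := Real.rpow_pos_of_pos hm0 β
  have hXrpow : (ENNReal.ofReal ((m ^ 4) ^ n)) ^ (2 * γ) = ENNReal.ofReal (m ^ β) := by
    rw [ENNReal.ofReal_rpow_of_pos (by positivity)]
    congr 1
    rw [← pow_mul, ← Real.rpow_natCast m (4 * n), ← Real.rpow_mul hm0.le]
    congr 1
    rw [hβdef]; push_cast; ring
  have hLM : κE * ENNReal.ofReal ((m ^ 4) ^ n) ≤ M := by
    rw [hκdef, mul_assoc, ← ENNReal.ofReal_mul (by positivity)]
    calc V₁ * ENNReal.ofReal ((128⁻¹:ℝ) ^ n * (m ^ 4) ^ n)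
        = V₁ * ENNReal.ofReal ((m ^ 4 / 128) ^ n) := by
          congr 2
          rw [div_pow, div_eq_mul_inv, ← inv_pow, mul_comm]
      _ ≤ M := hMlow
  have hMneg : M ^ (-(2 * γ)) ≤ (κE ^ (2 * γ))⁻¹ * (ENNReal.ofReal (m ^ β))⁻¹ := by
    rw [ENNReal.rpow_neg, ← ENNReal.mul_inv (Or.inl hκrpow0) (Or.inl hκrpowtop)]
    apply ENNReal.inv_le_inv.2
    calc κE ^ (2 * γ) * ENNReal.ofReal (m ^ β)
        = (κE * ENNReal.ofReal ((m ^ 4) ^ n)) ^ (2 * γ) := by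
          conv_rhs => rw [ENNReal.mul_rpow_of_nonneg _ _ (show (0:ℝ) ≤ 2 * γ by linarith)]
          rw [hXrpow]
      _ ≤ M ^ (2 * γ) := ENNReal.rpow_le_rpow hLM (by linarith)
  have hE1split : ENNReal.ofReal (S ^ 2 * 2 ^ β * m ^ β)
      = (ENNReal.ofReal S) ^ 2 * ENNReal.ofReal (2 ^ β) * ENNReal.ofReal (m ^ β) := by
    rw [ENNReal.ofReal_mul (by positivity), ENNReal.ofReal_mul (by positivity),
      ENNReal.ofReal_pow hS0]
  have hcancel : ENNReal.ofReal (m ^ β) * (ENNReal.ofReal (m ^ β))⁻¹ = 1 :=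
    ENNReal.mul_inv_cancel (ENNReal.ofReal_pos.2 hmβpos).ne' ENNReal.ofReal_ne_top
  calc ∫⁻ q, (‖F q‖₊ : ℝ≥0∞) * (‖A q‖₊ : ℝ≥0∞) ∂(muSp n)
      ≤ ∫⁻ q, (f * g) q ∂(muSp n) := hstep1
    _ ≤ (∫⁻ q, f q ^ (2:ℝ) ∂(muSp n)) ^ (1/2 : ℝ)
        * (∫⁻ q, g q ^ (2:ℝ) ∂(muSp n)) ^ (1/2 : ℝ) := hCS
    _ ≤ (M * (ENNReal.ofReal (S ^ 2 * 2 ^ β * m ^ β) * K)) ^ (1/2 : ℝ)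
        * (M ^ (-(2 / p - 1))) ^ (1/2 : ℝ) :=
        mul_le_mul' (ENNReal.rpow_le_rpow hf2 hhalf) (ENNReal.rpow_le_rpow hg2 hhalf)
    _ = (ENNReal.ofReal (S ^ 2 * 2 ^ β * m ^ β) * K * (M * M ^ (-(2 / p - 1)))) ^ (1/2 : ℝ) := by
        rw [← ENNReal.mul_rpow_of_nonneg _ _ hhalf]
        congr 1
        ring
    _ = (ENNReal.ofReal (S ^ 2 * 2 ^ β * m ^ β) * K * M ^ (-(2 * γ))) ^ (1/2 : ℝ) := by
        rw [hMM]
    _ ≤ (ENNReal.ofReal (S ^ 2 * 2 ^ β * m ^ β) * K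
          * ((κE ^ (2 * γ))⁻¹ * (ENNReal.ofReal (m ^ β))⁻¹)) ^ (1/2 : ℝ) := by
        apply ENNReal.rpow_le_rpow _ hhalf
        gcongr
    _ = ((ENNReal.ofReal S) ^ 2 * Z) ^ (1/2 : ℝ) := by
        congr 1
        rw [hE1split, hZdef]
        calc (ENNReal.ofReal S) ^ 2 * ENNReal.ofReal (2 ^ β) * ENNReal.ofReal (m ^ β) * K
              * ((κE ^ (2 * γ))⁻¹ * (ENNReal.ofReal (m ^ β))⁻¹)
            = (ENNReal.ofReal S) ^ 2 * (ENNReal.ofReal (2 ^ β) * K * (κE ^ (2 * γ))⁻¹)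
              * (ENNReal.ofReal (m ^ β) * (ENNReal.ofReal (m ^ β))⁻¹) := by ring
          _ = (ENNReal.ofReal S) ^ 2 * (ENNReal.ofReal (2 ^ β) * K * (κE ^ (2 * γ))⁻¹) := by
              rw [hcancel, mul_one]
    _ = ENNReal.ofReal S * Z ^ (1/2 : ℝ) := by
        rw [ENNReal.mul_rpow_of_nonneg _ _ hhalf]
        congr 1
        rw [← ENNReal.rpow_natCast (ENNReal.ofReal S) 2, ← ENNReal.rpow_mul]
        norm_num
    _ = ↑(Z ^ (1/2 : ℝ)).toNNReal * ENNReal.ofReal S := by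
        rw [ENNReal.coe_toNNReal hZhalftop, mul_comm]
end
end
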